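/- arXiv:1407.2745 — 6 statements merged into one kernel-verified Lean document; each statement's English description precedes it below -/
import Mathlib

section
/- Let n ≥ 3 and let B be a Boolean algebra. Suppose f is a function from the set of projections of M_n(ℂ) to B such that: f(0) = ⊥, f(1) = ⊤, f(1 - p) = ¬ f(p) for every projection p, and for every pair of commuting projections p, q one has f(p·q) = f(p) ∧ f(q) and f(p + q - p·q) = f(p) ∨ f(q). Then ⊥ = ⊤ in B (i.e., B is trivial). -/
open Matrix


theorem KS.exists_two_valued (B : Type*) [BooleanAlgebra B] (h : (⊥ : B) ≠ ⊤) :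
    ∃ g : B → Prop, g ⊤ ∧ ¬ g ⊥ ∧ (∀ a b, g (a ⊓ b) ↔ g a ∧ g b) ∧
      (∀ a b, g (a ⊔ b) ↔ g a ∨ g b) := by
  letI R := AsBoolRing B
  haveI : Nontrivial R := ⟨⟨(0 : R), 1, by
    intro hx
    exact h (by simpa using congrArg (ofBoolRing (α := B)) hx)⟩⟩
  obtain ⟨I, hI⟩ := Ideal.exists_maximal R
  haveI := hI
  letI F := R ⧸ I
  letI : Field F := Ideal.Quotient.field I
  let qm : R →+* F := Ideal.Quotient.mk I
  have hbool : ∀ x : F, x * x = x := by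
    intro x
    obtain ⟨y, rfl⟩ := Ideal.Quotient.mk_surjective (I := I) x
    rw [← _root_.map_mul, BooleanRing.mul_self]
  have hdich : ∀ x : F, x = 0 ∨ x = 1 := by
    intro x
    have hx : x * (x - 1) = 0 := by rw [mul_sub, mul_one, hbool, sub_self]
    rcases mul_eq_zero.1 hx with h1 | h1
    · exact Or.inl h1
    · exact Or.inr (sub_eq_zero.1 h1)
  have hchar : (1 : F) + 1 = 0 := by
    have : qm ((1 : R) + 1) = qm 0 := by rw [BooleanRing.add_self]
    simpa using this
  refine ⟨fun a => qm (toBoolRing a) = 1, by simp [qm], ?_, ?_, ?_⟩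
  · simp only [toBoolRing_bot, map_zero]
    intro h0
    exact (zero_ne_one (α := F)) h0
  · intro a b
    show qm (toBoolRing a * toBoolRing b) = 1 ↔ _
    rw [_root_.map_mul]
    rcases hdich (qm (toBoolRing a)) with h1 | h1 <;>
      rcases hdich (qm (toBoolRing b)) with h2 | h2 <;>
      simp [h1, h2]
  · intro a b
    have hsup : a ⊔ b = symmDiff (symmDiff a b) (a ⊓ b) := (symmDiff_symmDiff_inf a b).symm
    show qm (toBoolRing (a ⊔ b)) = 1 ↔ _
    rw [hsup]
    have : toBoolRing (symmDiff (symmDiff a b) (a ⊓ b)) =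
        toBoolRing a + toBoolRing b + toBoolRing a * toBoolRing b := rfl
    rw [this, _root_.map_add, _root_.map_add, _root_.map_mul]
    rcases hdich (qm (toBoolRing a)) with h1 | h1 <;>
      rcases hdich (qm (toBoolRing b)) with h2 | h2 <;>
      simp [h1, h2, hchar]


namespace KS

variable {n : ℕ}

/-- 0/1 "inclusion" matrix for an injection `Fin 3 → Fin n`. -/
noncomputable def U (ι : Fin 3 → Fin n) : Matrix (Fin n) (Fin 3) ℂ :=
  fun i a => if i = ι a then 1 else 0

/-- Embedding of a rational 3×3 matrix as an `n×n` complex matrix supported on coords `ι`. -/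
noncomputable def emb (ι : Fin 3 → Fin n) (A : Matrix (Fin 3) (Fin 3) ℚ) : Matrix (Fin n) (Fin n) ℂ :=
  U ι * A.map (fun q => (q : ℂ)) * (U ι)ᴴ

lemma UHU (ι : Fin 3 → Fin n) (hι : Function.Injective ι) : (U ι)ᴴ * U ι = 1 := by
  ext a b
  simp only [Matrix.mul_apply, conjTranspose_apply, U, Matrix.one_apply]
  simp only [apply_ite (star : ℂ → ℂ), star_one, star_zero]
  rw [Finset.sum_eq_single (ι a)]
  · by_cases h : a = b <;> simp [h, hι.eq_iff]
  · intro c _ hc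
    simp [hc]
  · simp
lemma map_ratCast_mul (A B : Matrix (Fin 3) (Fin 3) ℚ) :
    (A * B).map (fun q => (q : ℂ)) = A.map (fun q => (q : ℂ)) * B.map (fun q => (q : ℂ)) := by
  exact Matrix.map_mul (f := Rat.castHom ℂ)

lemma emb_mul (ι : Fin 3 → Fin n) (hι : Function.Injective ι) (A B : Matrix (Fin 3) (Fin 3) ℚ) :
    emb ι A * emb ι B = emb ι (A * B) := by
  unfold emb
  rw [map_ratCast_mul]
  simp only [Matrix.mul_assoc]
  rw [← Matrix.mul_assoc ((U ι)ᴴ) (U ι), UHU ι hι, Matrix.one_mul]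

lemma emb_add (ι : Fin 3 → Fin n) (A B : Matrix (Fin 3) (Fin 3) ℚ) :
    emb ι A + emb ι B = emb ι (A + B) := by
  unfold emb
  simp [Matrix.map_add, Matrix.add_mul, Matrix.mul_add]

lemma emb_zero (ι : Fin 3 → Fin n) : emb ι 0 = 0 := by
  unfold emb
  rw [Matrix.map_zero, Matrix.mul_zero, Matrix.zero_mul]
  simp

lemma emb_conjTranspose (ι : Fin 3 → Fin n) (A : Matrix (Fin 3) (Fin 3) ℚ) :
    (emb ι A)ᴴ = emb ι Aᵀ := by
  unfold emb
  rw [conjTranspose_mul, conjTranspose_mul, conjTranspose_conjTranspose]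
  have : (A.map (fun q => (q : ℂ)))ᴴ = Aᵀ.map (fun q => (q : ℂ)) := by
    ext i j
    simp [conjTranspose_apply, Matrix.map_apply]
  rw [this, Matrix.mul_assoc]

lemma emb_proj (ι : Fin 3 → Fin n) (hι : Function.Injective ι) (A : Matrix (Fin 3) (Fin 3) ℚ)
    (h1 : A * A = A) (h2 : Aᵀ = A) :
    emb ι A * emb ι A = emb ι A ∧ (emb ι A)ᴴ = emb ι A := by
  constructor
  · rw [emb_mul ι hι, h1]
  · rw [emb_conjTranspose, h2]

/-- The subtype element: an embedded rational projection. -/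
noncomputable def pj (ι : Fin 3 → Fin n) (hι : Function.Injective ι) (A : Matrix (Fin 3) (Fin 3) ℚ)
    (h : A * A = A ∧ Aᵀ = A) : {p : Matrix (Fin n) (Fin n) ℂ // p * p = p ∧ pᴴ = p} :=
  ⟨emb ι A, emb_proj ι hι A h.1 h.2⟩


lemma fval {B : Type*} (f : {p : Matrix (Fin n) (Fin n) ℂ // p * p = p ∧ pᴴ = p} → B)
    {p q : Matrix (Fin n) (Fin n) ℂ} (hp : p * p = p ∧ pᴴ = p) (hq : q * q = q ∧ qᴴ = q)
    (h : p = q) : f ⟨p, hp⟩ = f ⟨q, hq⟩ := by subst h; rfl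

lemma diag_congr (f g : Fin n → ℂ) (h : ∀ j, f j = g j) :
    diagonal f = diagonal g := by rw [funext h]

/-- rank-one diagonal projection -/
noncomputable def dd (i : Fin n) : Matrix (Fin n) (Fin n) ℂ :=
  diagonal (fun j => if j = i then 1 else 0)

/-- diagonal projection onto first k coordinates -/
noncomputable def qq (n k : ℕ) : Matrix (Fin n) (Fin n) ℂ :=
  diagonal (fun j : Fin n => if (j : ℕ) < k then 1 else 0)

lemma dd_proj (i : Fin n) : dd i * dd i = dd i ∧ (dd i)ᴴ = dd i := by
  constructor
  · rw [dd, diagonal_mul_diagonal]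
    exact diag_congr _ _ (fun j => by by_cases h : j = i <;> simp [h])
  · rw [dd, diagonal_conjTranspose]
    exact diag_congr _ _ (fun j => by by_cases h : j = i <;> simp [h])

lemma qq_proj (k : ℕ) : qq n k * qq n k = qq n k ∧ (qq n k)ᴴ = qq n k := by
  constructor
  · rw [qq, diagonal_mul_diagonal]
    exact diag_congr _ _ (fun j => by by_cases h : (j : ℕ) < k <;> simp [h])
  · rw [qq, diagonal_conjTranspose]
    exact diag_congr _ _ (fun j => by by_cases h : (j : ℕ) < k <;> simp [h])

lemma qq_zero : qq n 0 = 0 := by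
  rw [qq]
  exact (diag_congr _ (fun _ => 0) (fun j => by simp)).trans diagonal_zero

lemma qq_top : qq n n = 1 := by
  rw [qq]
  exact (diag_congr _ (fun _ => 1) (fun j => by simp [j.isLt])).trans diagonal_one

lemma qq_mul_dd (k : ℕ) (hk : k < n) : qq n k * dd ⟨k, hk⟩ = 0 := by
  rw [qq, dd, diagonal_mul_diagonal]
  refine (diag_congr _ (fun _ => 0) ?_).trans diagonal_zero
  intro j
  by_cases h : j = ⟨k, hk⟩
  · subst h; simp
  · simp [h]

lemma dd_mul_qq (k : ℕ) (hk : k < n) : dd ⟨k, hk⟩ * qq n k = 0 := by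
  rw [qq, dd, diagonal_mul_diagonal]
  refine (diag_congr _ (fun _ => 0) ?_).trans diagonal_zero
  intro j
  by_cases h : j = ⟨k, hk⟩
  · subst h; simp
  · simp [h]

lemma qq_succ (k : ℕ) (hk : k < n) : qq n k + dd ⟨k, hk⟩ = qq n (k + 1) := by
  rw [qq, qq, dd, diagonal_add]
  refine diag_congr _ _ (fun j => ?_)
  have hjk : (j = ⟨k, hk⟩) ↔ ((j : ℕ) = k) := by simp [Fin.ext_iff]
  by_cases h2 : (j : ℕ) = k
  · have h1 : ¬ (j : ℕ) < k := by omega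
    have h3 : (j : ℕ) < k + 1 := by omega
    simp [hjk, h1, h2, h3]
  · by_cases h1 : (j : ℕ) < k
    · have h3 : (j : ℕ) < k + 1 := by omega
      simp [hjk, h1, h2, h3]
    · have h3 : ¬ (j : ℕ) < k + 1 := by omega
      simp [hjk, h1, h2, h3]


lemma one_proj3 : ((1 : Matrix (Fin 3) (Fin 3) ℚ) * 1 = 1 ∧ (1 : Matrix (Fin 3) (Fin 3) ℚ)ᵀ = 1) :=
  ⟨one_mul 1, transpose_one⟩

lemma exists_true_dd {B : Type*} [BooleanAlgebra B]
    (f : {p : Matrix (Fin n) (Fin n) ℂ // p * p = p ∧ pᴴ = p} → B)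
    (hf0 : ∀ h : (0 : Matrix (Fin n) (Fin n) ℂ) * 0 = 0 ∧ (0 : Matrix (Fin n) (Fin n) ℂ)ᴴ = 0,
      f ⟨0, h⟩ = ⊥)
    (hf1 : ∀ h : (1 : Matrix (Fin n) (Fin n) ℂ) * 1 = 1 ∧ (1 : Matrix (Fin n) (Fin n) ℂ)ᴴ = 1,
      f ⟨1, h⟩ = ⊤)
    (hfj : ∀ (p q : Matrix (Fin n) (Fin n) ℂ) (hp : p * p = p ∧ pᴴ = p)
      (hq : q * q = q ∧ qᴴ = q), p * q = q * p →
      ∀ h' : (p + q - p * q) * (p + q - p * q) = p + q - p * q ∧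
        (p + q - p * q)ᴴ = p + q - p * q,
      f ⟨p + q - p * q, h'⟩ = f ⟨p, hp⟩ ⊔ f ⟨q, hq⟩)
    (g : B → Prop) (hgtop : g ⊤) (hgbot : ¬ g ⊥)
    (hgsup : ∀ a b, g (a ⊔ b) ↔ g a ∨ g b) :
    ∃ i : Fin n, g (f ⟨dd i, dd_proj i⟩) := by
  have key : ∀ k : ℕ, ∀ hk : k ≤ n, g (f ⟨qq n k, qq_proj k⟩) →
      ∃ i : Fin n, g (f ⟨dd i, dd_proj i⟩) := by
    intro k
    induction k with
    | zero =>
      intro hk hg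
      exfalso
      apply hgbot
      rwa [fval f _ (⟨(mul_zero 0), conjTranspose_zero⟩ :
        (0 : Matrix (Fin n) (Fin n) ℂ) * 0 = 0 ∧ (0 : Matrix (Fin n) (Fin n) ℂ)ᴴ = 0) qq_zero,
        hf0] at hg
    | succ k ih =>
      intro hk hg
      have hkn : k < n := hk
      have hcomm : qq n k * dd ⟨k, hkn⟩ = dd ⟨k, hkn⟩ * qq n k := by
        rw [qq_mul_dd, dd_mul_qq]
      have heq : qq n k + dd ⟨k, hkn⟩ - qq n k * dd ⟨k, hkn⟩ = qq n (k + 1) := by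
        rw [qq_mul_dd, sub_zero, qq_succ]
      have h2' : (qq n k + dd ⟨k, hkn⟩ - qq n k * dd ⟨k, hkn⟩) *
          (qq n k + dd ⟨k, hkn⟩ - qq n k * dd ⟨k, hkn⟩) =
          qq n k + dd ⟨k, hkn⟩ - qq n k * dd ⟨k, hkn⟩ ∧
          (qq n k + dd ⟨k, hkn⟩ - qq n k * dd ⟨k, hkn⟩)ᴴ =
          qq n k + dd ⟨k, hkn⟩ - qq n k * dd ⟨k, hkn⟩ := by
        rw [heq]; exact qq_proj (k + 1)
      have hj := hfj (qq n k) (dd ⟨k, hkn⟩) (qq_proj k) (dd_proj _) hcomm h2'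
      rw [fval f _ (qq_proj (k + 1)) heq] at hj
      rw [hj] at hg
      rcases (hgsup _ _).1 hg with h | h
      · exact ih (le_of_lt hkn) h
      · exact ⟨⟨k, hkn⟩, h⟩
  apply key n le_rfl
  rw [fval f _ (⟨one_mul 1, conjTranspose_one⟩ :
    (1 : Matrix (Fin n) (Fin n) ℂ) * 1 = 1 ∧ (1 : Matrix (Fin n) (Fin n) ℂ)ᴴ = 1) qq_top, hf1]
  exact hgtop

lemma emb_one (ι : Fin 3 → Fin n) : emb ι 1 = U ι * (U ι)ᴴ := by
  unfold emb
  rw [show (1 : Matrix (Fin 3) (Fin 3) ℚ).map (fun q => (q : ℂ)) = 1 from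
    Matrix.map_one _ (by simp) (by simp), Matrix.mul_one]

lemma dd_mul_emb_one (ι : Fin 3 → Fin n) (hι : Function.Injective ι) :
    dd (ι 0) * emb ι 1 = dd (ι 0) := by
  rw [emb_one]
  ext i j
  rw [dd, Matrix.diagonal_mul]
  by_cases h : i = ι 0
  · subst h
    simp only [if_pos rfl, one_mul, Matrix.mul_apply, U, conjTranspose_apply]
    rw [Finset.sum_eq_single (0 : Fin 3)]
    · by_cases hj : j = ι 0
      · subst hj; simp [diagonal_apply]
      · simp [diagonal_apply, hj, Ne.symm, (by simpa [eq_comm] using hj : ¬ j = ι 0)]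
    · intro b _ hb
      have : ¬ ι 0 = ι b := fun hh => hb (hι hh).symm
      simp [this]
    · simp
  · simp [diagonal_apply, h]

lemma emb_one_mul_dd (ι : Fin 3 → Fin n) (hι : Function.Injective ι) :
    emb ι 1 * dd (ι 0) = dd (ι 0) := by
  rw [emb_one]
  ext i j
  rw [dd, Matrix.mul_diagonal]
  by_cases h : j = ι 0
  · subst h
    simp only [if_pos rfl, mul_one, Matrix.mul_apply, U, conjTranspose_apply]
    rw [Finset.sum_eq_single (0 : Fin 3)]
    · by_cases hi : i = ι 0
      · subst hi; simp [diagonal_apply]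
      · simp [diagonal_apply, hi, (by simpa [eq_comm] using hi : ¬ ι 0 = i)]
    · intro b _ hb
      have : ¬ ι 0 = ι b := fun hh => hb (hι hh).symm
      simp [this]
    · simp
  · by_cases hij : i = j
    · subst hij; simp [h]
    · simp [diagonal_apply, h, hij]


lemma g_pj_one {B : Type*} [BooleanAlgebra B]
    (f : {p : Matrix (Fin n) (Fin n) ℂ // p * p = p ∧ pᴴ = p} → B)
    (hfm : ∀ (p q : Matrix (Fin n) (Fin n) ℂ) (hp : p * p = p ∧ pᴴ = p)
      (hq : q * q = q ∧ qᴴ = q), p * q = q * p →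
      ∀ h' : (p * q) * (p * q) = p * q ∧ (p * q)ᴴ = p * q,
      f ⟨p * q, h'⟩ = f ⟨p, hp⟩ ⊓ f ⟨q, hq⟩)
    (g : B → Prop) (hginf : ∀ a b, g (a ⊓ b) ↔ g a ∧ g b)
    (ι : Fin 3 → Fin n) (hι : Function.Injective ι)
    (h0 : g (f ⟨dd (ι 0), dd_proj (ι 0)⟩)) :
    g (f (pj ι hι 1 one_proj3)) := by
  have hprod : dd (ι 0) * emb ι 1 = dd (ι 0) := dd_mul_emb_one ι hι
  have hcomm : dd (ι 0) * emb ι 1 = emb ι 1 * dd (ι 0) := by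
    rw [hprod, emb_one_mul_dd ι hι]
  have h' : (dd (ι 0) * emb ι 1) * (dd (ι 0) * emb ι 1) = dd (ι 0) * emb ι 1 ∧
      (dd (ι 0) * emb ι 1)ᴴ = dd (ι 0) * emb ι 1 := by
    rw [hprod]; exact dd_proj (ι 0)
  have hm := hfm (dd (ι 0)) (emb ι 1) (dd_proj (ι 0)) (pj ι hι 1 one_proj3).2 hcomm h'
  rw [fval f _ (dd_proj (ι 0)) hprod] at hm
  rw [hm] at h0
  exact ((hginf _ _).1 h0).2

lemma pair_lemma {B : Type*} [BooleanAlgebra B]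
    (f : {p : Matrix (Fin n) (Fin n) ℂ // p * p = p ∧ pᴴ = p} → B)
    (hf0 : ∀ h : (0 : Matrix (Fin n) (Fin n) ℂ) * 0 = 0 ∧ (0 : Matrix (Fin n) (Fin n) ℂ)ᴴ = 0,
      f ⟨0, h⟩ = ⊥)
    (hfm : ∀ (p q : Matrix (Fin n) (Fin n) ℂ) (hp : p * p = p ∧ pᴴ = p)
      (hq : q * q = q ∧ qᴴ = q), p * q = q * p →
      ∀ h' : (p * q) * (p * q) = p * q ∧ (p * q)ᴴ = p * q,
      f ⟨p * q, h'⟩ = f ⟨p, hp⟩ ⊓ f ⟨q, hq⟩)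
    (g : B → Prop) (hgbot : ¬ g ⊥) (hginf : ∀ a b, g (a ⊓ b) ↔ g a ∧ g b)
    (ι : Fin 3 → Fin n) (hι : Function.Injective ι)
    (A C : Matrix (Fin 3) (Fin 3) ℚ) (hA : A * A = A ∧ Aᵀ = A) (hC : C * C = C ∧ Cᵀ = C)
    (hAC : A * C = 0) :
    ¬ (g (f (pj ι hι A hA)) ∧ g (f (pj ι hι C hC))) := by
  rintro ⟨h1, h2⟩
  have hCA : C * A = 0 := by
    have := congrArg Matrix.transpose hAC
    rwa [Matrix.transpose_mul, hA.2, hC.2, Matrix.transpose_zero] at this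
  have hz : emb ι A * emb ι C = 0 := by rw [emb_mul ι hι, hAC, emb_zero]
  have hcomm : emb ι A * emb ι C = emb ι C * emb ι A := by
    rw [emb_mul ι hι, emb_mul ι hι, hAC, hCA]
  have h' : (emb ι A * emb ι C) * (emb ι A * emb ι C) = emb ι A * emb ι C ∧
      (emb ι A * emb ι C)ᴴ = emb ι A * emb ι C := by
    rw [hz]; exact ⟨mul_zero 0, conjTranspose_zero⟩
  have hm := hfm (emb ι A) (emb ι C) (pj ι hι A hA).2 (pj ι hι C hC).2 hcomm h'
  rw [fval f _ (⟨mul_zero 0, conjTranspose_zero⟩ :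
    (0 : Matrix (Fin n) (Fin n) ℂ) * 0 = 0 ∧ (0 : Matrix (Fin n) (Fin n) ℂ)ᴴ = 0) hz, hf0] at hm
  exact hgbot (hm ▸ (hginf _ _).2 ⟨h1, h2⟩)

lemma triple_lemma {B : Type*} [BooleanAlgebra B]
    (f : {p : Matrix (Fin n) (Fin n) ℂ // p * p = p ∧ pᴴ = p} → B)
    (hfj : ∀ (p q : Matrix (Fin n) (Fin n) ℂ) (hp : p * p = p ∧ pᴴ = p)
      (hq : q * q = q ∧ qᴴ = q), p * q = q * p →
      ∀ h' : (p + q - p * q) * (p + q - p * q) = p + q - p * q ∧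
        (p + q - p * q)ᴴ = p + q - p * q,
      f ⟨p + q - p * q, h'⟩ = f ⟨p, hp⟩ ⊔ f ⟨q, hq⟩)
    (g : B → Prop) (hgsup : ∀ a b, g (a ⊔ b) ↔ g a ∨ g b)
    (ι : Fin 3 → Fin n) (hι : Function.Injective ι)
    (hg1 : g (f (pj ι hι 1 one_proj3)))
    (A C D : Matrix (Fin 3) (Fin 3) ℚ)
    (hA : A * A = A ∧ Aᵀ = A) (hC : C * C = C ∧ Cᵀ = C) (hD : D * D = D ∧ Dᵀ = D)
    (hAC : A * C = 0) (hAD : A * D = 0) (hCD : C * D = 0)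
    (hsum : A + C + D = 1) :
    g (f (pj ι hι A hA)) ∨ g (f (pj ι hι C hC)) ∨ g (f (pj ι hι D hD)) := by
  have tr0 : ∀ (X Y : Matrix (Fin 3) (Fin 3) ℚ), Xᵀ = X → Yᵀ = Y → X * Y = 0 → Y * X = 0 := by
    intro X Y hX hY hXY
    have := congrArg Matrix.transpose hXY
    rwa [Matrix.transpose_mul, hX, hY, Matrix.transpose_zero] at this
  have hCA := tr0 A C hA.2 hC.2 hAC
  have hDA := tr0 A D hA.2 hD.2 hAD
  have hDC := tr0 C D hC.2 hD.2 hCD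
  have hS1 : (A + C) * (A + C) = A + C := by
    rw [add_mul, mul_add, mul_add, hA.1, hC.1, hAC, hCA, add_zero, zero_add]
  have hS2 : (A + C)ᵀ = A + C := by rw [Matrix.transpose_add, hA.2, hC.2]
  -- step 1 : f (emb (A + C)) = f A ⊔ f C
  have e1 : emb ι A + emb ι C - emb ι A * emb ι C = emb ι (A + C) := by
    rw [emb_mul ι hι, hAC, emb_zero, sub_zero, emb_add]
  have hcomm1 : emb ι A * emb ι C = emb ι C * emb ι A := by
    rw [emb_mul ι hι, emb_mul ι hι, hAC, hCA]
  have h1' : (emb ι A + emb ι C - emb ι A * emb ι C) * (emb ι A + emb ι C - emb ι A * emb ι C)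
      = emb ι A + emb ι C - emb ι A * emb ι C ∧
      (emb ι A + emb ι C - emb ι A * emb ι C)ᴴ = emb ι A + emb ι C - emb ι A * emb ι C := by
    rw [e1]; exact emb_proj ι hι (A + C) hS1 hS2
  have hj1 := hfj (emb ι A) (emb ι C) (pj ι hι A hA).2 (pj ι hι C hC).2 hcomm1 h1'
  rw [fval f _ (emb_proj ι hι (A + C) hS1 hS2) e1] at hj1
  -- step 2 : f (emb 1) = f (A + C) ⊔ f D
  have hSD : (A + C) * D = 0 := by rw [add_mul, hAD, hCD, add_zero]
  have hDS := tr0 (A + C) D hS2 hD.2 hSD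
  have e2 : emb ι (A + C) + emb ι D - emb ι (A + C) * emb ι D = emb ι 1 := by
    rw [emb_mul ι hι, hSD, emb_zero, sub_zero, emb_add, hsum]
  have hcomm2 : emb ι (A + C) * emb ι D = emb ι D * emb ι (A + C) := by
    rw [emb_mul ι hι, emb_mul ι hι, hSD, hDS]
  have h2' : (emb ι (A + C) + emb ι D - emb ι (A + C) * emb ι D) *
      (emb ι (A + C) + emb ι D - emb ι (A + C) * emb ι D)
      = emb ι (A + C) + emb ι D - emb ι (A + C) * emb ι D ∧
      (emb ι (A + C) + emb ι D - emb ι (A + C) * emb ι D)ᴴ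
      = emb ι (A + C) + emb ι D - emb ι (A + C) * emb ι D := by
    rw [e2]; exact emb_proj ι hι 1 one_proj3.1 one_proj3.2
  have hj2 := hfj (emb ι (A + C)) (emb ι D) (emb_proj ι hι (A + C) hS1 hS2)
    (pj ι hι D hD).2 hcomm2 h2'
  rw [fval f _ (emb_proj ι hι 1 one_proj3.1 one_proj3.2) e2] at hj2
  have : g (f ⟨emb ι 1, emb_proj ι hι 1 one_proj3.1 one_proj3.2⟩) := hg1
  rw [hj2] at this
  rcases (hgsup _ _).1 this with h | h
  · rw [hj1] at h
    rcases (hgsup _ _).1 h with h' | h'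
    · exact Or.inl h'
    · exact Or.inr (Or.inl h')
  · exact Or.inr (Or.inr h)

end KS

-- Kochen-Specker vectors' projection matrices
noncomputable def ksM0 : Matrix (Fin 3) (Fin 3) ℚ := !![0, 0, 0; 0, 0, 0; 0, 0, 1]  -- (0, 0, 1)
noncomputable def ksM1 : Matrix (Fin 3) (Fin 3) ℚ := !![0, 0, 0; 0, 1/2, -1/2; 0, -1/2, 1/2]  -- (0, 1, -1)
noncomputable def ksM2 : Matrix (Fin 3) (Fin 3) ℚ := !![0, 0, 0; 0, 1, 0; 0, 0, 0]  -- (0, 1, 0)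
noncomputable def ksM3 : Matrix (Fin 3) (Fin 3) ℚ := !![0, 0, 0; 0, 1/2, 1/2; 0, 1/2, 1/2]  -- (0, 1, 1)
noncomputable def ksM4 : Matrix (Fin 3) (Fin 3) ℚ := !![1/6, -1/3, -1/6; -1/3, 2/3, 1/3; -1/6, 1/3, 1/6]  -- (1, -2, -1)
noncomputable def ksM5 : Matrix (Fin 3) (Fin 3) ℚ := !![1/5, -2/5, 0; -2/5, 4/5, 0; 0, 0, 0]  -- (1, -2, 0)
noncomputable def ksM6 : Matrix (Fin 3) (Fin 3) ℚ := !![1/6, -1/3, 1/6; -1/3, 2/3, -1/3; 1/6, -1/3, 1/6]  -- (1, -2, 1)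
noncomputable def ksM7 : Matrix (Fin 3) (Fin 3) ℚ := !![1/6, -1/6, -1/3; -1/6, 1/6, 1/3; -1/3, 1/3, 2/3]  -- (1, -1, -2)
noncomputable def ksM8 : Matrix (Fin 3) (Fin 3) ℚ := !![1/3, -1/3, -1/3; -1/3, 1/3, 1/3; -1/3, 1/3, 1/3]  -- (1, -1, -1)
noncomputable def ksM9 : Matrix (Fin 3) (Fin 3) ℚ := !![1/2, -1/2, 0; -1/2, 1/2, 0; 0, 0, 0]  -- (1, -1, 0)
noncomputable def ksM10 : Matrix (Fin 3) (Fin 3) ℚ := !![1/3, -1/3, 1/3; -1/3, 1/3, -1/3; 1/3, -1/3, 1/3]  -- (1, -1, 1)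
noncomputable def ksM11 : Matrix (Fin 3) (Fin 3) ℚ := !![1/6, -1/6, 1/3; -1/6, 1/6, -1/3; 1/3, -1/3, 2/3]  -- (1, -1, 2)
noncomputable def ksM12 : Matrix (Fin 3) (Fin 3) ℚ := !![1/5, 0, -2/5; 0, 0, 0; -2/5, 0, 4/5]  -- (1, 0, -2)
noncomputable def ksM13 : Matrix (Fin 3) (Fin 3) ℚ := !![1/2, 0, -1/2; 0, 0, 0; -1/2, 0, 1/2]  -- (1, 0, -1)
noncomputable def ksM14 : Matrix (Fin 3) (Fin 3) ℚ := !![1, 0, 0; 0, 0, 0; 0, 0, 0]  -- (1, 0, 0)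
noncomputable def ksM15 : Matrix (Fin 3) (Fin 3) ℚ := !![1/2, 0, 1/2; 0, 0, 0; 1/2, 0, 1/2]  -- (1, 0, 1)
noncomputable def ksM16 : Matrix (Fin 3) (Fin 3) ℚ := !![1/5, 0, 2/5; 0, 0, 0; 2/5, 0, 4/5]  -- (1, 0, 2)
noncomputable def ksM17 : Matrix (Fin 3) (Fin 3) ℚ := !![1/6, 1/6, -1/3; 1/6, 1/6, -1/3; -1/3, -1/3, 2/3]  -- (1, 1, -2)
noncomputable def ksM18 : Matrix (Fin 3) (Fin 3) ℚ := !![1/3, 1/3, -1/3; 1/3, 1/3, -1/3; -1/3, -1/3, 1/3]  -- (1, 1, -1)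
noncomputable def ksM19 : Matrix (Fin 3) (Fin 3) ℚ := !![1/2, 1/2, 0; 1/2, 1/2, 0; 0, 0, 0]  -- (1, 1, 0)
noncomputable def ksM20 : Matrix (Fin 3) (Fin 3) ℚ := !![1/3, 1/3, 1/3; 1/3, 1/3, 1/3; 1/3, 1/3, 1/3]  -- (1, 1, 1)
noncomputable def ksM21 : Matrix (Fin 3) (Fin 3) ℚ := !![1/6, 1/6, 1/3; 1/6, 1/6, 1/3; 1/3, 1/3, 2/3]  -- (1, 1, 2)
noncomputable def ksM22 : Matrix (Fin 3) (Fin 3) ℚ := !![1/6, 1/3, -1/6; 1/3, 2/3, -1/3; -1/6, -1/3, 1/6]  -- (1, 2, -1)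
noncomputable def ksM23 : Matrix (Fin 3) (Fin 3) ℚ := !![1/5, 2/5, 0; 2/5, 4/5, 0; 0, 0, 0]  -- (1, 2, 0)
noncomputable def ksM24 : Matrix (Fin 3) (Fin 3) ℚ := !![1/6, 1/3, 1/6; 1/3, 2/3, 1/3; 1/6, 1/3, 1/6]  -- (1, 2, 1)
noncomputable def ksM25 : Matrix (Fin 3) (Fin 3) ℚ := !![2/3, -1/3, -1/3; -1/3, 1/6, 1/6; -1/3, 1/6, 1/6]  -- (2, -1, -1)
noncomputable def ksM26 : Matrix (Fin 3) (Fin 3) ℚ := !![4/5, -2/5, 0; -2/5, 1/5, 0; 0, 0, 0]  -- (2, -1, 0)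
noncomputable def ksM27 : Matrix (Fin 3) (Fin 3) ℚ := !![2/3, -1/3, 1/3; -1/3, 1/6, -1/6; 1/3, -1/6, 1/6]  -- (2, -1, 1)
noncomputable def ksM28 : Matrix (Fin 3) (Fin 3) ℚ := !![4/5, 0, -2/5; 0, 0, 0; -2/5, 0, 1/5]  -- (2, 0, -1)
noncomputable def ksM29 : Matrix (Fin 3) (Fin 3) ℚ := !![4/5, 0, 2/5; 0, 0, 0; 2/5, 0, 1/5]  -- (2, 0, 1)
noncomputable def ksM30 : Matrix (Fin 3) (Fin 3) ℚ := !![2/3, 1/3, -1/3; 1/3, 1/6, -1/6; -1/3, -1/6, 1/6]  -- (2, 1, -1)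
noncomputable def ksM31 : Matrix (Fin 3) (Fin 3) ℚ := !![4/5, 2/5, 0; 2/5, 1/5, 0; 0, 0, 0]  -- (2, 1, 0)
noncomputable def ksM32 : Matrix (Fin 3) (Fin 3) ℚ := !![2/3, 1/3, 1/3; 1/3, 1/6, 1/6; 1/3, 1/6, 1/6]  -- (2, 1, 1)
lemma ksP0 : ksM0 * ksM0 = ksM0 ∧ (ksM0)ᵀ = ksM0 :=
  ⟨by ext a b; fin_cases a <;> fin_cases b <;> norm_num [ksM0, Matrix.mul_apply, Fin.sum_univ_three, Matrix.cons_val_zero, Matrix.cons_val_one, Matrix.head_cons, Matrix.cons_val_two, Matrix.tail_cons, Matrix.vecHead, Matrix.vecTail],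
   by ext a b; fin_cases a <;> fin_cases b <;> norm_num [ksM0, Matrix.transpose_apply, Matrix.cons_val_zero, Matrix.cons_val_one, Matrix.head_cons, Matrix.cons_val_two, Matrix.tail_cons, Matrix.vecHead, Matrix.vecTail]⟩
lemma ksP1 : ksM1 * ksM1 = ksM1 ∧ (ksM1)ᵀ = ksM1 :=
  ⟨by ext a b; fin_cases a <;> fin_cases b <;> norm_num [ksM1, Matrix.mul_apply, Fin.sum_univ_three, Matrix.cons_val_zero, Matrix.cons_val_one, Matrix.head_cons, Matrix.cons_val_two, Matrix.tail_cons, Matrix.vecHead, Matrix.vecTail],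
   by ext a b; fin_cases a <;> fin_cases b <;> norm_num [ksM1, Matrix.transpose_apply, Matrix.cons_val_zero, Matrix.cons_val_one, Matrix.head_cons, Matrix.cons_val_two, Matrix.tail_cons, Matrix.vecHead, Matrix.vecTail]⟩
lemma ksP2 : ksM2 * ksM2 = ksM2 ∧ (ksM2)ᵀ = ksM2 :=
  ⟨by ext a b; fin_cases a <;> fin_cases b <;> norm_num [ksM2, Matrix.mul_apply, Fin.sum_univ_three, Matrix.cons_val_zero, Matrix.cons_val_one, Matrix.head_cons, Matrix.cons_val_two, Matrix.tail_cons, Matrix.vecHead, Matrix.vecTail],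
   by ext a b; fin_cases a <;> fin_cases b <;> norm_num [ksM2, Matrix.transpose_apply, Matrix.cons_val_zero, Matrix.cons_val_one, Matrix.head_cons, Matrix.cons_val_two, Matrix.tail_cons, Matrix.vecHead, Matrix.vecTail]⟩
lemma ksP3 : ksM3 * ksM3 = ksM3 ∧ (ksM3)ᵀ = ksM3 :=
  ⟨by ext a b; fin_cases a <;> fin_cases b <;> norm_num [ksM3, Matrix.mul_apply, Fin.sum_univ_three, Matrix.cons_val_zero, Matrix.cons_val_one, Matrix.head_cons, Matrix.cons_val_two, Matrix.tail_cons, Matrix.vecHead, Matrix.vecTail],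
   by ext a b; fin_cases a <;> fin_cases b <;> norm_num [ksM3, Matrix.transpose_apply, Matrix.cons_val_zero, Matrix.cons_val_one, Matrix.head_cons, Matrix.cons_val_two, Matrix.tail_cons, Matrix.vecHead, Matrix.vecTail]⟩
lemma ksP4 : ksM4 * ksM4 = ksM4 ∧ (ksM4)ᵀ = ksM4 :=
  ⟨by ext a b; fin_cases a <;> fin_cases b <;> norm_num [ksM4, Matrix.mul_apply, Fin.sum_univ_three, Matrix.cons_val_zero, Matrix.cons_val_one, Matrix.head_cons, Matrix.cons_val_two, Matrix.tail_cons, Matrix.vecHead, Matrix.vecTail],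
   by ext a b; fin_cases a <;> fin_cases b <;> norm_num [ksM4, Matrix.transpose_apply, Matrix.cons_val_zero, Matrix.cons_val_one, Matrix.head_cons, Matrix.cons_val_two, Matrix.tail_cons, Matrix.vecHead, Matrix.vecTail]⟩
lemma ksP5 : ksM5 * ksM5 = ksM5 ∧ (ksM5)ᵀ = ksM5 :=
  ⟨by ext a b; fin_cases a <;> fin_cases b <;> norm_num [ksM5, Matrix.mul_apply, Fin.sum_univ_three, Matrix.cons_val_zero, Matrix.cons_val_one, Matrix.head_cons, Matrix.cons_val_two, Matrix.tail_cons, Matrix.vecHead, Matrix.vecTail],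
   by ext a b; fin_cases a <;> fin_cases b <;> norm_num [ksM5, Matrix.transpose_apply, Matrix.cons_val_zero, Matrix.cons_val_one, Matrix.head_cons, Matrix.cons_val_two, Matrix.tail_cons, Matrix.vecHead, Matrix.vecTail]⟩
lemma ksP6 : ksM6 * ksM6 = ksM6 ∧ (ksM6)ᵀ = ksM6 :=
  ⟨by ext a b; fin_cases a <;> fin_cases b <;> norm_num [ksM6, Matrix.mul_apply, Fin.sum_univ_three, Matrix.cons_val_zero, Matrix.cons_val_one, Matrix.head_cons, Matrix.cons_val_two, Matrix.tail_cons, Matrix.vecHead, Matrix.vecTail],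
   by ext a b; fin_cases a <;> fin_cases b <;> norm_num [ksM6, Matrix.transpose_apply, Matrix.cons_val_zero, Matrix.cons_val_one, Matrix.head_cons, Matrix.cons_val_two, Matrix.tail_cons, Matrix.vecHead, Matrix.vecTail]⟩
lemma ksP7 : ksM7 * ksM7 = ksM7 ∧ (ksM7)ᵀ = ksM7 :=
  ⟨by ext a b; fin_cases a <;> fin_cases b <;> norm_num [ksM7, Matrix.mul_apply, Fin.sum_univ_three, Matrix.cons_val_zero, Matrix.cons_val_one, Matrix.head_cons, Matrix.cons_val_two, Matrix.tail_cons, Matrix.vecHead, Matrix.vecTail],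
   by ext a b; fin_cases a <;> fin_cases b <;> norm_num [ksM7, Matrix.transpose_apply, Matrix.cons_val_zero, Matrix.cons_val_one, Matrix.head_cons, Matrix.cons_val_two, Matrix.tail_cons, Matrix.vecHead, Matrix.vecTail]⟩
lemma ksP8 : ksM8 * ksM8 = ksM8 ∧ (ksM8)ᵀ = ksM8 :=
  ⟨by ext a b; fin_cases a <;> fin_cases b <;> norm_num [ksM8, Matrix.mul_apply, Fin.sum_univ_three, Matrix.cons_val_zero, Matrix.cons_val_one, Matrix.head_cons, Matrix.cons_val_two, Matrix.tail_cons, Matrix.vecHead, Matrix.vecTail],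
   by ext a b; fin_cases a <;> fin_cases b <;> norm_num [ksM8, Matrix.transpose_apply, Matrix.cons_val_zero, Matrix.cons_val_one, Matrix.head_cons, Matrix.cons_val_two, Matrix.tail_cons, Matrix.vecHead, Matrix.vecTail]⟩
lemma ksP9 : ksM9 * ksM9 = ksM9 ∧ (ksM9)ᵀ = ksM9 :=
  ⟨by ext a b; fin_cases a <;> fin_cases b <;> norm_num [ksM9, Matrix.mul_apply, Fin.sum_univ_three, Matrix.cons_val_zero, Matrix.cons_val_one, Matrix.head_cons, Matrix.cons_val_two, Matrix.tail_cons, Matrix.vecHead, Matrix.vecTail],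
   by ext a b; fin_cases a <;> fin_cases b <;> norm_num [ksM9, Matrix.transpose_apply, Matrix.cons_val_zero, Matrix.cons_val_one, Matrix.head_cons, Matrix.cons_val_two, Matrix.tail_cons, Matrix.vecHead, Matrix.vecTail]⟩
lemma ksP10 : ksM10 * ksM10 = ksM10 ∧ (ksM10)ᵀ = ksM10 :=
  ⟨by ext a b; fin_cases a <;> fin_cases b <;> norm_num [ksM10, Matrix.mul_apply, Fin.sum_univ_three, Matrix.cons_val_zero, Matrix.cons_val_one, Matrix.head_cons, Matrix.cons_val_two, Matrix.tail_cons, Matrix.vecHead, Matrix.vecTail],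
   by ext a b; fin_cases a <;> fin_cases b <;> norm_num [ksM10, Matrix.transpose_apply, Matrix.cons_val_zero, Matrix.cons_val_one, Matrix.head_cons, Matrix.cons_val_two, Matrix.tail_cons, Matrix.vecHead, Matrix.vecTail]⟩
lemma ksP11 : ksM11 * ksM11 = ksM11 ∧ (ksM11)ᵀ = ksM11 :=
  ⟨by ext a b; fin_cases a <;> fin_cases b <;> norm_num [ksM11, Matrix.mul_apply, Fin.sum_univ_three, Matrix.cons_val_zero, Matrix.cons_val_one, Matrix.head_cons, Matrix.cons_val_two, Matrix.tail_cons, Matrix.vecHead, Matrix.vecTail],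
   by ext a b; fin_cases a <;> fin_cases b <;> norm_num [ksM11, Matrix.transpose_apply, Matrix.cons_val_zero, Matrix.cons_val_one, Matrix.head_cons, Matrix.cons_val_two, Matrix.tail_cons, Matrix.vecHead, Matrix.vecTail]⟩
lemma ksP12 : ksM12 * ksM12 = ksM12 ∧ (ksM12)ᵀ = ksM12 :=
  ⟨by ext a b; fin_cases a <;> fin_cases b <;> norm_num [ksM12, Matrix.mul_apply, Fin.sum_univ_three, Matrix.cons_val_zero, Matrix.cons_val_one, Matrix.head_cons, Matrix.cons_val_two, Matrix.tail_cons, Matrix.vecHead, Matrix.vecTail],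
   by ext a b; fin_cases a <;> fin_cases b <;> norm_num [ksM12, Matrix.transpose_apply, Matrix.cons_val_zero, Matrix.cons_val_one, Matrix.head_cons, Matrix.cons_val_two, Matrix.tail_cons, Matrix.vecHead, Matrix.vecTail]⟩
lemma ksP13 : ksM13 * ksM13 = ksM13 ∧ (ksM13)ᵀ = ksM13 :=
  ⟨by ext a b; fin_cases a <;> fin_cases b <;> norm_num [ksM13, Matrix.mul_apply, Fin.sum_univ_three, Matrix.cons_val_zero, Matrix.cons_val_one, Matrix.head_cons, Matrix.cons_val_two, Matrix.tail_cons, Matrix.vecHead, Matrix.vecTail],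
   by ext a b; fin_cases a <;> fin_cases b <;> norm_num [ksM13, Matrix.transpose_apply, Matrix.cons_val_zero, Matrix.cons_val_one, Matrix.head_cons, Matrix.cons_val_two, Matrix.tail_cons, Matrix.vecHead, Matrix.vecTail]⟩
lemma ksP14 : ksM14 * ksM14 = ksM14 ∧ (ksM14)ᵀ = ksM14 :=
  ⟨by ext a b; fin_cases a <;> fin_cases b <;> norm_num [ksM14, Matrix.mul_apply, Fin.sum_univ_three, Matrix.cons_val_zero, Matrix.cons_val_one, Matrix.head_cons, Matrix.cons_val_two, Matrix.tail_cons, Matrix.vecHead, Matrix.vecTail],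
   by ext a b; fin_cases a <;> fin_cases b <;> norm_num [ksM14, Matrix.transpose_apply, Matrix.cons_val_zero, Matrix.cons_val_one, Matrix.head_cons, Matrix.cons_val_two, Matrix.tail_cons, Matrix.vecHead, Matrix.vecTail]⟩
lemma ksP15 : ksM15 * ksM15 = ksM15 ∧ (ksM15)ᵀ = ksM15 :=
  ⟨by ext a b; fin_cases a <;> fin_cases b <;> norm_num [ksM15, Matrix.mul_apply, Fin.sum_univ_three, Matrix.cons_val_zero, Matrix.cons_val_one, Matrix.head_cons, Matrix.cons_val_two, Matrix.tail_cons, Matrix.vecHead, Matrix.vecTail],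
   by ext a b; fin_cases a <;> fin_cases b <;> norm_num [ksM15, Matrix.transpose_apply, Matrix.cons_val_zero, Matrix.cons_val_one, Matrix.head_cons, Matrix.cons_val_two, Matrix.tail_cons, Matrix.vecHead, Matrix.vecTail]⟩
lemma ksP16 : ksM16 * ksM16 = ksM16 ∧ (ksM16)ᵀ = ksM16 :=
  ⟨by ext a b; fin_cases a <;> fin_cases b <;> norm_num [ksM16, Matrix.mul_apply, Fin.sum_univ_three, Matrix.cons_val_zero, Matrix.cons_val_one, Matrix.head_cons, Matrix.cons_val_two, Matrix.tail_cons, Matrix.vecHead, Matrix.vecTail],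
   by ext a b; fin_cases a <;> fin_cases b <;> norm_num [ksM16, Matrix.transpose_apply, Matrix.cons_val_zero, Matrix.cons_val_one, Matrix.head_cons, Matrix.cons_val_two, Matrix.tail_cons, Matrix.vecHead, Matrix.vecTail]⟩
lemma ksP17 : ksM17 * ksM17 = ksM17 ∧ (ksM17)ᵀ = ksM17 :=
  ⟨by ext a b; fin_cases a <;> fin_cases b <;> norm_num [ksM17, Matrix.mul_apply, Fin.sum_univ_three, Matrix.cons_val_zero, Matrix.cons_val_one, Matrix.head_cons, Matrix.cons_val_two, Matrix.tail_cons, Matrix.vecHead, Matrix.vecTail],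
   by ext a b; fin_cases a <;> fin_cases b <;> norm_num [ksM17, Matrix.transpose_apply, Matrix.cons_val_zero, Matrix.cons_val_one, Matrix.head_cons, Matrix.cons_val_two, Matrix.tail_cons, Matrix.vecHead, Matrix.vecTail]⟩
lemma ksP18 : ksM18 * ksM18 = ksM18 ∧ (ksM18)ᵀ = ksM18 :=
  ⟨by ext a b; fin_cases a <;> fin_cases b <;> norm_num [ksM18, Matrix.mul_apply, Fin.sum_univ_three, Matrix.cons_val_zero, Matrix.cons_val_one, Matrix.head_cons, Matrix.cons_val_two, Matrix.tail_cons, Matrix.vecHead, Matrix.vecTail],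
   by ext a b; fin_cases a <;> fin_cases b <;> norm_num [ksM18, Matrix.transpose_apply, Matrix.cons_val_zero, Matrix.cons_val_one, Matrix.head_cons, Matrix.cons_val_two, Matrix.tail_cons, Matrix.vecHead, Matrix.vecTail]⟩
lemma ksP19 : ksM19 * ksM19 = ksM19 ∧ (ksM19)ᵀ = ksM19 :=
  ⟨by ext a b; fin_cases a <;> fin_cases b <;> norm_num [ksM19, Matrix.mul_apply, Fin.sum_univ_three, Matrix.cons_val_zero, Matrix.cons_val_one, Matrix.head_cons, Matrix.cons_val_two, Matrix.tail_cons, Matrix.vecHead, Matrix.vecTail],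
   by ext a b; fin_cases a <;> fin_cases b <;> norm_num [ksM19, Matrix.transpose_apply, Matrix.cons_val_zero, Matrix.cons_val_one, Matrix.head_cons, Matrix.cons_val_two, Matrix.tail_cons, Matrix.vecHead, Matrix.vecTail]⟩
lemma ksP20 : ksM20 * ksM20 = ksM20 ∧ (ksM20)ᵀ = ksM20 :=
  ⟨by ext a b; fin_cases a <;> fin_cases b <;> norm_num [ksM20, Matrix.mul_apply, Fin.sum_univ_three, Matrix.cons_val_zero, Matrix.cons_val_one, Matrix.head_cons, Matrix.cons_val_two, Matrix.tail_cons, Matrix.vecHead, Matrix.vecTail],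
   by ext a b; fin_cases a <;> fin_cases b <;> norm_num [ksM20, Matrix.transpose_apply, Matrix.cons_val_zero, Matrix.cons_val_one, Matrix.head_cons, Matrix.cons_val_two, Matrix.tail_cons, Matrix.vecHead, Matrix.vecTail]⟩
lemma ksP21 : ksM21 * ksM21 = ksM21 ∧ (ksM21)ᵀ = ksM21 :=
  ⟨by ext a b; fin_cases a <;> fin_cases b <;> norm_num [ksM21, Matrix.mul_apply, Fin.sum_univ_three, Matrix.cons_val_zero, Matrix.cons_val_one, Matrix.head_cons, Matrix.cons_val_two, Matrix.tail_cons, Matrix.vecHead, Matrix.vecTail],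
   by ext a b; fin_cases a <;> fin_cases b <;> norm_num [ksM21, Matrix.transpose_apply, Matrix.cons_val_zero, Matrix.cons_val_one, Matrix.head_cons, Matrix.cons_val_two, Matrix.tail_cons, Matrix.vecHead, Matrix.vecTail]⟩
lemma ksP22 : ksM22 * ksM22 = ksM22 ∧ (ksM22)ᵀ = ksM22 :=
  ⟨by ext a b; fin_cases a <;> fin_cases b <;> norm_num [ksM22, Matrix.mul_apply, Fin.sum_univ_three, Matrix.cons_val_zero, Matrix.cons_val_one, Matrix.head_cons, Matrix.cons_val_two, Matrix.tail_cons, Matrix.vecHead, Matrix.vecTail],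
   by ext a b; fin_cases a <;> fin_cases b <;> norm_num [ksM22, Matrix.transpose_apply, Matrix.cons_val_zero, Matrix.cons_val_one, Matrix.head_cons, Matrix.cons_val_two, Matrix.tail_cons, Matrix.vecHead, Matrix.vecTail]⟩
lemma ksP23 : ksM23 * ksM23 = ksM23 ∧ (ksM23)ᵀ = ksM23 :=
  ⟨by ext a b; fin_cases a <;> fin_cases b <;> norm_num [ksM23, Matrix.mul_apply, Fin.sum_univ_three, Matrix.cons_val_zero, Matrix.cons_val_one, Matrix.head_cons, Matrix.cons_val_two, Matrix.tail_cons, Matrix.vecHead, Matrix.vecTail],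
   by ext a b; fin_cases a <;> fin_cases b <;> norm_num [ksM23, Matrix.transpose_apply, Matrix.cons_val_zero, Matrix.cons_val_one, Matrix.head_cons, Matrix.cons_val_two, Matrix.tail_cons, Matrix.vecHead, Matrix.vecTail]⟩
lemma ksP24 : ksM24 * ksM24 = ksM24 ∧ (ksM24)ᵀ = ksM24 :=
  ⟨by ext a b; fin_cases a <;> fin_cases b <;> norm_num [ksM24, Matrix.mul_apply, Fin.sum_univ_three, Matrix.cons_val_zero, Matrix.cons_val_one, Matrix.head_cons, Matrix.cons_val_two, Matrix.tail_cons, Matrix.vecHead, Matrix.vecTail],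
   by ext a b; fin_cases a <;> fin_cases b <;> norm_num [ksM24, Matrix.transpose_apply, Matrix.cons_val_zero, Matrix.cons_val_one, Matrix.head_cons, Matrix.cons_val_two, Matrix.tail_cons, Matrix.vecHead, Matrix.vecTail]⟩
lemma ksP25 : ksM25 * ksM25 = ksM25 ∧ (ksM25)ᵀ = ksM25 :=
  ⟨by ext a b; fin_cases a <;> fin_cases b <;> norm_num [ksM25, Matrix.mul_apply, Fin.sum_univ_three, Matrix.cons_val_zero, Matrix.cons_val_one, Matrix.head_cons, Matrix.cons_val_two, Matrix.tail_cons, Matrix.vecHead, Matrix.vecTail],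
   by ext a b; fin_cases a <;> fin_cases b <;> norm_num [ksM25, Matrix.transpose_apply, Matrix.cons_val_zero, Matrix.cons_val_one, Matrix.head_cons, Matrix.cons_val_two, Matrix.tail_cons, Matrix.vecHead, Matrix.vecTail]⟩
lemma ksP26 : ksM26 * ksM26 = ksM26 ∧ (ksM26)ᵀ = ksM26 :=
  ⟨by ext a b; fin_cases a <;> fin_cases b <;> norm_num [ksM26, Matrix.mul_apply, Fin.sum_univ_three, Matrix.cons_val_zero, Matrix.cons_val_one, Matrix.head_cons, Matrix.cons_val_two, Matrix.tail_cons, Matrix.vecHead, Matrix.vecTail],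
   by ext a b; fin_cases a <;> fin_cases b <;> norm_num [ksM26, Matrix.transpose_apply, Matrix.cons_val_zero, Matrix.cons_val_one, Matrix.head_cons, Matrix.cons_val_two, Matrix.tail_cons, Matrix.vecHead, Matrix.vecTail]⟩
lemma ksP27 : ksM27 * ksM27 = ksM27 ∧ (ksM27)ᵀ = ksM27 :=
  ⟨by ext a b; fin_cases a <;> fin_cases b <;> norm_num [ksM27, Matrix.mul_apply, Fin.sum_univ_three, Matrix.cons_val_zero, Matrix.cons_val_one, Matrix.head_cons, Matrix.cons_val_two, Matrix.tail_cons, Matrix.vecHead, Matrix.vecTail],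
   by ext a b; fin_cases a <;> fin_cases b <;> norm_num [ksM27, Matrix.transpose_apply, Matrix.cons_val_zero, Matrix.cons_val_one, Matrix.head_cons, Matrix.cons_val_two, Matrix.tail_cons, Matrix.vecHead, Matrix.vecTail]⟩
lemma ksP28 : ksM28 * ksM28 = ksM28 ∧ (ksM28)ᵀ = ksM28 :=
  ⟨by ext a b; fin_cases a <;> fin_cases b <;> norm_num [ksM28, Matrix.mul_apply, Fin.sum_univ_three, Matrix.cons_val_zero, Matrix.cons_val_one, Matrix.head_cons, Matrix.cons_val_two, Matrix.tail_cons, Matrix.vecHead, Matrix.vecTail],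
   by ext a b; fin_cases a <;> fin_cases b <;> norm_num [ksM28, Matrix.transpose_apply, Matrix.cons_val_zero, Matrix.cons_val_one, Matrix.head_cons, Matrix.cons_val_two, Matrix.tail_cons, Matrix.vecHead, Matrix.vecTail]⟩
lemma ksP29 : ksM29 * ksM29 = ksM29 ∧ (ksM29)ᵀ = ksM29 :=
  ⟨by ext a b; fin_cases a <;> fin_cases b <;> norm_num [ksM29, Matrix.mul_apply, Fin.sum_univ_three, Matrix.cons_val_zero, Matrix.cons_val_one, Matrix.head_cons, Matrix.cons_val_two, Matrix.tail_cons, Matrix.vecHead, Matrix.vecTail],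
   by ext a b; fin_cases a <;> fin_cases b <;> norm_num [ksM29, Matrix.transpose_apply, Matrix.cons_val_zero, Matrix.cons_val_one, Matrix.head_cons, Matrix.cons_val_two, Matrix.tail_cons, Matrix.vecHead, Matrix.vecTail]⟩
lemma ksP30 : ksM30 * ksM30 = ksM30 ∧ (ksM30)ᵀ = ksM30 :=
  ⟨by ext a b; fin_cases a <;> fin_cases b <;> norm_num [ksM30, Matrix.mul_apply, Fin.sum_univ_three, Matrix.cons_val_zero, Matrix.cons_val_one, Matrix.head_cons, Matrix.cons_val_two, Matrix.tail_cons, Matrix.vecHead, Matrix.vecTail],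
   by ext a b; fin_cases a <;> fin_cases b <;> norm_num [ksM30, Matrix.transpose_apply, Matrix.cons_val_zero, Matrix.cons_val_one, Matrix.head_cons, Matrix.cons_val_two, Matrix.tail_cons, Matrix.vecHead, Matrix.vecTail]⟩
lemma ksP31 : ksM31 * ksM31 = ksM31 ∧ (ksM31)ᵀ = ksM31 :=
  ⟨by ext a b; fin_cases a <;> fin_cases b <;> norm_num [ksM31, Matrix.mul_apply, Fin.sum_univ_three, Matrix.cons_val_zero, Matrix.cons_val_one, Matrix.head_cons, Matrix.cons_val_two, Matrix.tail_cons, Matrix.vecHead, Matrix.vecTail],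
   by ext a b; fin_cases a <;> fin_cases b <;> norm_num [ksM31, Matrix.transpose_apply, Matrix.cons_val_zero, Matrix.cons_val_one, Matrix.head_cons, Matrix.cons_val_two, Matrix.tail_cons, Matrix.vecHead, Matrix.vecTail]⟩
lemma ksP32 : ksM32 * ksM32 = ksM32 ∧ (ksM32)ᵀ = ksM32 :=
  ⟨by ext a b; fin_cases a <;> fin_cases b <;> norm_num [ksM32, Matrix.mul_apply, Fin.sum_univ_three, Matrix.cons_val_zero, Matrix.cons_val_one, Matrix.head_cons, Matrix.cons_val_two, Matrix.tail_cons, Matrix.vecHead, Matrix.vecTail],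
   by ext a b; fin_cases a <;> fin_cases b <;> norm_num [ksM32, Matrix.transpose_apply, Matrix.cons_val_zero, Matrix.cons_val_one, Matrix.head_cons, Matrix.cons_val_two, Matrix.tail_cons, Matrix.vecHead, Matrix.vecTail]⟩
lemma ksO_0_2 : ksM0 * ksM2 = 0 := by
  ext a b; fin_cases a <;> fin_cases b <;> norm_num [ksM0, ksM2, Matrix.mul_apply, Fin.sum_univ_three, Matrix.cons_val_zero, Matrix.cons_val_one, Matrix.head_cons, Matrix.cons_val_two, Matrix.tail_cons, Matrix.vecHead, Matrix.vecTail]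
lemma ksO_0_5 : ksM0 * ksM5 = 0 := by
  ext a b; fin_cases a <;> fin_cases b <;> norm_num [ksM0, ksM5, Matrix.mul_apply, Fin.sum_univ_three, Matrix.cons_val_zero, Matrix.cons_val_one, Matrix.head_cons, Matrix.cons_val_two, Matrix.tail_cons, Matrix.vecHead, Matrix.vecTail]
lemma ksO_0_9 : ksM0 * ksM9 = 0 := by
  ext a b; fin_cases a <;> fin_cases b <;> norm_num [ksM0, ksM9, Matrix.mul_apply, Fin.sum_univ_three, Matrix.cons_val_zero, Matrix.cons_val_one, Matrix.head_cons, Matrix.cons_val_two, Matrix.tail_cons, Matrix.vecHead, Matrix.vecTail]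
lemma ksO_0_14 : ksM0 * ksM14 = 0 := by
  ext a b; fin_cases a <;> fin_cases b <;> norm_num [ksM0, ksM14, Matrix.mul_apply, Fin.sum_univ_three, Matrix.cons_val_zero, Matrix.cons_val_one, Matrix.head_cons, Matrix.cons_val_two, Matrix.tail_cons, Matrix.vecHead, Matrix.vecTail]
lemma ksO_0_19 : ksM0 * ksM19 = 0 := by
  ext a b; fin_cases a <;> fin_cases b <;> norm_num [ksM0, ksM19, Matrix.mul_apply, Fin.sum_univ_three, Matrix.cons_val_zero, Matrix.cons_val_one, Matrix.head_cons, Matrix.cons_val_two, Matrix.tail_cons, Matrix.vecHead, Matrix.vecTail]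
lemma ksO_0_23 : ksM0 * ksM23 = 0 := by
  ext a b; fin_cases a <;> fin_cases b <;> norm_num [ksM0, ksM23, Matrix.mul_apply, Fin.sum_univ_three, Matrix.cons_val_zero, Matrix.cons_val_one, Matrix.head_cons, Matrix.cons_val_two, Matrix.tail_cons, Matrix.vecHead, Matrix.vecTail]
lemma ksO_0_26 : ksM0 * ksM26 = 0 := by
  ext a b; fin_cases a <;> fin_cases b <;> norm_num [ksM0, ksM26, Matrix.mul_apply, Fin.sum_univ_three, Matrix.cons_val_zero, Matrix.cons_val_one, Matrix.head_cons, Matrix.cons_val_two, Matrix.tail_cons, Matrix.vecHead, Matrix.vecTail]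
lemma ksO_0_31 : ksM0 * ksM31 = 0 := by
  ext a b; fin_cases a <;> fin_cases b <;> norm_num [ksM0, ksM31, Matrix.mul_apply, Fin.sum_univ_three, Matrix.cons_val_zero, Matrix.cons_val_one, Matrix.head_cons, Matrix.cons_val_two, Matrix.tail_cons, Matrix.vecHead, Matrix.vecTail]
lemma ksO_1_3 : ksM1 * ksM3 = 0 := by
  ext a b; fin_cases a <;> fin_cases b <;> norm_num [ksM1, ksM3, Matrix.mul_apply, Fin.sum_univ_three, Matrix.cons_val_zero, Matrix.cons_val_one, Matrix.head_cons, Matrix.cons_val_two, Matrix.tail_cons, Matrix.vecHead, Matrix.vecTail]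
lemma ksO_1_8 : ksM1 * ksM8 = 0 := by
  ext a b; fin_cases a <;> fin_cases b <;> norm_num [ksM1, ksM8, Matrix.mul_apply, Fin.sum_univ_three, Matrix.cons_val_zero, Matrix.cons_val_one, Matrix.head_cons, Matrix.cons_val_two, Matrix.tail_cons, Matrix.vecHead, Matrix.vecTail]
lemma ksO_1_14 : ksM1 * ksM14 = 0 := by
  ext a b; fin_cases a <;> fin_cases b <;> norm_num [ksM1, ksM14, Matrix.mul_apply, Fin.sum_univ_three, Matrix.cons_val_zero, Matrix.cons_val_one, Matrix.head_cons, Matrix.cons_val_two, Matrix.tail_cons, Matrix.vecHead, Matrix.vecTail]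
lemma ksO_1_20 : ksM1 * ksM20 = 0 := by
  ext a b; fin_cases a <;> fin_cases b <;> norm_num [ksM1, ksM20, Matrix.mul_apply, Fin.sum_univ_three, Matrix.cons_val_zero, Matrix.cons_val_one, Matrix.head_cons, Matrix.cons_val_two, Matrix.tail_cons, Matrix.vecHead, Matrix.vecTail]
lemma ksO_1_25 : ksM1 * ksM25 = 0 := by
  ext a b; fin_cases a <;> fin_cases b <;> norm_num [ksM1, ksM25, Matrix.mul_apply, Fin.sum_univ_three, Matrix.cons_val_zero, Matrix.cons_val_one, Matrix.head_cons, Matrix.cons_val_two, Matrix.tail_cons, Matrix.vecHead, Matrix.vecTail]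
lemma ksO_1_32 : ksM1 * ksM32 = 0 := by
  ext a b; fin_cases a <;> fin_cases b <;> norm_num [ksM1, ksM32, Matrix.mul_apply, Fin.sum_univ_three, Matrix.cons_val_zero, Matrix.cons_val_one, Matrix.head_cons, Matrix.cons_val_two, Matrix.tail_cons, Matrix.vecHead, Matrix.vecTail]
lemma ksO_2_12 : ksM2 * ksM12 = 0 := by
  ext a b; fin_cases a <;> fin_cases b <;> norm_num [ksM2, ksM12, Matrix.mul_apply, Fin.sum_univ_three, Matrix.cons_val_zero, Matrix.cons_val_one, Matrix.head_cons, Matrix.cons_val_two, Matrix.tail_cons, Matrix.vecHead, Matrix.vecTail]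
lemma ksO_2_13 : ksM2 * ksM13 = 0 := by
  ext a b; fin_cases a <;> fin_cases b <;> norm_num [ksM2, ksM13, Matrix.mul_apply, Fin.sum_univ_three, Matrix.cons_val_zero, Matrix.cons_val_one, Matrix.head_cons, Matrix.cons_val_two, Matrix.tail_cons, Matrix.vecHead, Matrix.vecTail]
lemma ksO_2_14 : ksM2 * ksM14 = 0 := by
  ext a b; fin_cases a <;> fin_cases b <;> norm_num [ksM2, ksM14, Matrix.mul_apply, Fin.sum_univ_three, Matrix.cons_val_zero, Matrix.cons_val_one, Matrix.head_cons, Matrix.cons_val_two, Matrix.tail_cons, Matrix.vecHead, Matrix.vecTail]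
lemma ksO_2_15 : ksM2 * ksM15 = 0 := by
  ext a b; fin_cases a <;> fin_cases b <;> norm_num [ksM2, ksM15, Matrix.mul_apply, Fin.sum_univ_three, Matrix.cons_val_zero, Matrix.cons_val_one, Matrix.head_cons, Matrix.cons_val_two, Matrix.tail_cons, Matrix.vecHead, Matrix.vecTail]
lemma ksO_2_16 : ksM2 * ksM16 = 0 := by
  ext a b; fin_cases a <;> fin_cases b <;> norm_num [ksM2, ksM16, Matrix.mul_apply, Fin.sum_univ_three, Matrix.cons_val_zero, Matrix.cons_val_one, Matrix.head_cons, Matrix.cons_val_two, Matrix.tail_cons, Matrix.vecHead, Matrix.vecTail]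
lemma ksO_2_28 : ksM2 * ksM28 = 0 := by
  ext a b; fin_cases a <;> fin_cases b <;> norm_num [ksM2, ksM28, Matrix.mul_apply, Fin.sum_univ_three, Matrix.cons_val_zero, Matrix.cons_val_one, Matrix.head_cons, Matrix.cons_val_two, Matrix.tail_cons, Matrix.vecHead, Matrix.vecTail]
lemma ksO_2_29 : ksM2 * ksM29 = 0 := by
  ext a b; fin_cases a <;> fin_cases b <;> norm_num [ksM2, ksM29, Matrix.mul_apply, Fin.sum_univ_three, Matrix.cons_val_zero, Matrix.cons_val_one, Matrix.head_cons, Matrix.cons_val_two, Matrix.tail_cons, Matrix.vecHead, Matrix.vecTail]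
lemma ksO_3_10 : ksM3 * ksM10 = 0 := by
  ext a b; fin_cases a <;> fin_cases b <;> norm_num [ksM3, ksM10, Matrix.mul_apply, Fin.sum_univ_three, Matrix.cons_val_zero, Matrix.cons_val_one, Matrix.head_cons, Matrix.cons_val_two, Matrix.tail_cons, Matrix.vecHead, Matrix.vecTail]
lemma ksO_3_14 : ksM3 * ksM14 = 0 := by
  ext a b; fin_cases a <;> fin_cases b <;> norm_num [ksM3, ksM14, Matrix.mul_apply, Fin.sum_univ_three, Matrix.cons_val_zero, Matrix.cons_val_one, Matrix.head_cons, Matrix.cons_val_two, Matrix.tail_cons, Matrix.vecHead, Matrix.vecTail]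
lemma ksO_3_18 : ksM3 * ksM18 = 0 := by
  ext a b; fin_cases a <;> fin_cases b <;> norm_num [ksM3, ksM18, Matrix.mul_apply, Fin.sum_univ_three, Matrix.cons_val_zero, Matrix.cons_val_one, Matrix.head_cons, Matrix.cons_val_two, Matrix.tail_cons, Matrix.vecHead, Matrix.vecTail]
lemma ksO_3_27 : ksM3 * ksM27 = 0 := by
  ext a b; fin_cases a <;> fin_cases b <;> norm_num [ksM3, ksM27, Matrix.mul_apply, Fin.sum_univ_three, Matrix.cons_val_zero, Matrix.cons_val_one, Matrix.head_cons, Matrix.cons_val_two, Matrix.tail_cons, Matrix.vecHead, Matrix.vecTail]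
lemma ksO_3_30 : ksM3 * ksM30 = 0 := by
  ext a b; fin_cases a <;> fin_cases b <;> norm_num [ksM3, ksM30, Matrix.mul_apply, Fin.sum_univ_three, Matrix.cons_val_zero, Matrix.cons_val_one, Matrix.head_cons, Matrix.cons_val_two, Matrix.tail_cons, Matrix.vecHead, Matrix.vecTail]
lemma ksO_4_15 : ksM4 * ksM15 = 0 := by
  ext a b; fin_cases a <;> fin_cases b <;> norm_num [ksM4, ksM15, Matrix.mul_apply, Fin.sum_univ_three, Matrix.cons_val_zero, Matrix.cons_val_one, Matrix.head_cons, Matrix.cons_val_two, Matrix.tail_cons, Matrix.vecHead, Matrix.vecTail]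
lemma ksO_4_18 : ksM4 * ksM18 = 0 := by
  ext a b; fin_cases a <;> fin_cases b <;> norm_num [ksM4, ksM18, Matrix.mul_apply, Fin.sum_univ_three, Matrix.cons_val_zero, Matrix.cons_val_one, Matrix.head_cons, Matrix.cons_val_two, Matrix.tail_cons, Matrix.vecHead, Matrix.vecTail]
lemma ksO_4_31 : ksM4 * ksM31 = 0 := by
  ext a b; fin_cases a <;> fin_cases b <;> norm_num [ksM4, ksM31, Matrix.mul_apply, Fin.sum_univ_three, Matrix.cons_val_zero, Matrix.cons_val_one, Matrix.head_cons, Matrix.cons_val_two, Matrix.tail_cons, Matrix.vecHead, Matrix.vecTail]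
lemma ksO_5_30 : ksM5 * ksM30 = 0 := by
  ext a b; fin_cases a <;> fin_cases b <;> norm_num [ksM5, ksM30, Matrix.mul_apply, Fin.sum_univ_three, Matrix.cons_val_zero, Matrix.cons_val_one, Matrix.head_cons, Matrix.cons_val_two, Matrix.tail_cons, Matrix.vecHead, Matrix.vecTail]
lemma ksO_5_31 : ksM5 * ksM31 = 0 := by
  ext a b; fin_cases a <;> fin_cases b <;> norm_num [ksM5, ksM31, Matrix.mul_apply, Fin.sum_univ_three, Matrix.cons_val_zero, Matrix.cons_val_one, Matrix.head_cons, Matrix.cons_val_two, Matrix.tail_cons, Matrix.vecHead, Matrix.vecTail]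
lemma ksO_5_32 : ksM5 * ksM32 = 0 := by
  ext a b; fin_cases a <;> fin_cases b <;> norm_num [ksM5, ksM32, Matrix.mul_apply, Fin.sum_univ_three, Matrix.cons_val_zero, Matrix.cons_val_one, Matrix.head_cons, Matrix.cons_val_two, Matrix.tail_cons, Matrix.vecHead, Matrix.vecTail]
lemma ksO_6_13 : ksM6 * ksM13 = 0 := by
  ext a b; fin_cases a <;> fin_cases b <;> norm_num [ksM6, ksM13, Matrix.mul_apply, Fin.sum_univ_three, Matrix.cons_val_zero, Matrix.cons_val_one, Matrix.head_cons, Matrix.cons_val_two, Matrix.tail_cons, Matrix.vecHead, Matrix.vecTail]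
lemma ksO_6_20 : ksM6 * ksM20 = 0 := by
  ext a b; fin_cases a <;> fin_cases b <;> norm_num [ksM6, ksM20, Matrix.mul_apply, Fin.sum_univ_three, Matrix.cons_val_zero, Matrix.cons_val_one, Matrix.head_cons, Matrix.cons_val_two, Matrix.tail_cons, Matrix.vecHead, Matrix.vecTail]
lemma ksO_6_31 : ksM6 * ksM31 = 0 := by
  ext a b; fin_cases a <;> fin_cases b <;> norm_num [ksM6, ksM31, Matrix.mul_apply, Fin.sum_univ_three, Matrix.cons_val_zero, Matrix.cons_val_one, Matrix.head_cons, Matrix.cons_val_two, Matrix.tail_cons, Matrix.vecHead, Matrix.vecTail]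
lemma ksO_7_10 : ksM7 * ksM10 = 0 := by
  ext a b; fin_cases a <;> fin_cases b <;> norm_num [ksM7, ksM10, Matrix.mul_apply, Fin.sum_univ_three, Matrix.cons_val_zero, Matrix.cons_val_one, Matrix.head_cons, Matrix.cons_val_two, Matrix.tail_cons, Matrix.vecHead, Matrix.vecTail]
lemma ksO_7_19 : ksM7 * ksM19 = 0 := by
  ext a b; fin_cases a <;> fin_cases b <;> norm_num [ksM7, ksM19, Matrix.mul_apply, Fin.sum_univ_three, Matrix.cons_val_zero, Matrix.cons_val_one, Matrix.head_cons, Matrix.cons_val_two, Matrix.tail_cons, Matrix.vecHead, Matrix.vecTail]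
lemma ksO_7_29 : ksM7 * ksM29 = 0 := by
  ext a b; fin_cases a <;> fin_cases b <;> norm_num [ksM7, ksM29, Matrix.mul_apply, Fin.sum_univ_three, Matrix.cons_val_zero, Matrix.cons_val_one, Matrix.head_cons, Matrix.cons_val_two, Matrix.tail_cons, Matrix.vecHead, Matrix.vecTail]
lemma ksO_8_11 : ksM8 * ksM11 = 0 := by
  ext a b; fin_cases a <;> fin_cases b <;> norm_num [ksM8, ksM11, Matrix.mul_apply, Fin.sum_univ_three, Matrix.cons_val_zero, Matrix.cons_val_one, Matrix.head_cons, Matrix.cons_val_two, Matrix.tail_cons, Matrix.vecHead, Matrix.vecTail]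
lemma ksO_8_15 : ksM8 * ksM15 = 0 := by
  ext a b; fin_cases a <;> fin_cases b <;> norm_num [ksM8, ksM15, Matrix.mul_apply, Fin.sum_univ_three, Matrix.cons_val_zero, Matrix.cons_val_one, Matrix.head_cons, Matrix.cons_val_two, Matrix.tail_cons, Matrix.vecHead, Matrix.vecTail]
lemma ksO_8_19 : ksM8 * ksM19 = 0 := by
  ext a b; fin_cases a <;> fin_cases b <;> norm_num [ksM8, ksM19, Matrix.mul_apply, Fin.sum_univ_three, Matrix.cons_val_zero, Matrix.cons_val_one, Matrix.head_cons, Matrix.cons_val_two, Matrix.tail_cons, Matrix.vecHead, Matrix.vecTail]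
lemma ksO_8_22 : ksM8 * ksM22 = 0 := by
  ext a b; fin_cases a <;> fin_cases b <;> norm_num [ksM8, ksM22, Matrix.mul_apply, Fin.sum_univ_three, Matrix.cons_val_zero, Matrix.cons_val_one, Matrix.head_cons, Matrix.cons_val_two, Matrix.tail_cons, Matrix.vecHead, Matrix.vecTail]
lemma ksO_8_32 : ksM8 * ksM32 = 0 := by
  ext a b; fin_cases a <;> fin_cases b <;> norm_num [ksM8, ksM32, Matrix.mul_apply, Fin.sum_univ_three, Matrix.cons_val_zero, Matrix.cons_val_one, Matrix.head_cons, Matrix.cons_val_two, Matrix.tail_cons, Matrix.vecHead, Matrix.vecTail]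
lemma ksO_9_17 : ksM9 * ksM17 = 0 := by
  ext a b; fin_cases a <;> fin_cases b <;> norm_num [ksM9, ksM17, Matrix.mul_apply, Fin.sum_univ_three, Matrix.cons_val_zero, Matrix.cons_val_one, Matrix.head_cons, Matrix.cons_val_two, Matrix.tail_cons, Matrix.vecHead, Matrix.vecTail]
lemma ksO_9_18 : ksM9 * ksM18 = 0 := by
  ext a b; fin_cases a <;> fin_cases b <;> norm_num [ksM9, ksM18, Matrix.mul_apply, Fin.sum_univ_three, Matrix.cons_val_zero, Matrix.cons_val_one, Matrix.head_cons, Matrix.cons_val_two, Matrix.tail_cons, Matrix.vecHead, Matrix.vecTail]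
lemma ksO_9_19 : ksM9 * ksM19 = 0 := by
  ext a b; fin_cases a <;> fin_cases b <;> norm_num [ksM9, ksM19, Matrix.mul_apply, Fin.sum_univ_three, Matrix.cons_val_zero, Matrix.cons_val_one, Matrix.head_cons, Matrix.cons_val_two, Matrix.tail_cons, Matrix.vecHead, Matrix.vecTail]
lemma ksO_9_20 : ksM9 * ksM20 = 0 := by
  ext a b; fin_cases a <;> fin_cases b <;> norm_num [ksM9, ksM20, Matrix.mul_apply, Fin.sum_univ_three, Matrix.cons_val_zero, Matrix.cons_val_one, Matrix.head_cons, Matrix.cons_val_two, Matrix.tail_cons, Matrix.vecHead, Matrix.vecTail]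
lemma ksO_9_21 : ksM9 * ksM21 = 0 := by
  ext a b; fin_cases a <;> fin_cases b <;> norm_num [ksM9, ksM21, Matrix.mul_apply, Fin.sum_univ_three, Matrix.cons_val_zero, Matrix.cons_val_one, Matrix.head_cons, Matrix.cons_val_two, Matrix.tail_cons, Matrix.vecHead, Matrix.vecTail]
lemma ksO_10_13 : ksM10 * ksM13 = 0 := by
  ext a b; fin_cases a <;> fin_cases b <;> norm_num [ksM10, ksM13, Matrix.mul_apply, Fin.sum_univ_three, Matrix.cons_val_zero, Matrix.cons_val_one, Matrix.head_cons, Matrix.cons_val_two, Matrix.tail_cons, Matrix.vecHead, Matrix.vecTail]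
lemma ksO_10_19 : ksM10 * ksM19 = 0 := by
  ext a b; fin_cases a <;> fin_cases b <;> norm_num [ksM10, ksM19, Matrix.mul_apply, Fin.sum_univ_three, Matrix.cons_val_zero, Matrix.cons_val_one, Matrix.head_cons, Matrix.cons_val_two, Matrix.tail_cons, Matrix.vecHead, Matrix.vecTail]
lemma ksO_10_24 : ksM10 * ksM24 = 0 := by
  ext a b; fin_cases a <;> fin_cases b <;> norm_num [ksM10, ksM24, Matrix.mul_apply, Fin.sum_univ_three, Matrix.cons_val_zero, Matrix.cons_val_one, Matrix.head_cons, Matrix.cons_val_two, Matrix.tail_cons, Matrix.vecHead, Matrix.vecTail]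
lemma ksO_10_30 : ksM10 * ksM30 = 0 := by
  ext a b; fin_cases a <;> fin_cases b <;> norm_num [ksM10, ksM30, Matrix.mul_apply, Fin.sum_univ_three, Matrix.cons_val_zero, Matrix.cons_val_one, Matrix.head_cons, Matrix.cons_val_two, Matrix.tail_cons, Matrix.vecHead, Matrix.vecTail]
lemma ksO_11_19 : ksM11 * ksM19 = 0 := by
  ext a b; fin_cases a <;> fin_cases b <;> norm_num [ksM11, ksM19, Matrix.mul_apply, Fin.sum_univ_three, Matrix.cons_val_zero, Matrix.cons_val_one, Matrix.head_cons, Matrix.cons_val_two, Matrix.tail_cons, Matrix.vecHead, Matrix.vecTail]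
lemma ksO_11_28 : ksM11 * ksM28 = 0 := by
  ext a b; fin_cases a <;> fin_cases b <;> norm_num [ksM11, ksM28, Matrix.mul_apply, Fin.sum_univ_three, Matrix.cons_val_zero, Matrix.cons_val_one, Matrix.head_cons, Matrix.cons_val_two, Matrix.tail_cons, Matrix.vecHead, Matrix.vecTail]
lemma ksO_12_27 : ksM12 * ksM27 = 0 := by
  ext a b; fin_cases a <;> fin_cases b <;> norm_num [ksM12, ksM27, Matrix.mul_apply, Fin.sum_univ_three, Matrix.cons_val_zero, Matrix.cons_val_one, Matrix.head_cons, Matrix.cons_val_two, Matrix.tail_cons, Matrix.vecHead, Matrix.vecTail]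
lemma ksO_12_29 : ksM12 * ksM29 = 0 := by
  ext a b; fin_cases a <;> fin_cases b <;> norm_num [ksM12, ksM29, Matrix.mul_apply, Fin.sum_univ_three, Matrix.cons_val_zero, Matrix.cons_val_one, Matrix.head_cons, Matrix.cons_val_two, Matrix.tail_cons, Matrix.vecHead, Matrix.vecTail]
lemma ksO_12_32 : ksM12 * ksM32 = 0 := by
  ext a b; fin_cases a <;> fin_cases b <;> norm_num [ksM12, ksM32, Matrix.mul_apply, Fin.sum_univ_three, Matrix.cons_val_zero, Matrix.cons_val_one, Matrix.head_cons, Matrix.cons_val_two, Matrix.tail_cons, Matrix.vecHead, Matrix.vecTail]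
lemma ksO_13_15 : ksM13 * ksM15 = 0 := by
  ext a b; fin_cases a <;> fin_cases b <;> norm_num [ksM13, ksM15, Matrix.mul_apply, Fin.sum_univ_three, Matrix.cons_val_zero, Matrix.cons_val_one, Matrix.head_cons, Matrix.cons_val_two, Matrix.tail_cons, Matrix.vecHead, Matrix.vecTail]
lemma ksO_13_20 : ksM13 * ksM20 = 0 := by
  ext a b; fin_cases a <;> fin_cases b <;> norm_num [ksM13, ksM20, Matrix.mul_apply, Fin.sum_univ_three, Matrix.cons_val_zero, Matrix.cons_val_one, Matrix.head_cons, Matrix.cons_val_two, Matrix.tail_cons, Matrix.vecHead, Matrix.vecTail]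
lemma ksO_13_24 : ksM13 * ksM24 = 0 := by
  ext a b; fin_cases a <;> fin_cases b <;> norm_num [ksM13, ksM24, Matrix.mul_apply, Fin.sum_univ_three, Matrix.cons_val_zero, Matrix.cons_val_one, Matrix.head_cons, Matrix.cons_val_two, Matrix.tail_cons, Matrix.vecHead, Matrix.vecTail]
lemma ksO_15_18 : ksM15 * ksM18 = 0 := by
  ext a b; fin_cases a <;> fin_cases b <;> norm_num [ksM15, ksM18, Matrix.mul_apply, Fin.sum_univ_three, Matrix.cons_val_zero, Matrix.cons_val_one, Matrix.head_cons, Matrix.cons_val_two, Matrix.tail_cons, Matrix.vecHead, Matrix.vecTail]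
lemma ksO_15_22 : ksM15 * ksM22 = 0 := by
  ext a b; fin_cases a <;> fin_cases b <;> norm_num [ksM15, ksM22, Matrix.mul_apply, Fin.sum_univ_three, Matrix.cons_val_zero, Matrix.cons_val_one, Matrix.head_cons, Matrix.cons_val_two, Matrix.tail_cons, Matrix.vecHead, Matrix.vecTail]
lemma ksO_16_25 : ksM16 * ksM25 = 0 := by
  ext a b; fin_cases a <;> fin_cases b <;> norm_num [ksM16, ksM25, Matrix.mul_apply, Fin.sum_univ_three, Matrix.cons_val_zero, Matrix.cons_val_one, Matrix.head_cons, Matrix.cons_val_two, Matrix.tail_cons, Matrix.vecHead, Matrix.vecTail]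
lemma ksO_16_28 : ksM16 * ksM28 = 0 := by
  ext a b; fin_cases a <;> fin_cases b <;> norm_num [ksM16, ksM28, Matrix.mul_apply, Fin.sum_univ_three, Matrix.cons_val_zero, Matrix.cons_val_one, Matrix.head_cons, Matrix.cons_val_two, Matrix.tail_cons, Matrix.vecHead, Matrix.vecTail]
lemma ksO_16_30 : ksM16 * ksM30 = 0 := by
  ext a b; fin_cases a <;> fin_cases b <;> norm_num [ksM16, ksM30, Matrix.mul_apply, Fin.sum_univ_three, Matrix.cons_val_zero, Matrix.cons_val_one, Matrix.head_cons, Matrix.cons_val_two, Matrix.tail_cons, Matrix.vecHead, Matrix.vecTail]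
lemma ksO_17_20 : ksM17 * ksM20 = 0 := by
  ext a b; fin_cases a <;> fin_cases b <;> norm_num [ksM17, ksM20, Matrix.mul_apply, Fin.sum_univ_three, Matrix.cons_val_zero, Matrix.cons_val_one, Matrix.head_cons, Matrix.cons_val_two, Matrix.tail_cons, Matrix.vecHead, Matrix.vecTail]
lemma ksO_17_29 : ksM17 * ksM29 = 0 := by
  ext a b; fin_cases a <;> fin_cases b <;> norm_num [ksM17, ksM29, Matrix.mul_apply, Fin.sum_univ_three, Matrix.cons_val_zero, Matrix.cons_val_one, Matrix.head_cons, Matrix.cons_val_two, Matrix.tail_cons, Matrix.vecHead, Matrix.vecTail]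
lemma ksO_18_21 : ksM18 * ksM21 = 0 := by
  ext a b; fin_cases a <;> fin_cases b <;> norm_num [ksM18, ksM21, Matrix.mul_apply, Fin.sum_univ_three, Matrix.cons_val_zero, Matrix.cons_val_one, Matrix.head_cons, Matrix.cons_val_two, Matrix.tail_cons, Matrix.vecHead, Matrix.vecTail]
lemma ksO_18_27 : ksM18 * ksM27 = 0 := by
  ext a b; fin_cases a <;> fin_cases b <;> norm_num [ksM18, ksM27, Matrix.mul_apply, Fin.sum_univ_three, Matrix.cons_val_zero, Matrix.cons_val_one, Matrix.head_cons, Matrix.cons_val_two, Matrix.tail_cons, Matrix.vecHead, Matrix.vecTail]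
lemma ksO_20_25 : ksM20 * ksM25 = 0 := by
  ext a b; fin_cases a <;> fin_cases b <;> norm_num [ksM20, ksM25, Matrix.mul_apply, Fin.sum_univ_three, Matrix.cons_val_zero, Matrix.cons_val_one, Matrix.head_cons, Matrix.cons_val_two, Matrix.tail_cons, Matrix.vecHead, Matrix.vecTail]
lemma ksO_21_28 : ksM21 * ksM28 = 0 := by
  ext a b; fin_cases a <;> fin_cases b <;> norm_num [ksM21, ksM28, Matrix.mul_apply, Fin.sum_univ_three, Matrix.cons_val_zero, Matrix.cons_val_one, Matrix.head_cons, Matrix.cons_val_two, Matrix.tail_cons, Matrix.vecHead, Matrix.vecTail]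
lemma ksO_22_26 : ksM22 * ksM26 = 0 := by
  ext a b; fin_cases a <;> fin_cases b <;> norm_num [ksM22, ksM26, Matrix.mul_apply, Fin.sum_univ_three, Matrix.cons_val_zero, Matrix.cons_val_one, Matrix.head_cons, Matrix.cons_val_two, Matrix.tail_cons, Matrix.vecHead, Matrix.vecTail]
lemma ksO_23_25 : ksM23 * ksM25 = 0 := by
  ext a b; fin_cases a <;> fin_cases b <;> norm_num [ksM23, ksM25, Matrix.mul_apply, Fin.sum_univ_three, Matrix.cons_val_zero, Matrix.cons_val_one, Matrix.head_cons, Matrix.cons_val_two, Matrix.tail_cons, Matrix.vecHead, Matrix.vecTail]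
lemma ksO_23_26 : ksM23 * ksM26 = 0 := by
  ext a b; fin_cases a <;> fin_cases b <;> norm_num [ksM23, ksM26, Matrix.mul_apply, Fin.sum_univ_three, Matrix.cons_val_zero, Matrix.cons_val_one, Matrix.head_cons, Matrix.cons_val_two, Matrix.tail_cons, Matrix.vecHead, Matrix.vecTail]
lemma ksO_23_27 : ksM23 * ksM27 = 0 := by
  ext a b; fin_cases a <;> fin_cases b <;> norm_num [ksM23, ksM27, Matrix.mul_apply, Fin.sum_univ_three, Matrix.cons_val_zero, Matrix.cons_val_one, Matrix.head_cons, Matrix.cons_val_two, Matrix.tail_cons, Matrix.vecHead, Matrix.vecTail]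
lemma ksO_24_26 : ksM24 * ksM26 = 0 := by
  ext a b; fin_cases a <;> fin_cases b <;> norm_num [ksM24, ksM26, Matrix.mul_apply, Fin.sum_univ_three, Matrix.cons_val_zero, Matrix.cons_val_one, Matrix.head_cons, Matrix.cons_val_two, Matrix.tail_cons, Matrix.vecHead, Matrix.vecTail]
lemma ksS_0_2_14 : ksM0 + ksM2 + ksM14 = 1 := by
  ext a b; fin_cases a <;> fin_cases b <;> norm_num [ksM0, ksM2, ksM14, Matrix.one_apply, Fin.ext_iff, Matrix.cons_val_zero, Matrix.cons_val_one, Matrix.head_cons, Matrix.cons_val_two, Matrix.tail_cons, Matrix.vecHead, Matrix.vecTail]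
lemma ksS_0_5_31 : ksM0 + ksM5 + ksM31 = 1 := by
  ext a b; fin_cases a <;> fin_cases b <;> norm_num [ksM0, ksM5, ksM31, Matrix.one_apply, Fin.ext_iff, Matrix.cons_val_zero, Matrix.cons_val_one, Matrix.head_cons, Matrix.cons_val_two, Matrix.tail_cons, Matrix.vecHead, Matrix.vecTail]
lemma ksS_0_9_19 : ksM0 + ksM9 + ksM19 = 1 := by
  ext a b; fin_cases a <;> fin_cases b <;> norm_num [ksM0, ksM9, ksM19, Matrix.one_apply, Fin.ext_iff, Matrix.cons_val_zero, Matrix.cons_val_one, Matrix.head_cons, Matrix.cons_val_two, Matrix.tail_cons, Matrix.vecHead, Matrix.vecTail]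
lemma ksS_0_23_26 : ksM0 + ksM23 + ksM26 = 1 := by
  ext a b; fin_cases a <;> fin_cases b <;> norm_num [ksM0, ksM23, ksM26, Matrix.one_apply, Fin.ext_iff, Matrix.cons_val_zero, Matrix.cons_val_one, Matrix.head_cons, Matrix.cons_val_two, Matrix.tail_cons, Matrix.vecHead, Matrix.vecTail]
lemma ksS_1_3_14 : ksM1 + ksM3 + ksM14 = 1 := by
  ext a b; fin_cases a <;> fin_cases b <;> norm_num [ksM1, ksM3, ksM14, Matrix.one_apply, Fin.ext_iff, Matrix.cons_val_zero, Matrix.cons_val_one, Matrix.head_cons, Matrix.cons_val_two, Matrix.tail_cons, Matrix.vecHead, Matrix.vecTail]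
lemma ksS_1_8_32 : ksM1 + ksM8 + ksM32 = 1 := by
  ext a b; fin_cases a <;> fin_cases b <;> norm_num [ksM1, ksM8, ksM32, Matrix.one_apply, Fin.ext_iff, Matrix.cons_val_zero, Matrix.cons_val_one, Matrix.head_cons, Matrix.cons_val_two, Matrix.tail_cons, Matrix.vecHead, Matrix.vecTail]
lemma ksS_1_20_25 : ksM1 + ksM20 + ksM25 = 1 := by
  ext a b; fin_cases a <;> fin_cases b <;> norm_num [ksM1, ksM20, ksM25, Matrix.one_apply, Fin.ext_iff, Matrix.cons_val_zero, Matrix.cons_val_one, Matrix.head_cons, Matrix.cons_val_two, Matrix.tail_cons, Matrix.vecHead, Matrix.vecTail]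
lemma ksS_2_12_29 : ksM2 + ksM12 + ksM29 = 1 := by
  ext a b; fin_cases a <;> fin_cases b <;> norm_num [ksM2, ksM12, ksM29, Matrix.one_apply, Fin.ext_iff, Matrix.cons_val_zero, Matrix.cons_val_one, Matrix.head_cons, Matrix.cons_val_two, Matrix.tail_cons, Matrix.vecHead, Matrix.vecTail]
lemma ksS_2_13_15 : ksM2 + ksM13 + ksM15 = 1 := by
  ext a b; fin_cases a <;> fin_cases b <;> norm_num [ksM2, ksM13, ksM15, Matrix.one_apply, Fin.ext_iff, Matrix.cons_val_zero, Matrix.cons_val_one, Matrix.head_cons, Matrix.cons_val_two, Matrix.tail_cons, Matrix.vecHead, Matrix.vecTail]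
lemma ksS_2_16_28 : ksM2 + ksM16 + ksM28 = 1 := by
  ext a b; fin_cases a <;> fin_cases b <;> norm_num [ksM2, ksM16, ksM28, Matrix.one_apply, Fin.ext_iff, Matrix.cons_val_zero, Matrix.cons_val_one, Matrix.head_cons, Matrix.cons_val_two, Matrix.tail_cons, Matrix.vecHead, Matrix.vecTail]
lemma ksS_3_10_30 : ksM3 + ksM10 + ksM30 = 1 := by
  ext a b; fin_cases a <;> fin_cases b <;> norm_num [ksM3, ksM10, ksM30, Matrix.one_apply, Fin.ext_iff, Matrix.cons_val_zero, Matrix.cons_val_one, Matrix.head_cons, Matrix.cons_val_two, Matrix.tail_cons, Matrix.vecHead, Matrix.vecTail]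
lemma ksS_3_18_27 : ksM3 + ksM18 + ksM27 = 1 := by
  ext a b; fin_cases a <;> fin_cases b <;> norm_num [ksM3, ksM18, ksM27, Matrix.one_apply, Fin.ext_iff, Matrix.cons_val_zero, Matrix.cons_val_one, Matrix.head_cons, Matrix.cons_val_two, Matrix.tail_cons, Matrix.vecHead, Matrix.vecTail]
lemma ksS_4_15_18 : ksM4 + ksM15 + ksM18 = 1 := by
  ext a b; fin_cases a <;> fin_cases b <;> norm_num [ksM4, ksM15, ksM18, Matrix.one_apply, Fin.ext_iff, Matrix.cons_val_zero, Matrix.cons_val_one, Matrix.head_cons, Matrix.cons_val_two, Matrix.tail_cons, Matrix.vecHead, Matrix.vecTail]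
lemma ksS_6_13_20 : ksM6 + ksM13 + ksM20 = 1 := by
  ext a b; fin_cases a <;> fin_cases b <;> norm_num [ksM6, ksM13, ksM20, Matrix.one_apply, Fin.ext_iff, Matrix.cons_val_zero, Matrix.cons_val_one, Matrix.head_cons, Matrix.cons_val_two, Matrix.tail_cons, Matrix.vecHead, Matrix.vecTail]
lemma ksS_7_10_19 : ksM7 + ksM10 + ksM19 = 1 := by
  ext a b; fin_cases a <;> fin_cases b <;> norm_num [ksM7, ksM10, ksM19, Matrix.one_apply, Fin.ext_iff, Matrix.cons_val_zero, Matrix.cons_val_one, Matrix.head_cons, Matrix.cons_val_two, Matrix.tail_cons, Matrix.vecHead, Matrix.vecTail]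
lemma ksS_8_11_19 : ksM8 + ksM11 + ksM19 = 1 := by
  ext a b; fin_cases a <;> fin_cases b <;> norm_num [ksM8, ksM11, ksM19, Matrix.one_apply, Fin.ext_iff, Matrix.cons_val_zero, Matrix.cons_val_one, Matrix.head_cons, Matrix.cons_val_two, Matrix.tail_cons, Matrix.vecHead, Matrix.vecTail]
lemma ksS_8_15_22 : ksM8 + ksM15 + ksM22 = 1 := by
  ext a b; fin_cases a <;> fin_cases b <;> norm_num [ksM8, ksM15, ksM22, Matrix.one_apply, Fin.ext_iff, Matrix.cons_val_zero, Matrix.cons_val_one, Matrix.head_cons, Matrix.cons_val_two, Matrix.tail_cons, Matrix.vecHead, Matrix.vecTail]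
lemma ksS_9_17_20 : ksM9 + ksM17 + ksM20 = 1 := by
  ext a b; fin_cases a <;> fin_cases b <;> norm_num [ksM9, ksM17, ksM20, Matrix.one_apply, Fin.ext_iff, Matrix.cons_val_zero, Matrix.cons_val_one, Matrix.head_cons, Matrix.cons_val_two, Matrix.tail_cons, Matrix.vecHead, Matrix.vecTail]
lemma ksS_9_18_21 : ksM9 + ksM18 + ksM21 = 1 := by
  ext a b; fin_cases a <;> fin_cases b <;> norm_num [ksM9, ksM18, ksM21, Matrix.one_apply, Fin.ext_iff, Matrix.cons_val_zero, Matrix.cons_val_one, Matrix.head_cons, Matrix.cons_val_two, Matrix.tail_cons, Matrix.vecHead, Matrix.vecTail]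
lemma ksS_10_13_24 : ksM10 + ksM13 + ksM24 = 1 := by
  ext a b; fin_cases a <;> fin_cases b <;> norm_num [ksM10, ksM13, ksM24, Matrix.one_apply, Fin.ext_iff, Matrix.cons_val_zero, Matrix.cons_val_one, Matrix.head_cons, Matrix.cons_val_two, Matrix.tail_cons, Matrix.vecHead, Matrix.vecTail]


/-- The Kochen–Specker theorem, partial Boolean algebra form: for `n ≥ 3`, any morphism of
partial Boolean algebras from the projections of `M_n(ℂ)` to a (total) Boolean algebra `B`
forces `B` to be trivial. -/
theorem kochenSpecker_boolean (n : ℕ) (hn : 3 ≤ n) (B : Type*) [BooleanAlgebra B]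
    (f : {p : Matrix (Fin n) (Fin n) ℂ // p * p = p ∧ pᴴ = p} → B)
    (hf0 : ∀ h : (0 : Matrix (Fin n) (Fin n) ℂ) * 0 = 0 ∧ (0 : Matrix (Fin n) (Fin n) ℂ)ᴴ = 0,
      f ⟨0, h⟩ = ⊥)
    (hf1 : ∀ h : (1 : Matrix (Fin n) (Fin n) ℂ) * 1 = 1 ∧ (1 : Matrix (Fin n) (Fin n) ℂ)ᴴ = 1,
      f ⟨1, h⟩ = ⊤)
    (hfc : ∀ (p : Matrix (Fin n) (Fin n) ℂ) (hp : p * p = p ∧ pᴴ = p)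
      (h' : (1 - p) * (1 - p) = 1 - p ∧ (1 - p)ᴴ = 1 - p),
      f ⟨1 - p, h'⟩ = (f ⟨p, hp⟩)ᶜ)
    (hfm : ∀ (p q : Matrix (Fin n) (Fin n) ℂ) (hp : p * p = p ∧ pᴴ = p)
      (hq : q * q = q ∧ qᴴ = q), p * q = q * p →
      ∀ h' : (p * q) * (p * q) = p * q ∧ (p * q)ᴴ = p * q,
      f ⟨p * q, h'⟩ = f ⟨p, hp⟩ ⊓ f ⟨q, hq⟩)
    (hfj : ∀ (p q : Matrix (Fin n) (Fin n) ℂ) (hp : p * p = p ∧ pᴴ = p)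
      (hq : q * q = q ∧ qᴴ = q), p * q = q * p →
      ∀ h' : (p + q - p * q) * (p + q - p * q) = p + q - p * q ∧
        (p + q - p * q)ᴴ = p + q - p * q,
      f ⟨p + q - p * q, h'⟩ = f ⟨p, hp⟩ ⊔ f ⟨q, hq⟩) :
    (⊥ : B) = ⊤ := by
  by_contra hbt
  obtain ⟨g, hgtop, hgbot, hginf, hgsup⟩ := KS.exists_two_valued B hbt
  obtain ⟨i0, hi0⟩ := KS.exists_true_dd f hf0 hf1 hfj g hgtop hgbot hgsup
  have hcard : 1 < (Finset.univ.erase i0).card := by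
    rw [Finset.card_erase_of_mem (Finset.mem_univ _), Finset.card_univ, Fintype.card_fin]
    omega
  obtain ⟨j1, hj1, j2, hj2, hj12⟩ := Finset.one_lt_card.1 hcard
  have hj1' : j1 ≠ i0 := Finset.ne_of_mem_erase hj1
  have hj2' : j2 ≠ i0 := Finset.ne_of_mem_erase hj2
  let ι : Fin 3 → Fin n := ![i0, j1, j2]
  have hι : Function.Injective ι := by
    intro a b hab
    fin_cases a <;> fin_cases b <;>
      simp only [ι, Matrix.cons_val_zero, Matrix.cons_val_one, Matrix.head_cons,
        Matrix.cons_val_two, Matrix.tail_cons, Fin.mk_zero, Fin.mk_one] at hab ⊢ <;>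
      first
        | rfl
        | exact absurd hab (Ne.symm hj1')
        | exact absurd hab hj1'
        | exact absurd hab (Ne.symm hj2')
        | exact absurd hab hj2'
        | exact absurd hab hj12
        | exact absurd hab (Ne.symm hj12)
  have hi0' : g (f ⟨KS.dd (ι 0), KS.dd_proj (ι 0)⟩) := hi0
  have hg1 := KS.g_pj_one f hfm g hginf ι hι hi0'

  have hp_0_2 := KS.pair_lemma f hf0 hfm g hgbot hginf ι hι ksM0 ksM2 ksP0 ksP2 ksO_0_2
  have hp_0_9 := KS.pair_lemma f hf0 hfm g hgbot hginf ι hι ksM0 ksM9 ksP0 ksP9 ksO_0_9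
  have hp_0_14 := KS.pair_lemma f hf0 hfm g hgbot hginf ι hι ksM0 ksM14 ksP0 ksP14 ksO_0_14
  have hp_0_19 := KS.pair_lemma f hf0 hfm g hgbot hginf ι hι ksM0 ksM19 ksP0 ksP19 ksO_0_19
  have hp_1_3 := KS.pair_lemma f hf0 hfm g hgbot hginf ι hι ksM1 ksM3 ksP1 ksP3 ksO_1_3
  have hp_1_8 := KS.pair_lemma f hf0 hfm g hgbot hginf ι hι ksM1 ksM8 ksP1 ksP8 ksO_1_8
  have hp_1_14 := KS.pair_lemma f hf0 hfm g hgbot hginf ι hι ksM1 ksM14 ksP1 ksP14 ksO_1_14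
  have hp_1_20 := KS.pair_lemma f hf0 hfm g hgbot hginf ι hι ksM1 ksM20 ksP1 ksP20 ksO_1_20
  have hp_2_13 := KS.pair_lemma f hf0 hfm g hgbot hginf ι hι ksM2 ksM13 ksP2 ksP13 ksO_2_13
  have hp_2_14 := KS.pair_lemma f hf0 hfm g hgbot hginf ι hι ksM2 ksM14 ksP2 ksP14 ksO_2_14
  have hp_2_15 := KS.pair_lemma f hf0 hfm g hgbot hginf ι hι ksM2 ksM15 ksP2 ksP15 ksO_2_15
  have hp_3_10 := KS.pair_lemma f hf0 hfm g hgbot hginf ι hι ksM3 ksM10 ksP3 ksP10 ksO_3_10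
  have hp_3_14 := KS.pair_lemma f hf0 hfm g hgbot hginf ι hι ksM3 ksM14 ksP3 ksP14 ksO_3_14
  have hp_3_18 := KS.pair_lemma f hf0 hfm g hgbot hginf ι hι ksM3 ksM18 ksP3 ksP18 ksO_3_18
  have hp_4_31 := KS.pair_lemma f hf0 hfm g hgbot hginf ι hι ksM4 ksM31 ksP4 ksP31 ksO_4_31
  have hp_5_30 := KS.pair_lemma f hf0 hfm g hgbot hginf ι hι ksM5 ksM30 ksP5 ksP30 ksO_5_30
  have hp_5_32 := KS.pair_lemma f hf0 hfm g hgbot hginf ι hι ksM5 ksM32 ksP5 ksP32 ksO_5_32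
  have hp_6_31 := KS.pair_lemma f hf0 hfm g hgbot hginf ι hι ksM6 ksM31 ksP6 ksP31 ksO_6_31
  have hp_7_29 := KS.pair_lemma f hf0 hfm g hgbot hginf ι hι ksM7 ksM29 ksP7 ksP29 ksO_7_29
  have hp_8_15 := KS.pair_lemma f hf0 hfm g hgbot hginf ι hι ksM8 ksM15 ksP8 ksP15 ksO_8_15
  have hp_8_19 := KS.pair_lemma f hf0 hfm g hgbot hginf ι hι ksM8 ksM19 ksP8 ksP19 ksO_8_19
  have hp_9_18 := KS.pair_lemma f hf0 hfm g hgbot hginf ι hι ksM9 ksM18 ksP9 ksP18 ksO_9_18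
  have hp_9_20 := KS.pair_lemma f hf0 hfm g hgbot hginf ι hι ksM9 ksM20 ksP9 ksP20 ksO_9_20
  have hp_10_13 := KS.pair_lemma f hf0 hfm g hgbot hginf ι hι ksM10 ksM13 ksP10 ksP13 ksO_10_13
  have hp_10_19 := KS.pair_lemma f hf0 hfm g hgbot hginf ι hι ksM10 ksM19 ksP10 ksP19 ksO_10_19
  have hp_11_28 := KS.pair_lemma f hf0 hfm g hgbot hginf ι hι ksM11 ksM28 ksP11 ksP28 ksO_11_28
  have hp_12_27 := KS.pair_lemma f hf0 hfm g hgbot hginf ι hι ksM12 ksM27 ksP12 ksP27 ksO_12_27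
  have hp_12_32 := KS.pair_lemma f hf0 hfm g hgbot hginf ι hι ksM12 ksM32 ksP12 ksP32 ksO_12_32
  have hp_13_15 := KS.pair_lemma f hf0 hfm g hgbot hginf ι hι ksM13 ksM15 ksP13 ksP15 ksO_13_15
  have hp_13_20 := KS.pair_lemma f hf0 hfm g hgbot hginf ι hι ksM13 ksM20 ksP13 ksP20 ksO_13_20
  have hp_15_18 := KS.pair_lemma f hf0 hfm g hgbot hginf ι hι ksM15 ksM18 ksP15 ksP18 ksO_15_18
  have hp_16_25 := KS.pair_lemma f hf0 hfm g hgbot hginf ι hι ksM16 ksM25 ksP16 ksP25 ksO_16_25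
  have hp_16_30 := KS.pair_lemma f hf0 hfm g hgbot hginf ι hι ksM16 ksM30 ksP16 ksP30 ksO_16_30
  have hp_17_29 := KS.pair_lemma f hf0 hfm g hgbot hginf ι hι ksM17 ksM29 ksP17 ksP29 ksO_17_29
  have hp_21_28 := KS.pair_lemma f hf0 hfm g hgbot hginf ι hι ksM21 ksM28 ksP21 ksP28 ksO_21_28
  have hp_22_26 := KS.pair_lemma f hf0 hfm g hgbot hginf ι hι ksM22 ksM26 ksP22 ksP26 ksO_22_26
  have hp_23_25 := KS.pair_lemma f hf0 hfm g hgbot hginf ι hι ksM23 ksM25 ksP23 ksP25 ksO_23_25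
  have hp_23_27 := KS.pair_lemma f hf0 hfm g hgbot hginf ι hι ksM23 ksM27 ksP23 ksP27 ksO_23_27
  have hp_24_26 := KS.pair_lemma f hf0 hfm g hgbot hginf ι hι ksM24 ksM26 ksP24 ksP26 ksO_24_26
  have ht_0_2_14 := KS.triple_lemma f hfj g hgsup ι hι hg1 ksM0 ksM2 ksM14 ksP0 ksP2 ksP14 ksO_0_2 ksO_0_14 ksO_2_14 ksS_0_2_14
  have ht_0_5_31 := KS.triple_lemma f hfj g hgsup ι hι hg1 ksM0 ksM5 ksM31 ksP0 ksP5 ksP31 ksO_0_5 ksO_0_31 ksO_5_31 ksS_0_5_31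
  have ht_0_9_19 := KS.triple_lemma f hfj g hgsup ι hι hg1 ksM0 ksM9 ksM19 ksP0 ksP9 ksP19 ksO_0_9 ksO_0_19 ksO_9_19 ksS_0_9_19
  have ht_0_23_26 := KS.triple_lemma f hfj g hgsup ι hι hg1 ksM0 ksM23 ksM26 ksP0 ksP23 ksP26 ksO_0_23 ksO_0_26 ksO_23_26 ksS_0_23_26
  have ht_1_3_14 := KS.triple_lemma f hfj g hgsup ι hι hg1 ksM1 ksM3 ksM14 ksP1 ksP3 ksP14 ksO_1_3 ksO_1_14 ksO_3_14 ksS_1_3_14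
  have ht_1_8_32 := KS.triple_lemma f hfj g hgsup ι hι hg1 ksM1 ksM8 ksM32 ksP1 ksP8 ksP32 ksO_1_8 ksO_1_32 ksO_8_32 ksS_1_8_32
  have ht_1_20_25 := KS.triple_lemma f hfj g hgsup ι hι hg1 ksM1 ksM20 ksM25 ksP1 ksP20 ksP25 ksO_1_20 ksO_1_25 ksO_20_25 ksS_1_20_25
  have ht_2_12_29 := KS.triple_lemma f hfj g hgsup ι hι hg1 ksM2 ksM12 ksM29 ksP2 ksP12 ksP29 ksO_2_12 ksO_2_29 ksO_12_29 ksS_2_12_29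
  have ht_2_13_15 := KS.triple_lemma f hfj g hgsup ι hι hg1 ksM2 ksM13 ksM15 ksP2 ksP13 ksP15 ksO_2_13 ksO_2_15 ksO_13_15 ksS_2_13_15
  have ht_2_16_28 := KS.triple_lemma f hfj g hgsup ι hι hg1 ksM2 ksM16 ksM28 ksP2 ksP16 ksP28 ksO_2_16 ksO_2_28 ksO_16_28 ksS_2_16_28
  have ht_3_10_30 := KS.triple_lemma f hfj g hgsup ι hι hg1 ksM3 ksM10 ksM30 ksP3 ksP10 ksP30 ksO_3_10 ksO_3_30 ksO_10_30 ksS_3_10_30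
  have ht_3_18_27 := KS.triple_lemma f hfj g hgsup ι hι hg1 ksM3 ksM18 ksM27 ksP3 ksP18 ksP27 ksO_3_18 ksO_3_27 ksO_18_27 ksS_3_18_27
  have ht_4_15_18 := KS.triple_lemma f hfj g hgsup ι hι hg1 ksM4 ksM15 ksM18 ksP4 ksP15 ksP18 ksO_4_15 ksO_4_18 ksO_15_18 ksS_4_15_18
  have ht_6_13_20 := KS.triple_lemma f hfj g hgsup ι hι hg1 ksM6 ksM13 ksM20 ksP6 ksP13 ksP20 ksO_6_13 ksO_6_20 ksO_13_20 ksS_6_13_20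
  have ht_7_10_19 := KS.triple_lemma f hfj g hgsup ι hι hg1 ksM7 ksM10 ksM19 ksP7 ksP10 ksP19 ksO_7_10 ksO_7_19 ksO_10_19 ksS_7_10_19
  have ht_8_11_19 := KS.triple_lemma f hfj g hgsup ι hι hg1 ksM8 ksM11 ksM19 ksP8 ksP11 ksP19 ksO_8_11 ksO_8_19 ksO_11_19 ksS_8_11_19
  have ht_8_15_22 := KS.triple_lemma f hfj g hgsup ι hι hg1 ksM8 ksM15 ksM22 ksP8 ksP15 ksP22 ksO_8_15 ksO_8_22 ksO_15_22 ksS_8_15_22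
  have ht_9_17_20 := KS.triple_lemma f hfj g hgsup ι hι hg1 ksM9 ksM17 ksM20 ksP9 ksP17 ksP20 ksO_9_17 ksO_9_20 ksO_17_20 ksS_9_17_20
  have ht_9_18_21 := KS.triple_lemma f hfj g hgsup ι hι hg1 ksM9 ksM18 ksM21 ksP9 ksP18 ksP21 ksO_9_18 ksO_9_21 ksO_18_21 ksS_9_18_21
  have ht_10_13_24 := KS.triple_lemma f hfj g hgsup ι hι hg1 ksM10 ksM13 ksM24 ksP10 ksP13 ksP24 ksO_10_13 ksO_10_24 ksO_13_24 ksS_10_13_24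

  rcases ht_0_2_14 with k1 | k1 | k1
  · -- case m0 true
    have k2 : ¬ _ := fun hh => hp_0_2 ⟨k1, hh⟩
    have k3 : ¬ _ := fun hh => hp_0_9 ⟨k1, hh⟩
    have k4 : ¬ _ := fun hh => hp_0_14 ⟨k1, hh⟩
    have k5 : ¬ _ := fun hh => hp_0_19 ⟨k1, hh⟩
    rcases ht_1_3_14 with k6 | k6 | k6
    · -- case m1 true
      have k7 : ¬ _ := fun hh => hp_1_3 ⟨k6, hh⟩
      have k8 : ¬ _ := fun hh => hp_1_8 ⟨k6, hh⟩
      have k9 : ¬ _ := fun hh => hp_1_20 ⟨k6, hh⟩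
      have k10 := (ht_8_11_19.resolve_left k8).resolve_right k5
      have k11 := (ht_9_17_20.resolve_left k3).resolve_right k9
      have k12 : ¬ _ := fun hh => hp_11_28 ⟨k10, hh⟩
      have k13 : ¬ _ := fun hh => hp_17_29 ⟨k11, hh⟩
      have k14 := (ht_2_12_29.resolve_left k2).resolve_right k13
      have k15 := (ht_2_16_28.resolve_left k2).resolve_right k12
      have k16 : ¬ _ := fun hh => hp_12_27 ⟨k14, hh⟩
      have k17 : ¬ _ := fun hh => hp_12_32 ⟨k14, hh⟩
      have k18 : ¬ _ := fun hh => hp_16_25 ⟨k15, hh⟩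
      have k19 : ¬ _ := fun hh => hp_16_30 ⟨k15, hh⟩
      have k20 := (ht_3_10_30.resolve_left k7).resolve_right k19
      have k21 := (ht_3_18_27.resolve_left k7).resolve_right k16
      have k22 : ¬ _ := fun hh => hp_10_13 ⟨k20, hh⟩
      have k23 : ¬ _ := fun hh => hp_15_18 ⟨hh, k21⟩
      exact k23 ((ht_2_13_15.resolve_left k2).resolve_left k22)
    · -- case m3 true
      have k24 : ¬ _ := fun hh => hp_1_3 ⟨hh, k6⟩
      have k25 : ¬ _ := fun hh => hp_3_10 ⟨k6, hh⟩
      have k26 : ¬ _ := fun hh => hp_3_18 ⟨k6, hh⟩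
      have k27 := ht_7_10_19.resolve_right (fun hh => hh.elim k25 k5)
      have k28 := (ht_9_18_21.resolve_left k3).resolve_left k26
      have k29 : ¬ _ := fun hh => hp_7_29 ⟨k27, hh⟩
      have k30 : ¬ _ := fun hh => hp_21_28 ⟨k28, hh⟩
      have k31 := (ht_2_12_29.resolve_left k2).resolve_right k29
      have k32 := (ht_2_16_28.resolve_left k2).resolve_right k30
      have k33 : ¬ _ := fun hh => hp_12_27 ⟨k31, hh⟩
      have k34 : ¬ _ := fun hh => hp_12_32 ⟨k31, hh⟩
      have k35 : ¬ _ := fun hh => hp_16_25 ⟨k32, hh⟩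
      have k36 : ¬ _ := fun hh => hp_16_30 ⟨k32, hh⟩
      have k37 := (ht_1_8_32.resolve_left k24).resolve_right k34
      have k38 := (ht_1_20_25.resolve_left k24).resolve_right k35
      have k39 : ¬ _ := fun hh => hp_8_15 ⟨k37, hh⟩
      have k40 : ¬ _ := fun hh => hp_13_20 ⟨hh, k38⟩
      exact k39 ((ht_2_13_15.resolve_left k2).resolve_left k40)
    · -- case m14 true
      exact k4 k6
  · -- case m2 true
    have k41 : ¬ _ := fun hh => hp_0_2 ⟨hh, k1⟩
    have k42 : ¬ _ := fun hh => hp_2_13 ⟨k1, hh⟩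
    have k43 : ¬ _ := fun hh => hp_2_14 ⟨k1, hh⟩
    have k44 : ¬ _ := fun hh => hp_2_15 ⟨k1, hh⟩
    rcases ht_0_5_31 with k45 | k45 | k45
    · -- case m0 true
      exact k41 k45
    · -- case m5 true
      have k46 : ¬ _ := fun hh => hp_5_30 ⟨k45, hh⟩
      have k47 : ¬ _ := fun hh => hp_5_32 ⟨k45, hh⟩
      rcases ht_0_9_19 with k48 | k48 | k48
      · -- case m0 true
        exact k41 k48
      · -- case m9 true
        have k49 : ¬ _ := fun hh => hp_9_18 ⟨k48, hh⟩
        have k50 : ¬ _ := fun hh => hp_9_20 ⟨k48, hh⟩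
        have k51 := ht_4_15_18.resolve_right (fun hh => hh.elim k44 k49)
        have k52 := ht_6_13_20.resolve_right (fun hh => hh.elim k42 k50)
        have k53 : ¬ _ := fun hh => hp_4_31 ⟨k51, hh⟩
        rcases ht_0_23_26 with k54 | k54 | k54
        · -- case m0 true
          exact k41 k54
        · -- case m23 true
          have k55 : ¬ _ := fun hh => hp_23_25 ⟨k54, hh⟩
          have k56 : ¬ _ := fun hh => hp_23_27 ⟨k54, hh⟩
          have k57 := ht_1_20_25.resolve_right (fun hh => hh.elim k50 k55)
          have k58 := ht_3_18_27.resolve_right (fun hh => hh.elim k49 k56)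
          exact hp_1_3 ⟨k57, k58⟩
        · -- case m26 true
          have k59 : ¬ _ := fun hh => hp_22_26 ⟨hh, k54⟩
          have k60 : ¬ _ := fun hh => hp_24_26 ⟨hh, k54⟩
          have k61 := ht_8_15_22.resolve_right (fun hh => hh.elim k44 k59)
          have k62 := ht_10_13_24.resolve_right (fun hh => hh.elim k42 k60)
          have k63 : ¬ _ := fun hh => hp_1_8 ⟨hh, k61⟩
          have k64 : ¬ _ := fun hh => hp_3_10 ⟨hh, k62⟩
          have k65 : ¬ _ := fun hh => hp_8_19 ⟨k61, hh⟩
          exact k43 ((ht_1_3_14.resolve_left k63).resolve_left k64)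
      · -- case m19 true
        have k66 : ¬ _ := fun hh => hp_8_19 ⟨hh, k48⟩
        have k67 : ¬ _ := fun hh => hp_10_19 ⟨hh, k48⟩
        have k68 := ht_1_8_32.resolve_right (fun hh => hh.elim k66 k47)
        have k69 := ht_3_10_30.resolve_right (fun hh => hh.elim k67 k46)
        have k70 := (ht_8_15_22.resolve_left k66).resolve_left k44
        have k71 := (ht_10_13_24.resolve_left k67).resolve_left k42
        exact hp_1_3 ⟨k68, k69⟩
    · -- case m31 true
      have k72 : ¬ _ := fun hh => hp_4_31 ⟨hh, k45⟩
      have k73 : ¬ _ := fun hh => hp_6_31 ⟨hh, k45⟩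
      have k74 := (ht_4_15_18.resolve_left k72).resolve_left k44
      have k75 := (ht_6_13_20.resolve_left k73).resolve_left k42
      have k76 : ¬ _ := fun hh => hp_1_20 ⟨hh, k75⟩
      have k77 : ¬ _ := fun hh => hp_3_18 ⟨hh, k74⟩
      have k78 : ¬ _ := fun hh => hp_9_18 ⟨hh, k74⟩
      have k79 := (ht_0_9_19.resolve_left k41).resolve_left k78
      exact k43 ((ht_1_3_14.resolve_left k76).resolve_left k77)
  · -- case m14 true
    have k80 : ¬ _ := fun hh => hp_0_14 ⟨hh, k1⟩
    have k81 : ¬ _ := fun hh => hp_1_14 ⟨hh, k1⟩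
    have k82 : ¬ _ := fun hh => hp_2_14 ⟨hh, k1⟩
    have k83 : ¬ _ := fun hh => hp_3_14 ⟨hh, k1⟩
    rcases ht_0_5_31 with k84 | k84 | k84
    · -- case m0 true
      exact k80 k84
    · -- case m5 true
      have k85 : ¬ _ := fun hh => hp_5_30 ⟨k84, hh⟩
      have k86 : ¬ _ := fun hh => hp_5_32 ⟨k84, hh⟩
      have k87 := (ht_1_8_32.resolve_left k81).resolve_right k86
      have k88 := (ht_3_10_30.resolve_left k83).resolve_right k85
      have k89 : ¬ _ := fun hh => hp_8_15 ⟨k87, hh⟩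
      have k90 : ¬ _ := fun hh => hp_8_19 ⟨k87, hh⟩
      have k91 : ¬ _ := fun hh => hp_10_13 ⟨k88, hh⟩
      have k92 := (ht_0_9_19.resolve_left k80).resolve_right k90
      exact k89 ((ht_2_13_15.resolve_left k82).resolve_left k91)
    · -- case m31 true
      have k93 : ¬ _ := fun hh => hp_4_31 ⟨hh, k84⟩
      have k94 : ¬ _ := fun hh => hp_6_31 ⟨hh, k84⟩
      rcases ht_0_9_19 with k95 | k95 | k95
      · -- case m0 true
        exact k80 k95
      · -- case m9 true
        have k96 : ¬ _ := fun hh => hp_9_18 ⟨k95, hh⟩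
        have k97 : ¬ _ := fun hh => hp_9_20 ⟨k95, hh⟩
        have k98 := (ht_1_20_25.resolve_left k81).resolve_left k97
        have k99 := (ht_3_18_27.resolve_left k83).resolve_left k96
        have k100 := (ht_4_15_18.resolve_left k93).resolve_right k96
        have k101 := (ht_6_13_20.resolve_left k94).resolve_right k97
        have k102 : ¬ _ := fun hh => hp_8_15 ⟨hh, k100⟩
        have k103 : ¬ _ := fun hh => hp_10_13 ⟨hh, k101⟩
        have k104 : ¬ _ := fun hh => hp_12_27 ⟨hh, k99⟩
        exact hp_13_15 ⟨k101, k100⟩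
      · -- case m19 true
        have k105 : ¬ _ := fun hh => hp_8_19 ⟨hh, k95⟩
        have k106 : ¬ _ := fun hh => hp_10_19 ⟨hh, k95⟩
        have k107 := (ht_1_8_32.resolve_left k81).resolve_left k105
        have k108 := (ht_3_10_30.resolve_left k83).resolve_left k106
        have k109 : ¬ _ := fun hh => hp_5_30 ⟨hh, k108⟩
        have k110 : ¬ _ := fun hh => hp_12_32 ⟨hh, k107⟩
        have k111 : ¬ _ := fun hh => hp_16_30 ⟨hh, k108⟩
        have k112 := (ht_2_12_29.resolve_left k82).resolve_left k110
        have k113 := (ht_2_16_28.resolve_left k82).resolve_left k111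
        have k114 : ¬ _ := fun hh => hp_7_29 ⟨hh, k112⟩
        have k115 : ¬ _ := fun hh => hp_11_28 ⟨hh, k113⟩
        have k116 : ¬ _ := fun hh => hp_17_29 ⟨hh, k112⟩
        have k117 : ¬ _ := fun hh => hp_21_28 ⟨hh, k113⟩
        rcases ht_0_23_26 with k118 | k118 | k118
        · -- case m0 true
          exact k80 k118
        · -- case m23 true
          have k119 : ¬ _ := fun hh => hp_23_25 ⟨k118, hh⟩
          have k120 : ¬ _ := fun hh => hp_23_27 ⟨k118, hh⟩
          have k121 := (ht_1_20_25.resolve_left k81).resolve_right k119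
          have k122 := (ht_3_18_27.resolve_left k83).resolve_right k120
          have k123 : ¬ _ := fun hh => hp_9_18 ⟨hh, k122⟩
          have k124 : ¬ _ := fun hh => hp_13_20 ⟨hh, k121⟩
          have k125 : ¬ _ := fun hh => hp_15_18 ⟨hh, k122⟩
          exact k125 ((ht_2_13_15.resolve_left k82).resolve_left k124)
        · -- case m26 true
          have k126 : ¬ _ := fun hh => hp_22_26 ⟨hh, k118⟩
          have k127 : ¬ _ := fun hh => hp_24_26 ⟨hh, k118⟩
          have k128 := (ht_8_15_22.resolve_left k105).resolve_right k126
          have k129 := (ht_10_13_24.resolve_left k106).resolve_right k127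
          exact hp_13_15 ⟨k129, k128⟩
end

section
/- Let n ≥ 3 and let A be a commutative unital C*-algebra over ℂ. Suppose that for every commutative star-subalgebra S of M_n(ℂ) (a StarSubalgebra of Matrix (Fin n) (Fin n) ℂ whose elements pairwise commute) we are given a unital star-algebra homomorphism φ_S : S → A, such that whenever S ≤ T (with T also commutative) the restriction of φ_T to S equals φ_S. Then 0 = 1 in A (i.e., A is the trivial C*-algebra). -/
/-!
A character `χ` of `A` turns the compatible family into a `{0, 1}`-valued assignment on the
rank-one projections onto real lines: all projections of an orthogonal basis lie in one commutative
star subalgebra, so their values sum to `1`, and two orthogonal projections are never both sent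
to `1`. Restricted to three coordinates, one of them carrying the value `1`, this is a
Kochen–Specker colouring of `ℝ³`, which a set of 31 integer rays does not admit.
-/

open Matrix

section Gluing

open StarAlgebra

theorem StarAlgebra.mul_comm_of_mem_adjoin {R B : Type*} [CommSemiring R] [StarRing R]
    [Semiring B] [StarRing B] [Algebra R B] [StarModule R B] {s : Set B}
    (hcomm : ∀ a ∈ s, ∀ b ∈ s, a * b = b * a) (hsa : ∀ a ∈ s, IsSelfAdjoint a) :
    ∀ a ∈ adjoin R s, ∀ b ∈ adjoin R s, a * b = b * a := by
  have := isMulCommutative_adjoin R hcomm fun a ha b hb => by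
    rw [(hsa b hb).star_eq]
    exact hcomm a ha b hb
  exact fun a ha b hb => setLike_mul_comm ha hb

variable {B A : Type*} [Ring B] [StarRing B] [Algebra ℂ B] [StarModule ℂ B]
  [Semiring A] [Algebra ℂ A] [Star A]
  (φ : ∀ S : StarSubalgebra ℂ B, (∀ a ∈ S, ∀ b ∈ S, a * b = b * a) → S →⋆ₐ[ℂ] A)

def IsCompatibleFamily : Prop :=
  ∀ (S T : StarSubalgebra ℂ B) (hS : ∀ a ∈ S, ∀ b ∈ S, a * b = b * a)
    (hT : ∀ a ∈ T, ∀ b ∈ T, a * b = b * a) (hST : S ≤ T) (a : B) (ha : a ∈ S),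
    φ T hT ⟨a, hST ha⟩ = φ S hS ⟨a, ha⟩

open Classical in
noncomputable def glued (m : B) : A :=
  if hm : IsSelfAdjoint m then
    φ (adjoin ℂ {m}) (mul_comm_of_mem_adjoin (by simp) (by simpa using hm))
      ⟨m, self_mem_adjoin_singleton ℂ m⟩
  else 0

variable {φ} (hcompat : IsCompatibleFamily φ)
include hcompat

theorem glued_eq {S : StarSubalgebra ℂ B} (hS : ∀ a ∈ S, ∀ b ∈ S, a * b = b * a) {m : B}
    (hm : IsSelfAdjoint m) (hmS : m ∈ S) : glued φ m = φ S hS ⟨m, hmS⟩ := by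
  rw [glued, dif_pos hm]
  exact (hcompat _ S _ hS (adjoin_le (Set.singleton_subset_iff.2 hmS)) m _).symm

theorem glued_one : glued φ (1 : B) = 1 := by
  rw [glued_eq hcompat (mul_comm_of_mem_adjoin (s := {1}) (by simp) (by simp)) (.one B)
    (one_mem _)]
  exact map_one _

theorem glued_zero : glued φ (0 : B) = 0 := by
  rw [glued_eq hcompat (mul_comm_of_mem_adjoin (s := {0}) (by simp) (by simp)) (.zero B)
    (zero_mem _)]
  exact map_zero _

theorem glued_mul {m m' : B} (hm : IsSelfAdjoint m) (hm' : IsSelfAdjoint m')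
    (hcomm : Commute m m') : glued φ (m * m') = glued φ m * glued φ m' := by
  have hS := mul_comm_of_mem_adjoin (R := ℂ) (s := {m, m'})
    (by rintro a (rfl | rfl) b (rfl | rfl) <;> simp [hcomm.eq])
    (by rintro a (rfl | rfl) <;> assumption)
  have hmS : m ∈ adjoin ℂ {m, m'} := subset_adjoin ℂ _ (by simp)
  have hmS' : m' ∈ adjoin ℂ {m, m'} := subset_adjoin ℂ _ (by simp)
  rw [glued_eq hcompat hS hm hmS, glued_eq hcompat hS hm' hmS',
    glued_eq hcompat hS (hm.commute_iff hm' |>.1 hcomm) (mul_mem hmS hmS'), ← map_mul]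
  rfl

theorem glued_sum {ι : Type*} [Fintype ι] {p : ι → B} (hsa : ∀ i, IsSelfAdjoint (p i))
    (hcomm : ∀ i j, Commute (p i) (p j)) : glued φ (∑ i, p i) = ∑ i, glued φ (p i) := by
  have hS := mul_comm_of_mem_adjoin (R := ℂ) (s := Set.range p)
    (by rintro _ ⟨i, rfl⟩ _ ⟨j, rfl⟩; exact (hcomm i j).eq)
    (by rintro _ ⟨i, rfl⟩; exact hsa i)
  have hpS : ∀ i, p i ∈ adjoin ℂ (Set.range p) := fun i => subset_adjoin ℂ _ ⟨i, rfl⟩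
  rw [glued_eq hcompat hS (isSelfAdjoint_sum _ fun i _ => hsa i) (sum_mem fun i _ => hpS i)]
  simp_rw [glued_eq hcompat hS (hsa _) (hpS _), ← map_sum]
  congr 1
  ext
  simp

end Gluing

section LineProjection

variable {ι : Type*} [Fintype ι] [DecidableEq ι]

theorem sum_inv_dotProduct_self_smul_vecMulVec {K : Type*} [Field K] {b : ι → ι → K}
    (hb : ∀ i, b i ⬝ᵥ b i ≠ 0) (horth : Pairwise fun i j => b i ⬝ᵥ b j = 0) :
    ∑ i, (b i ⬝ᵥ b i)⁻¹ • vecMulVec (b i) (b i) = 1 := by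
  -- The rows `b i / (b i ⬝ᵥ b i)` form a left inverse of the matrix with columns `b i`; as a
  -- right inverse, its product with that matrix is the sum on the left.
  have hleft : of (fun i => (b i ⬝ᵥ b i)⁻¹ • b i) * (of b)ᵀ = 1 := by
    ext i j
    change ((b i ⬝ᵥ b i)⁻¹ • b i) ⬝ᵥ b j = (1 : Matrix ι ι K) i j
    rcases eq_or_ne i j with rfl | hij
    · simp [hb i]
    · simp [one_apply_ne hij, horth hij]
  ext k l
  rw [← mul_eq_one_comm.mp hleft]
  simp only [mul_apply, Matrix.sum_apply, Matrix.smul_apply, vecMulVec_apply, transpose_apply,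
    of_apply, Pi.smul_apply, smul_eq_mul]
  exact Finset.sum_congr rfl fun i _ => by ring

noncomputable def lineProj (w : ι → ℝ) : Matrix ι ι ℂ :=
  Complex.ofRealHom.mapMatrix ((w ⬝ᵥ w)⁻¹ • vecMulVec w w)

theorem isSelfAdjoint_lineProj (w : ι → ℝ) : IsSelfAdjoint (lineProj w) := by
  ext i j
  simp [lineProj, vecMulVec_apply, mul_comm]

theorem lineProj_mul_lineProj (v w : ι → ℝ) :
    lineProj v * lineProj w =
      Complex.ofRealHom.mapMatrix
        (((v ⬝ᵥ v)⁻¹ * (w ⬝ᵥ w)⁻¹ * (v ⬝ᵥ w)) • vecMulVec v w) := by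
  rw [lineProj, lineProj, ← map_mul, smul_mul_smul, vecMulVec_mul_vecMulVec, vecMulVec_smul,
    smul_smul]

theorem lineProj_mul_self {w : ι → ℝ} (hw : w ≠ 0) :
    lineProj w * lineProj w = lineProj w := by
  rw [lineProj_mul_lineProj, inv_mul_cancel_right₀ (dotProduct_self_eq_zero.not.2 hw), lineProj]

theorem lineProj_mul_eq_zero {v w : ι → ℝ} (h : v ⬝ᵥ w = 0) :
    lineProj v * lineProj w = 0 := by
  rw [lineProj_mul_lineProj, h, mul_zero, zero_smul, map_zero]

theorem sum_lineProj_eq_one {b : ι → ι → ℝ} (hb : ∀ i, b i ≠ 0)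
    (horth : Pairwise fun i j => b i ⬝ᵥ b j = 0) : ∑ i, lineProj (b i) = 1 := by
  simp only [lineProj, ← map_sum,
    sum_inv_dotProduct_self_smul_vecMulVec (fun i => dotProduct_self_eq_zero.not.2 (hb i)) horth,
    map_one]

end LineProjection

structure IsKSColouring {ι : Type*} [Fintype ι] (c : (ι → ℝ) → Prop) : Prop where
  not_and_of_dotProduct_eq_zero : ∀ v w : ι → ℝ, v ⬝ᵥ w = 0 → ¬ (c v ∧ c w)
  exists_of_pairwise_dotProduct_eq_zero : ∀ b : ι → ι → ℝ, (∀ i, b i ≠ 0) →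
    (Pairwise fun i j => b i ⬝ᵥ b j = 0) → ∃ i, c (b i)

section Colouring

variable {ι : Type*} [Fintype ι]

theorem isKSColouring_glued [DecidableEq ι] {A : Type*} [Semiring A] [Algebra ℂ A] [Star A]
    {φ : ∀ S : StarSubalgebra ℂ (Matrix ι ι ℂ),
      (∀ a ∈ S, ∀ b ∈ S, a * b = b * a) → S →⋆ₐ[ℂ] A}
    (hcompat : IsCompatibleFamily φ) (χ : A →+* ℂ) :
    IsKSColouring fun w : ι → ℝ => χ (glued φ (lineProj w)) = 1 where
  not_and_of_dotProduct_eq_zero v w h := by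
    have hvw := lineProj_mul_eq_zero h
    have hwv := lineProj_mul_eq_zero (dotProduct_comm v w ▸ h)
    have : χ (glued φ (lineProj v)) * χ (glued φ (lineProj w)) = 0 := by
      rw [← map_mul, ← glued_mul hcompat (isSelfAdjoint_lineProj v) (isSelfAdjoint_lineProj w)
        (hvw.trans hwv.symm), hvw, glued_zero hcompat, map_zero]
    rintro ⟨hv, hw⟩
    simp [hv, hw] at this
  exists_of_pairwise_dotProduct_eq_zero b hb horth := by
    have hsum : ∑ i, χ (glued φ (lineProj (b i))) = 1 := by
      rw [← map_sum, ← glued_sum hcompat (fun i => isSelfAdjoint_lineProj (b i)),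
        sum_lineProj_eq_one hb horth, glued_one hcompat, map_one]
      intro i j
      rcases eq_or_ne i j with rfl | hij
      · exact .refl _
      · exact (lineProj_mul_eq_zero (horth hij)).trans
          (lineProj_mul_eq_zero (horth hij.symm)).symm
    obtain ⟨i, -, hi⟩ := Finset.exists_ne_zero_of_sum_ne_zero (hsum ▸ one_ne_zero)
    have hidem : IsIdempotentElem (χ (glued φ (lineProj (b i)))) := by
      rw [IsIdempotentElem, ← map_mul, ← glued_mul hcompat (isSelfAdjoint_lineProj _)
        (isSelfAdjoint_lineProj _) rfl, lineProj_mul_self (hb i)]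
    exact ⟨i, (IsIdempotentElem.iff_eq_zero_or_one.1 hidem).resolve_left hi⟩

theorem extend_dotProduct_extend {κ : Type*} [Fintype κ] {e : ι → κ} (he : e.Injective)
    (x y : ι → ℝ) : Function.extend e x 0 ⬝ᵥ Function.extend e y 0 = x ⬝ᵥ y := by
  refine (Fintype.sum_of_injective e he _ _ (fun j hj => ?_) fun i => ?_).symm
  · simp [Function.extend_apply' _ _ _ (by simpa using hj)]
  · simp [he.extend_apply]

namespace IsKSColouring

theorem exists_single [DecidableEq ι] {c : (ι → ℝ) → Prop} (hc : IsKSColouring c) : ∃ k, c (Pi.single k 1) :=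
  hc.exists_of_pairwise_dotProduct_eq_zero _ (fun k => by simp)
    fun k l hkl => by simp [hkl.symm]

theorem comp_extend {κ : Type*} [Fintype κ] [DecidableEq κ] {c : (κ → ℝ) → Prop}
    (hc : IsKSColouring c) (e : ι ↪ κ) {i₀ : ι} (hi₀ : c (Pi.single (e i₀) 1)) :
    IsKSColouring fun x : ι → ℝ => c (Function.extend e x 0) where
  not_and_of_dotProduct_eq_zero x y h :=
    hc.not_and_of_dotProduct_eq_zero _ _ (by rwa [extend_dotProduct_extend e.injective])
  exists_of_pairwise_dotProduct_eq_zero b hb horth := by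
    -- Complete the vectors `b i`, placed on the coordinates `e i`, by the standard basis vectors
    -- of the remaining coordinates; none of the latter is coloured, being orthogonal to the
    -- coloured `Pi.single (e i₀) 1`.
    let b' : κ → κ → ℝ :=
      Function.extend e (fun i => Function.extend e (b i) 0) fun j => Pi.single j 1
    have hb'_mem (i : ι) : b' (e i) = Function.extend e (b i) 0 := e.injective.extend_apply _ _ _
    have hb'_notMem {j : κ} (hj : ∀ i, e i ≠ j) : b' j = Pi.single j 1 :=
      Function.extend_apply' _ _ _ fun ⟨i, hi⟩ => hj i hi
    have hextend {x : ι → ℝ} {j : κ} (hj : ∀ i, e i ≠ j) : Function.extend e x 0 j = 0 :=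
      Function.extend_apply' _ _ _ fun ⟨i, hi⟩ => hj i hi
    have hcases (j : κ) : (∃ i, e i = j) ∨ ∀ i, e i ≠ j := (em _).imp_right not_exists.1
    have hb'_ne (j : κ) : b' j ≠ 0 := by
      rcases hcases j with ⟨i, rfl⟩ | hj
      · rw [hb'_mem]
        intro h
        exact hb i (funext fun k => by simpa [e.injective.extend_apply] using congrFun h (e k))
      · simp [hb'_notMem hj]
    have horth' : Pairwise fun j j' => b' j ⬝ᵥ b' j' = 0 := by
      intro j j' hjj'
      rcases hcases j with ⟨i, rfl⟩ | hj <;> rcases hcases j' with ⟨i', rfl⟩ | hj'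
      · rw [hb'_mem, hb'_mem, extend_dotProduct_extend e.injective]
        exact horth (ne_of_apply_ne e hjj')
      · simp [hb'_mem, hb'_notMem hj', hextend hj']
      · simp [hb'_mem, hb'_notMem hj, hextend hj]
      · simp [hb'_notMem hj, hb'_notMem hj', hjj'.symm]
    obtain ⟨j, hj⟩ := hc.exists_of_pairwise_dotProduct_eq_zero b' hb'_ne horth'
    rcases hcases j with ⟨i, rfl⟩ | hj'
    · exact ⟨i, hb'_mem i ▸ hj⟩
    · refine absurd ⟨hb'_notMem hj' ▸ hj, hi₀⟩ (hc.not_and_of_dotProduct_eq_zero _ _ ?_)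
      simp [(hj' i₀).symm]

end IsKSColouring

end Colouring

def ksRay : Fin 31 → Fin 3 → ℤ :=
  ![![1, 0, 0], ![0, 1, 0], ![0, 0, 1], ![0, 1, 1], ![0, 1, -1], ![1, 0, 1],
    ![1, 0, -1], ![1, 1, 0], ![1, -1, 0], ![0, 1, 2], ![0, 1, -2], ![0, 2, 1],
    ![0, 2, -1], ![1, 0, 2], ![1, 0, -2], ![2, 0, 1], ![2, 0, -1], ![1, 2, 0],
    ![2, -1, 0], ![1, -1, 2], ![1, 1, 1], ![1, 1, -1], ![1, -1, 1], ![1, -1, -1],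
    ![1, 1, 2], ![1, 1, -2], ![1, -1, -2], ![1, 2, 1], ![1, 2, -1], ![2, -1, 1],
    ![2, -1, -1]]

def ksOrthogonalPairs : List (Fin 31 × Fin 31) :=
  [(0, 1), (0, 2), (0, 3), (0, 4), (0, 9), (0, 10), (0, 11), (0, 12), (1, 2), (1, 5), (1, 6),
  (1, 13), (1, 14), (1, 15), (1, 16), (2, 7), (2, 8), (2, 17), (2, 18), (3, 4), (3, 21), (3, 22),
  (3, 29), (4, 20), (4, 23), (4, 30), (5, 6), (5, 21), (5, 23), (5, 28), (6, 20), (6, 22), (6, 27),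
  (7, 8), (7, 19), (7, 22), (7, 23), (7, 26), (8, 20), (8, 21), (8, 24), (8, 25), (9, 12), (9, 28),
  (10, 11), (10, 27), (11, 19), (11, 25), (12, 24), (12, 26), (13, 16), (13, 30), (14, 15),
  (14, 29), (15, 25), (15, 26), (16, 19), (16, 24), (17, 18), (17, 29), (17, 30), (18, 27),
  (18, 28), (19, 23), (20, 25), (20, 30), (21, 24), (21, 29), (22, 26), (22, 27), (23, 28)]

def ksOrthogonalTriads : List (Fin 31 × Fin 31 × Fin 31) :=
  [(0, 1, 2), (0, 3, 4), (0, 9, 12), (0, 10, 11), (1, 5, 6), (1, 13, 16), (1, 14, 15), (2, 7, 8),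
  (2, 17, 18), (3, 21, 29), (4, 20, 30), (5, 23, 28), (6, 22, 27), (7, 19, 23), (7, 22, 26),
  (8, 20, 25), (8, 21, 24)]

theorem ksOrthogonalPairs_orthogonal :
    ksOrthogonalPairs.all (fun p => ksRay p.1 ⬝ᵥ ksRay p.2 == 0) := by
  decide +kernel

theorem ksOrthogonalTriads_orthogonal :
    ksOrthogonalTriads.all (fun t => ksRay t.1 ⬝ᵥ ksRay t.2.1 == 0 &&
      ksRay t.1 ⬝ᵥ ksRay t.2.2 == 0 && ksRay t.2.1 ⬝ᵥ ksRay t.2.2 == 0) := by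
  decide +kernel

theorem ksRay_uncolourable (c : Fin 31 → Prop)
    (hpair : ∀ i j, ksRay i ⬝ᵥ ksRay j = 0 → ¬ (c i ∧ c j))
    (htriad : ∀ i j k, ksRay i ⬝ᵥ ksRay j = 0 → ksRay i ⬝ᵥ ksRay k = 0 →
      ksRay j ⬝ᵥ ksRay k = 0 → c i ∨ c j ∨ c k) :
    False := by
  have hp : ∀ p ∈ ksOrthogonalPairs, ¬ (c p.1 ∧ c p.2) := fun p hp =>
    hpair _ _ (by simpa using List.all_eq_true.1 ksOrthogonalPairs_orthogonal p hp)
  have ht : ∀ t ∈ ksOrthogonalTriads, c t.1 ∨ c t.2.1 ∨ c t.2.2 := fun t ht => by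
    have := List.all_eq_true.1 ksOrthogonalTriads_orthogonal t ht
    simp only [Bool.and_eq_true, beq_iff_eq] at this
    exact htriad _ _ _ this.1.1 this.1.2 this.2
  simp only [ksOrthogonalPairs, ksOrthogonalTriads, List.forall_mem_cons, List.not_mem_nil,
    IsEmpty.forall_iff, implies_true, and_true] at hp ht
  grind

theorem not_isKSColouring_fin_three (c : (Fin 3 → ℝ) → Prop) : ¬ IsKSColouring c := by
  intro hc
  let ray (i : Fin 31) : Fin 3 → ℝ := Int.cast ∘ ksRay i
  have hray_ne (i : Fin 31) : ray i ≠ 0 := fun h =>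
    (by decide : ∀ i, ksRay i ≠ 0) i (funext fun m => by simpa [ray] using congrFun h m)
  have hray_dot {i j : Fin 31} (h : ksRay i ⬝ᵥ ksRay j = 0) : ray i ⬝ᵥ ray j = 0 := by
    simpa [h] using ((Int.castRingHom ℝ).map_dotProduct (ksRay i) (ksRay j)).symm
  refine ksRay_uncolourable (fun i => c (ray i))
    (fun i j h => hc.not_and_of_dotProduct_eq_zero _ _ (hray_dot h))
    fun i j k hij hik hjk => ?_
  obtain ⟨l, hl⟩ := hc.exists_of_pairwise_dotProduct_eq_zero ![ray i, ray j, ray k]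
    (by intro l; fin_cases l <;> exact hray_ne _) (by
      intro l l' hll'
      fin_cases l <;> fin_cases l' <;> first
        | exact (hll' rfl).elim
        | exact hray_dot ‹_›
        | exact (dotProduct_comm _ _).trans (hray_dot ‹_›))
  fin_cases l
  exacts [.inl hl, .inr (.inl hl), .inr (.inr hl)]

theorem kochenSpecker_colimit_cstar_general (n : ℕ) (hn : 3 ≤ n)
    (A : Type*) [NormedCommRing A] [StarRing A]
    [NormedAlgebra ℂ A] [CompleteSpace A]
    (φ : ∀ S : StarSubalgebra ℂ (Matrix (Fin n) (Fin n) ℂ),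
      (∀ a ∈ S, ∀ b ∈ S, a * b = b * a) → (S →⋆ₐ[ℂ] A))
    (hcompat : ∀ (S T : StarSubalgebra ℂ (Matrix (Fin n) (Fin n) ℂ))
      (hS : ∀ a ∈ S, ∀ b ∈ S, a * b = b * a) (hT : ∀ a ∈ T, ∀ b ∈ T, a * b = b * a)
      (hST : S ≤ T) (a : Matrix (Fin n) (Fin n) ℂ) (ha : a ∈ S),
      φ T hT ⟨a, hST ha⟩ = φ S hS ⟨a, ha⟩) :
    (0 : A) = 1 := by
  by_contra h
  have : Nontrivial A := ⟨⟨0, 1, h⟩⟩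
  obtain ⟨χ⟩ : Nonempty (WeakDual.characterSpace ℂ A) := inferInstance
  have hc := isKSColouring_glued hcompat (χ : A →+* ℂ)
  obtain ⟨k, hk⟩ := hc.exists_single
  let e : Fin 3 ↪ Fin n :=
    (Fin.castLEEmb hn).trans (Equiv.swap (Fin.castLE hn 0) k).toEmbedding
  exact not_isKSColouring_fin_three _ (hc.comp_extend e (i₀ := 0) (by simpa [e] using hk))

/-- The Kochen–Specker theorem, C*-algebra colimit form: for `n ≥ 3`, any compatible family of
unital star-algebra homomorphisms from the commutative star-subalgebras of `M_n(ℂ)` to a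
commutative C*-algebra `A` forces `A` to be trivial.  In other words, the colimit of the
diagram of commutative C*-subalgebras of `M_n(ℂ)`, taken in the category of commutative
C*-algebras, is the terminal (zero) C*-algebra. -/
theorem kochenSpecker_colimit_cstar (n : ℕ) (hn : 3 ≤ n)
    (A : Type*) [NormedCommRing A] [StarRing A] [CStarRing A]
    [NormedAlgebra ℂ A] [StarModule ℂ A] [CompleteSpace A]
    (φ : ∀ S : StarSubalgebra ℂ (Matrix (Fin n) (Fin n) ℂ),
      (∀ a ∈ S, ∀ b ∈ S, a * b = b * a) → (S →⋆ₐ[ℂ] A))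
    (hcompat : ∀ (S T : StarSubalgebra ℂ (Matrix (Fin n) (Fin n) ℂ))
      (hS : ∀ a ∈ S, ∀ b ∈ S, a * b = b * a) (hT : ∀ a ∈ T, ∀ b ∈ T, a * b = b * a)
      (hST : S ≤ T) (a : Matrix (Fin n) (Fin n) ℂ) (ha : a ∈ S),
      φ T hT ⟨a, hST ha⟩ = φ S hS ⟨a, ha⟩) :
    (0 : A) = 1 :=
  kochenSpecker_colimit_cstar_general n hn A φ hcompat
end

section
/- Let n ≥ 3. There is no function v from the set of normal matrices of M_n(ℂ) to ℂ such that: v(1) = 1; v(z·a) = z·v(a) for all z ∈ ℂ and normal a; v(aᴴ) = conj(v(a)) for all normal a; and for all commuting normal matrices a, b one has v(a + b) = v(a) + v(b) and v(a·b) = v(a)·v(b). -/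
/-!
A valuation `w` is `0` or `1` on every projection and additive on orthogonal ones,
so on the projections onto the lines of an orthogonal basis it takes the value `1` exactly
once. Since `w 1 = 1`, some coordinate line has value `1`, hence so does every subspace
containing it; pulling `w` back along a three-dimensional coordinate subspace through that line
gives a colouring of the lines of `ℂ³` that picks exactly one line from every orthogonal basis.
No such colouring exists, already on a finite set of integer lines (Kochen–Specker).
-/

open Matrix
open scoped ComplexOrder

namespace KochenSpecker

def IsOrthogonalFamily {R κ ι : Type*} [Mul R] [AddCommMonoid R] [Star R] [Fintype ι]
    (b : κ → ι → R) : Prop :=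
  (∀ i, b i ≠ 0) ∧ Pairwise fun i j => star (b i) ⬝ᵥ b j = 0

lemma IsOrthogonalFamily.map_intCast {𝕜 κ ι : Type*} [RCLike 𝕜] [Fintype ι]
    {b : κ → ι → ℤ} (hb : IsOrthogonalFamily b) :
    IsOrthogonalFamily fun i => ((↑) ∘ b i : ι → 𝕜) := by
  refine ⟨fun i hi => hb.1 i (funext fun a => by simpa using congr_fun hi a), fun i j hij => ?_⟩
  have h := congrArg (Int.cast : ℤ → 𝕜) (hb.2 hij)
  simpa [dotProduct, star_intCast] using h

/-- Orthogonal bases of `ℚ³`. The 35 vectors of the first 21 bases form a Kochen–Specker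
configuration with coordinates in `{0, ±1, ±2}`; each of the last 16 bases completes one of
its remaining orthogonal pairs by the cross product. -/
def ksBases : List (Fin 3 → Fin 3 → ℤ) :=
  [![![1, 1, 1], ![1, 0, -1], ![1, -2, 1]],
    ![![1, 1, 1], ![2, -1, -1], ![0, 1, -1]],
    ![![1, 1, 1], ![1, -1, 0], ![1, 1, -2]],
    ![![1, 1, 0], ![1, -1, 1], ![1, -1, -2]],
    ![![1, 1, 0], ![1, -1, 0], ![0, 0, 1]],
    ![![1, 1, 0], ![1, -1, -1], ![1, -1, 2]],
    ![![1, 1, -1], ![1, 0, 1], ![1, -2, -1]],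
    ![![1, 1, -1], ![2, -1, 1], ![0, 1, 1]],
    ![![1, 1, -1], ![1, -1, 0], ![1, 1, 2]],
    ![![2, 1, 1], ![1, -1, -1], ![0, 1, -1]],
    ![![2, 1, -1], ![1, -1, 1], ![0, 1, 1]],
    ![![1, 0, 1], ![1, 0, -1], ![0, 1, 0]],
    ![![1, 0, 1], ![1, -1, -1], ![1, 2, -1]],
    ![![2, 0, 1], ![1, 0, -2], ![0, 1, 0]],
    ![![1, 0, 0], ![0, 1, 1], ![0, 1, -1]],
    ![![1, 0, 0], ![0, 2, 1], ![0, 1, -2]],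
    ![![1, 0, 0], ![0, 1, 0], ![0, 0, 1]],
    ![![1, 0, 0], ![0, 2, -1], ![0, 1, 2]],
    ![![2, 0, -1], ![1, 0, 2], ![0, 1, 0]],
    ![![1, 0, -1], ![1, -1, 1], ![1, 2, 1]],
    ![![2, -1, 0], ![1, 2, 0], ![0, 0, 1]],
    ![![2, 0, 1], ![1, -1, -2], ![1, 5, -2]],
    ![![2, 0, -1], ![1, -1, 2], ![1, 5, 2]],
    ![![2, -1, 1], ![1, 2, 0], ![2, -1, -5]],
    ![![2, -1, 1], ![1, 0, -2], ![2, 5, 1]],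
    ![![2, -1, 0], ![1, 2, 1], ![1, 2, -5]],
    ![![2, -1, 0], ![1, 2, -1], ![1, 2, 5]],
    ![![2, -1, -1], ![1, 2, 0], ![2, -1, 5]],
    ![![2, -1, -1], ![1, 0, 2], ![2, 5, -1]],
    ![![1, 2, 1], ![0, 1, -2], ![5, -2, -1]],
    ![![1, 2, -1], ![0, 1, 2], ![5, -2, 1]],
    ![![1, 1, 2], ![0, 2, -1], ![5, -1, -2]],
    ![![1, 1, -2], ![0, 2, 1], ![5, -1, 2]],
    ![![1, -1, 2], ![0, 2, 1], ![5, 1, -2]],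
    ![![1, -1, -2], ![0, 2, -1], ![5, 1, 2]],
    ![![1, -2, 1], ![0, 1, 2], ![5, 2, -1]],
    ![![1, -2, -1], ![0, 1, -2], ![5, 2, 1]]]

lemma isOrthogonalFamily_of_mem_ksBases : ∀ b ∈ ksBases, IsOrthogonalFamily b := by
  simp only [IsOrthogonalFamily, Pairwise]
  decide

theorem not_exists_frameFunction :
    ¬ ∃ c : (Fin 3 → ℤ) → ℕ,
      ∀ b : Fin 3 → Fin 3 → ℤ, IsOrthogonalFamily b → ∑ i, c (b i) = 1 := by
  rintro ⟨c, hc⟩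
  have h : ∀ b ∈ ksBases, ∑ i, c (b i) = 1 :=
    fun b hb => hc b (isOrthogonalFamily_of_mem_ksBases b hb)
  simp only [ksBases, List.forall_mem_cons, List.not_mem_nil, false_imp_iff, implies_true,
    and_true, Fin.sum_univ_three, cons_val_zero, cons_val_one, cons_val_two, head_cons,
    tail_cons] at h
  grind

section LineProjection

variable {𝕜 ι κ : Type*} [RCLike 𝕜] [Fintype ι]

noncomputable def lineProj (u : ι → 𝕜) : Matrix ι ι 𝕜 :=
  (star u ⬝ᵥ u)⁻¹ • vecMulVec u (star u)

lemma lineProj_mul_lineProj (u v : ι → 𝕜) :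
    lineProj u * lineProj v =
      ((star u ⬝ᵥ u)⁻¹ * (star v ⬝ᵥ v)⁻¹ * (star u ⬝ᵥ v)) • vecMulVec u (star v) := by
  rw [lineProj, lineProj, smul_mul_smul_comm, vecMulVec_mul_vecMulVec, vecMulVec_smul, smul_smul]

lemma lineProj_mul_lineProj_eq_zero {u v : ι → 𝕜} (h : star u ⬝ᵥ v = 0) :
    lineProj u * lineProj v = 0 := by
  rw [lineProj_mul_lineProj, h, mul_zero, zero_smul]

lemma isStarProjection_lineProj {u : ι → 𝕜} (hu : u ≠ 0) : IsStarProjection (lineProj u) where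
  isIdempotentElem := by
    have : star u ⬝ᵥ u ≠ 0 := dotProduct_star_self_eq_zero.not.mpr hu
    rw [IsIdempotentElem, lineProj_mul_lineProj, lineProj, inv_mul_cancel_right₀ this]
  isSelfAdjoint := by
    rw [IsSelfAdjoint, lineProj, star_smul, star_inv₀, star_eq_conjTranspose,
      conjTranspose_vecMulVec, star_star, ← star_dotProduct_star, star_star]

lemma IsOrthogonalFamily.commute_lineProj {b : κ → ι → 𝕜} (hb : IsOrthogonalFamily b) :
    Pairwise fun i j => Commute (lineProj (b i)) (lineProj (b j)) := fun _ _ hij =>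
  (lineProj_mul_lineProj_eq_zero (hb.2 hij)).trans
    (lineProj_mul_lineProj_eq_zero (hb.2 hij.symm)).symm

lemma sum_lineProj_eq_one [DecidableEq ι] {b : ι → ι → 𝕜} (hb : IsOrthogonalFamily b) :
    ∑ i, lineProj (b i) = 1 := by
  set B : Matrix ι ι 𝕜 := (of b)ᵀ
  set d : ι → 𝕜 := fun i => star (b i) ⬝ᵥ b i
  have hBB : Bᴴ * B = diagonal d := by
    ext i j
    rcases eq_or_ne i j with rfl | hij
    · simp [B, d, mul_apply, dotProduct]
    · simp [B, mul_apply, dotProduct, hij, ← hb.2 hij]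
  have hleft : (diagonal d⁻¹ * Bᴴ) * B = 1 := by
    rw [Matrix.mul_assoc, hBB, diagonal_mul_diagonal, ← diagonal_one]
    exact congrArg diagonal (funext fun i => inv_mul_cancel₀
      (dotProduct_star_self_eq_zero.not.mpr (hb.1 i)))
  rw [← mul_eq_one_comm.mp hleft, ← Matrix.mul_assoc]
  ext a c
  rw [mul_apply]
  simp only [B, d, lineProj, Matrix.sum_apply, Matrix.smul_apply, vecMulVec_apply,
    mul_diagonal, conjTranspose_apply, transpose_apply, of_apply, Pi.star_apply, smul_eq_mul,
    Pi.inv_apply]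
  exact Finset.sum_congr rfl fun i _ => by ring

lemma isOrthogonalFamily_single [DecidableEq ι] :
    IsOrthogonalFamily fun i : ι => (Pi.single i 1 : ι → 𝕜) :=
  ⟨fun i => by simp, fun i j hij => by simp [Pi.star_single, hij]⟩

end LineProjection

section Isometry

variable {𝕜 ι κ : Type*} [RCLike 𝕜] [Fintype ι] [Fintype κ] [DecidableEq κ]
  {E : Matrix ι κ 𝕜}

lemma star_mulVec_dotProduct_mulVec (hE : Eᴴ * E = 1) (u v : κ → 𝕜) :
    star (E *ᵥ u) ⬝ᵥ E *ᵥ v = star u ⬝ᵥ v := by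
  rw [star_mulVec, ← dotProduct_mulVec, mulVec_mulVec, hE, one_mulVec]

lemma mulVec_ne_zero_of_conjTranspose_mul_self (hE : Eᴴ * E = 1) {u : κ → 𝕜} (hu : u ≠ 0) :
    E *ᵥ u ≠ 0 := by
  rw [Ne, ← dotProduct_star_self_eq_zero, star_mulVec_dotProduct_mulVec hE]
  exact dotProduct_star_self_eq_zero.not.mpr hu

lemma IsOrthogonalFamily.mulVec (hE : Eᴴ * E = 1) {b : κ → κ → 𝕜}
    (hb : IsOrthogonalFamily b) : IsOrthogonalFamily fun i => E *ᵥ b i :=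
  ⟨fun i => mulVec_ne_zero_of_conjTranspose_mul_self hE (hb.1 i),
    fun _ _ hij => (star_mulVec_dotProduct_mulVec hE _ _).trans (hb.2 hij)⟩

lemma lineProj_mulVec (hE : Eᴴ * E = 1) (u : κ → 𝕜) :
    lineProj (E *ᵥ u) = E * lineProj u * Eᴴ := by
  rw [lineProj, lineProj, star_mulVec_dotProduct_mulVec hE, Matrix.mul_smul, Matrix.smul_mul,
    mul_vecMulVec, vecMulVec_mul, star_mulVec]

lemma isStarProjection_mul_conjTranspose (hE : Eᴴ * E = 1) : IsStarProjection (E * Eᴴ) where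
  isIdempotentElem := by
    rw [IsIdempotentElem, Matrix.mul_assoc, ← Matrix.mul_assoc Eᴴ, hE, Matrix.one_mul]
  isSelfAdjoint := by
    rw [IsSelfAdjoint, star_eq_conjTranspose, conjTranspose_mul, conjTranspose_conjTranspose]

end Isometry

lemma submatrix_one_mulVec_single {𝕜 ι κ : Type*} [RCLike 𝕜] [DecidableEq ι] [Fintype κ]
    [DecidableEq κ] (e : κ → ι) (j : κ) :
    (1 : Matrix ι ι 𝕜).submatrix id e *ᵥ Pi.single j 1 = Pi.single (e j) 1 := by
  ext a
  simp [one_apply, Pi.single_apply]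

lemma conjTranspose_submatrix_one_mul {𝕜 ι κ : Type*} [RCLike 𝕜] [Fintype ι] [DecidableEq ι]
    [DecidableEq κ] {e : κ → ι} (he : e.Injective) :
    ((1 : Matrix ι ι 𝕜).submatrix id e)ᴴ * (1 : Matrix ι ι 𝕜).submatrix id e = 1 := by
  rw [conjTranspose_submatrix, conjTranspose_one, ← submatrix_mul _ _ _ _ _ Function.bijective_id,
    Matrix.one_mul, submatrix_one _ he]

lemma exists_injective_apply_eq {α β : Type*} [Fintype α] [Fintype β] [DecidableEq β]
    (h : Fintype.card α ≤ Fintype.card β) (a : α) (k : β) :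
    ∃ e : α → β, e.Injective ∧ e a = k := by
  obtain ⟨f⟩ := Function.Embedding.nonempty_of_card_le h
  exact ⟨Equiv.swap (f a) k ∘ f, (Equiv.injective _).comp f.injective, by simp⟩

/-- Working with self-adjoint rather than normal matrices avoids Fuglede's theorem: commuting
self-adjoint matrices have self-adjoint sum and product. -/
structure IsSelfAdjointValuation {ι : Type*} [Fintype ι] [DecidableEq ι]
    (w : Matrix ι ι ℂ → ℂ) : Prop where
  map_one : w 1 = 1
  map_add {a b : Matrix ι ι ℂ} :
    IsSelfAdjoint a → IsSelfAdjoint b → Commute a b → w (a + b) = w a + w b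
  map_mul {a b : Matrix ι ι ℂ} :
    IsSelfAdjoint a → IsSelfAdjoint b → Commute a b → w (a * b) = w a * w b

namespace IsSelfAdjointValuation

variable {ι : Type*} [Fintype ι] [DecidableEq ι] {w : Matrix ι ι ℂ → ℂ}

lemma apply_eq_zero_or_one (hw : IsSelfAdjointValuation w) {p : Matrix ι ι ℂ}
    (hp : IsStarProjection p) : w p = 0 ∨ w p = 1 := by
  have h := hw.map_mul hp.isSelfAdjoint hp.isSelfAdjoint (Commute.refl p)
  rw [hp.isIdempotentElem.eq] at h
  have : w p * (w p - 1) = 0 := by linear_combination -h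
  simpa [sub_eq_zero] using this

lemma map_sum (hw : IsSelfAdjointValuation w) {κ : Type*} {a : κ → Matrix ι ι ℂ}
    (ha : ∀ i, IsSelfAdjoint (a i)) (hc : Pairwise fun i j => Commute (a i) (a j))
    (s : Finset κ) : w (∑ i ∈ s, a i) = ∑ i ∈ s, w (a i) := by
  classical
  induction s using Finset.induction_on with
  | empty =>
    have h := hw.map_add (.zero _) (.zero _) (Commute.zero_left 0)
    rw [add_zero] at h
    simpa using h
  | insert i s hi ih =>
    rw [Finset.sum_insert hi, Finset.sum_insert hi,
      hw.map_add (ha i) (isSelfAdjoint_sum s fun j _ => ha j)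
        (Commute.sum_right _ _ _ fun j hj => hc (ne_of_mem_of_not_mem hj hi).symm), ih]

lemma map_sum_lineProj (hw : IsSelfAdjointValuation w) {κ : Type*} [Fintype κ]
    {b : κ → ι → ℂ} (hb : IsOrthogonalFamily b) :
    w (∑ i, lineProj (b i)) = ∑ i, w (lineProj (b i)) :=
  hw.map_sum (fun i => (isStarProjection_lineProj (hb.1 i)).isSelfAdjoint) hb.commute_lineProj _

lemma apply_eq_one_of_mul_eq (hw : IsSelfAdjointValuation w) {p q : Matrix ι ι ℂ}
    (hp : IsStarProjection p) (hq : IsStarProjection q) (hqp : q * p = p) (hwp : w p = 1) :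
    w q = 1 := by
  have hpq : p * q = p := by
    simpa [hp.isSelfAdjoint.star_eq, hq.isSelfAdjoint.star_eq] using congrArg star hqp
  have hr := hp.sub_of_mul_eq_right hq hqp
  have hsplit : w q = 1 + w (q - p) := by
    rw [← hwp, ← hw.map_add hp.isSelfAdjoint hr.isSelfAdjoint, add_sub_cancel]
    rw [Commute, SemiconjBy, mul_sub, sub_mul, hpq, hqp, hp.isIdempotentElem.eq]
  rcases hw.apply_eq_zero_or_one hq with h | h
  · rcases hw.apply_eq_zero_or_one hr with h' | h' <;> norm_num [h, h'] at hsplit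
  · exact h

lemma exists_apply_lineProj_single_eq_one (hw : IsSelfAdjointValuation w) :
    ∃ k, w (lineProj (Pi.single k 1)) = 1 := by
  have h := hw.map_sum_lineProj (isOrthogonalFamily_single (ι := ι))
  rw [sum_lineProj_eq_one isOrthogonalFamily_single, hw.map_one] at h
  obtain ⟨k, -, hk⟩ := Finset.exists_ne_zero_of_sum_ne_zero (h ▸ one_ne_zero)
  exact ⟨k, (hw.apply_eq_zero_or_one (isStarProjection_lineProj (by simp))).resolve_left hk⟩

lemma sum_apply_lineProj_mulVec_eq_one (hw : IsSelfAdjointValuation w) {κ : Type*} [Fintype κ]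
    [DecidableEq κ] {E : Matrix ι κ ℂ} (hE : Eᴴ * E = 1) {u : κ → ℂ} (hu : u ≠ 0)
    (hwu : w (lineProj (E *ᵥ u)) = 1) {b : κ → κ → ℂ} (hb : IsOrthogonalFamily b) :
    ∑ i, w (lineProj (E *ᵥ b i)) = 1 := by
  have hsum : ∑ i, lineProj (E *ᵥ b i) = E * Eᴴ := by
    simp_rw [lineProj_mulVec hE]
    rw [← Matrix.sum_mul, ← Matrix.mul_sum, sum_lineProj_eq_one hb, Matrix.mul_one]
  rw [← hw.map_sum_lineProj (hb.mulVec hE), hsum]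
  refine hw.apply_eq_one_of_mul_eq
    (isStarProjection_lineProj (mulVec_ne_zero_of_conjTranspose_mul_self hE hu))
    (isStarProjection_mul_conjTranspose hE) ?_ hwu
  rw [lineProj_mulVec hE, Matrix.mul_assoc, ← Matrix.mul_assoc Eᴴ, ← Matrix.mul_assoc Eᴴ, hE,
    Matrix.one_mul, Matrix.mul_assoc]

end IsSelfAdjointValuation

theorem not_isSelfAdjointValuation {ι : Type*} [Fintype ι] [DecidableEq ι]
    (hι : 3 ≤ Fintype.card ι) (w : Matrix ι ι ℂ → ℂ) : ¬ IsSelfAdjointValuation w := by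
  intro hw
  obtain ⟨k, hk⟩ := hw.exists_apply_lineProj_single_eq_one
  obtain ⟨e, he, hek⟩ := exists_injective_apply_eq (by simpa using hι) (0 : Fin 3) k
  set E : Matrix ι (Fin 3) ℂ := (1 : Matrix ι ι ℂ).submatrix id e
  have hE : Eᴴ * E = 1 := conjTranspose_submatrix_one_mul he
  have hE0 : w (lineProj (E *ᵥ Pi.single 0 1)) = 1 := by
    rwa [submatrix_one_mulVec_single, hek]
  set P : (Fin 3 → ℤ) → Matrix ι ι ℂ := fun x => lineProj (E *ᵥ ((↑) ∘ x))
  refine not_exists_frameFunction ⟨fun x => if w (P x) = 1 then 1 else 0, fun b hb => ?_⟩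
  have hb' : IsOrthogonalFamily fun i => ((↑) ∘ b i : Fin 3 → ℂ) := hb.map_intCast
  have hcast : ∀ i, ((if w (P (b i)) = 1 then 1 else 0 : ℕ) : ℂ) = w (P (b i)) := fun i => by
    rcases hw.apply_eq_zero_or_one (isStarProjection_lineProj ((hb'.mulVec hE).1 i)) with h | h <;>
      simp [P, h]
  have h := hw.sum_apply_lineProj_mulVec_eq_one hE (by simp) hE0 hb'
  rw [← Finset.sum_congr rfl fun i _ => hcast i] at h
  exact_mod_cast h

end KochenSpecker

/-- The Kochen–Specker theorem for partial C*-algebras: for `n ≥ 3` there is no morphism of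
partial C*-algebras from the normal matrices `N(M_n(ℂ))` to `ℂ`, i.e. no function on normal
matrices restricting to a character on every commutative C*-subalgebra. -/
theorem kochenSpecker_normal_valuation (n : ℕ) (hn : 3 ≤ n) :
    ¬ ∃ v : {a : Matrix (Fin n) (Fin n) ℂ // a * aᴴ = aᴴ * a} → ℂ,
      (∀ h : (1 : Matrix (Fin n) (Fin n) ℂ) * 1ᴴ = 1ᴴ * 1, v ⟨1, h⟩ = 1) ∧
      (∀ (z : ℂ) (a : Matrix (Fin n) (Fin n) ℂ) (ha : a * aᴴ = aᴴ * a)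
        (h' : (z • a) * (z • a)ᴴ = (z • a)ᴴ * (z • a)), v ⟨z • a, h'⟩ = z * v ⟨a, ha⟩) ∧
      (∀ (a : Matrix (Fin n) (Fin n) ℂ) (ha : a * aᴴ = aᴴ * a)
        (h' : aᴴ * (aᴴ)ᴴ = (aᴴ)ᴴ * aᴴ), v ⟨aᴴ, h'⟩ = starRingEnd ℂ (v ⟨a, ha⟩)) ∧
      (∀ (a b : Matrix (Fin n) (Fin n) ℂ) (ha : a * aᴴ = aᴴ * a) (hb : b * bᴴ = bᴴ * b),
        a * b = b * a → ∀ h' : (a + b) * (a + b)ᴴ = (a + b)ᴴ * (a + b),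
        v ⟨a + b, h'⟩ = v ⟨a, ha⟩ + v ⟨b, hb⟩) ∧
      (∀ (a b : Matrix (Fin n) (Fin n) ℂ) (ha : a * aᴴ = aᴴ * a) (hb : b * bᴴ = bᴴ * b),
        a * b = b * a → ∀ h' : (a * b) * (a * b)ᴴ = (a * b)ᴴ * (a * b),
        v ⟨a * b, h'⟩ = v ⟨a, ha⟩ * v ⟨b, hb⟩) := by
  rintro ⟨v, hone, -, -, hadd, hmul⟩
  classical
  have hnormal : ∀ {a : Matrix (Fin n) (Fin n) ℂ}, IsSelfAdjoint a → a * aᴴ = aᴴ * a :=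
    fun ha => ha.isStarNormal.star_comm_self.eq.symm
  set w : Matrix (Fin n) (Fin n) ℂ → ℂ := fun a => if h : a * aᴴ = aᴴ * a then v ⟨a, h⟩ else 0
  have hw : ∀ {a} (h : a * aᴴ = aᴴ * a), w a = v ⟨a, h⟩ := fun h => dif_pos h
  refine KochenSpecker.not_isSelfAdjointValuation (by simpa using hn) w
    ⟨?_, fun ha hb hab => ?_, fun ha hb hab => ?_⟩
  · rw [hw (by simp), hone]
  · rw [hw (hnormal (ha.add hb)), hw (hnormal ha), hw (hnormal hb)]
    exact hadd _ _ _ _ hab.eq _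
  · rw [hw (hnormal ((IsSelfAdjoint.commute_iff ha hb).mp hab)), hw (hnormal ha),
      hw (hnormal hb)]
    exact hmul _ _ _ _ hab.eq _
end

section
/- Suppose given categories 𝐀, 𝐁, 𝐂, 𝐃, functors F : 𝐀 ⥤ 𝐁, H : 𝐀 ⥤ 𝐂, K : 𝐁 ⥤ 𝐃, G : 𝐂 ⥤ 𝐃, and a natural isomorphism F ⋙ K ≅ H ⋙ G. Assume: K preserves limits of shape J for a small category J; K preserves initial objects; and initial objects in 𝐃 are strict (every morphism into an initial object is an isomorphism). Let X be an object of 𝐂 that is obstructed, i.e., there is a diagram 𝒜 : J ⥤ 𝐀, a cone over 𝒜 ⋙ H with apex X, and a limit cone over 𝒜 ⋙ F whose apex is an initial object of 𝐁. Then G(X) is an initial object of 𝐃. -/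
open CategoryTheory CategoryTheory.Limits

/-!
Transporting `G.mapCone c` along the square `F ⋙ K ≅ H ⋙ G` gives a cone with apex `G X` over
`𝒜 ⋙ F ⋙ K`, whose limit `K (lim (𝒜 ⋙ F))` is initial because `K` preserves both the limit and
initial objects. The lift `G X ⟶ K (lim (𝒜 ⋙ F))` is then an isomorphism by strictness.
-/

namespace CategoryTheory.Limits

variable {J D : Type*} [Category J] [Category D] [HasStrictInitialObjects D]

noncomputable def IsLimit.isInitialOfStrict {E : J ⥤ D} {t : Cone E} (ht : IsLimit t)
    (hinit : IsInitial t.pt) (s : Cone E) : IsInitial s.pt :=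
  hinit.ofStrict (ht.lift s)

end CategoryTheory.Limits

/-- The obstruction theorem: given a commuting square (up to natural isomorphism) of functors
`F : A ⥤ B`, `H : A ⥤ C`, `K : B ⥤ D`, `G : C ⥤ D` such that `K` preserves limits of shape
`J` and initial objects, and initial objects in `D` are strict, then `G` sends any obstructed
object `X` of `C` (one admitting a cone over `H ∘ 𝒜` for a diagram `𝒜` in `A` whose limit
along `F` is initial in `B`) to an initial object of `D`. -/
theorem obstruction_theorem {A : Type*} {B : Type*} {C : Type*} {D : Type*}
    [Category A] [Category B] [Category C] [Category D]
    (F : A ⥤ B) (H : A ⥤ C) (K : B ⥤ D) (G : C ⥤ D)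
    (sq : F ⋙ K ≅ H ⋙ G)
    {J : Type*} [SmallCategory J]
    [PreservesLimitsOfShape J K]
    (hKinit : ∀ b : B, IsInitial b → Nonempty (IsInitial (K.obj b)))
    (hstrict : ∀ d : D, IsInitial d → ∀ (d' : D) (f : d' ⟶ d), IsIso f)
    (X : C) (𝒜 : J ⥤ A)
    (c : Cone (𝒜 ⋙ H)) (hc : c.pt = X)
    (d : Cone (𝒜 ⋙ F)) (hd : IsLimit d) (hinit : IsInitial d.pt) :
    Nonempty (IsInitial (G.obj X)) := by
  subst hc
  have : HasStrictInitialObjects D := ⟨fun f hI => hstrict _ hI _ f⟩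
  obtain ⟨hKd⟩ := hKinit d.pt hinit
  let e : (𝒜 ⋙ H) ⋙ G ≅ (𝒜 ⋙ F) ⋙ K := Functor.isoWhiskerLeft 𝒜 sq.symm
  exact ⟨(isLimitOfPreserves K hd).isInitialOfStrict hKd
    ((Cone.postcompose e.hom).obj (G.mapCone c))⟩
end

section
/- Let n ≥ 3 and let G : RingCatᵒᵖ ⥤ LocallyRingedSpace be a functor such that the composite of the inclusion (CommRingCat ⥤ RingCat)ᵒᵖ with G is naturally isomorphic to the functor Spec : CommRingCatᵒᵖ ⥤ LocallyRingedSpace sending a commutative ring to its spectrum as a locally ringed space. Then the underlying topological space of G(M_n(ℂ)) is empty. -/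
/-!
A point `x` of `G(R)` induces, for every ring map `φ : A →+* R` out of a commutative ring, a
prime of `A` (apply `G` to `φ` and transport along `iso`), compatibly with composition. Call
`a : R` nonvanishing at `x` if `X` is not in the prime of `ℤ[X]` induced by `X ↦ a`. Inside any
commutative subring this is non-membership in one prime ideal, so the predicate picks exactly one
member of every finite complete family of orthogonal idempotents of `R`.

For `n ≥ 3` no such predicate exists on `Mₙ(K)`, a Kochen–Specker phenomenon for idempotents
that need not be self-adjoint. On rank-one idempotents `v wᵀ` (`w ⬝ᵥ v = 1`) the value first has
to depend only on `v`; then the lines `v`, `u`, `v + u` of a plane pairwise split one rank-two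
idempotent into two orthogonal rank-one pieces, so their three values would have to be pairwise
different.
-/

open CategoryTheory AlgebraicGeometry Opposite Matrix

structure IsIdempotentValuation {R : Type*} [Ring R] (f : R → Prop) : Prop where
  existsUnique : ∀ {ι : Type} [Fintype ι] (e : ι → R), CompleteOrthogonalIdempotents e →
    ∃! i, f (e i)

lemma OrthogonalIdempotents.pair {R : Type*} [Ring R] {a b : R} (ha : IsIdempotentElem a)
    (hb : IsIdempotentElem b) (hab : a * b = 0) (hba : b * a = 0) :
    OrthogonalIdempotents ![a, b] :=
  ⟨Fin.forall_fin_two.mpr ⟨ha, hb⟩, by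
    intro i j hij
    fin_cases i <;> fin_cases j <;> simp_all⟩

namespace IsIdempotentValuation

variable {R : Type*} [Ring R] {f : R → Prop} (hf : IsIdempotentValuation f)
include hf

lemma not_and {a b : R} (ha : IsIdempotentElem a) (hb : IsIdempotentElem b) (hab : a * b = 0)
    (hba : b * a = 0) : ¬(f a ∧ f b) := fun ⟨hfa, hfb⟩ =>
  absurd ((hf.existsUnique _ (.option (OrthogonalIdempotents.pair ha hb hab hba))).unique
    (y₁ := some 0) (y₂ := some 1) hfa hfb) (by simp)

lemma iff_not_of_le_add {p a b : R} (hp : IsIdempotentElem p) (ha : IsIdempotentElem a)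
    (hb : IsIdempotentElem b) (hab : a * b = 0) (hba : b * a = 0) (hpab : p * (a + b) = p)
    (habp : (a + b) * p = p) (hfp : f p) : f a ↔ ¬f b := by
  refine ⟨fun hfa hfb => hf.not_and ha hb hab hba ⟨hfa, hfb⟩, fun hfb => ?_⟩
  have hc := CompleteOrthogonalIdempotents.option (OrthogonalIdempotents.pair ha hb hab hba)
  obtain ⟨i, hi, -⟩ := hf.existsUnique _ hc
  rcases i with _ | i
  · refine absurd ⟨hfp, hi⟩ (hf.not_and hp (hc.idem none) ?_ ?_) <;>
      simp [mul_sub, sub_mul, hpab, habp]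
  · fin_cases i
    exacts [hi, absurd hi hfb]

end IsIdempotentValuation

section LinearAlgebra

variable {K ι : Type*} [Field K] [Fintype ι]

lemma exists_dotProduct_eq_one [DecidableEq ι] {z : ι → K} (hz : z ≠ 0) : ∃ t, z ⬝ᵥ t = 1 := by
  obtain ⟨i, hi⟩ := Function.ne_iff.mp hz
  exact ⟨Pi.single i (z i)⁻¹, by rw [dotProduct_single]; exact mul_inv_cancel₀ hi⟩

lemma exists_ne_zero_forall_dotProduct_eq_zero {κ : Type*} [Fintype κ] (u : κ → ι → K)
    (h : Fintype.card κ < Fintype.card ι) : ∃ p ≠ 0, ∀ k, u k ⬝ᵥ p = 0 := by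
  obtain ⟨p, hp, hp0⟩ := (Submodule.ne_bot_iff _).mp <|
    LinearMap.ker_ne_bot_of_finrank_lt (f := (Matrix.of u).mulVecLin) (by simpa using h)
  exact ⟨p, hp0, congrFun (LinearMap.mem_ker.mp hp)⟩

lemma exists_separated_pair_of_three_le_card [DecidableEq ι] (hn : 3 ≤ Fintype.card ι)
    {v w w' : ι → K} (hv : w ⬝ᵥ v = 1) (hv' : w' ⬝ᵥ v = 1) (hne : w ≠ w') :
    ∃ m₁ m₂ q : ι → K, w' ⬝ᵥ m₁ = 0 ∧ w ⬝ᵥ m₁ = 1 ∧ w' ⬝ᵥ m₂ = 0 ∧ w ⬝ᵥ m₂ = 1 ∧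
      q ⬝ᵥ v = 0 ∧ q ⬝ᵥ m₁ = 0 ∧ q ⬝ᵥ m₂ = 1 := by
  obtain ⟨t, ht⟩ := exists_dotProduct_eq_one (sub_ne_zero.mpr hne)
  obtain ⟨p, hp, hwp⟩ := exists_ne_zero_forall_dotProduct_eq_zero ![w, w'] (by simp; omega)
  obtain ⟨s, hs⟩ := exists_dotProduct_eq_one hp
  have hw : w ⬝ᵥ p = 0 := hwp 0
  have hw' : w' ⬝ᵥ p = 0 := hwp 1
  rw [dotProduct_comm] at hs
  rw [sub_dotProduct] at ht
  set m₁ := t - (w' ⬝ᵥ t) • v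
  have hm₁ : w ⬝ᵥ m₁ = 1 := by simpa [m₁, dotProduct_sub, hv] using ht
  have hm₁' : w' ⬝ᵥ m₁ = 0 := by simp [m₁, dotProduct_sub, hv']
  -- `w` and `w'` vanish on `p`, so they can correct `s` to vanish on `v` and `m₁`.
  refine ⟨m₁, m₁ + p, s - (s ⬝ᵥ m₁) • w - (s ⬝ᵥ v - s ⬝ᵥ m₁) • w', hm₁', hm₁,
    ?_, ?_, ?_, ?_, ?_⟩ <;>
    simp [dotProduct_add, sub_dotProduct, hv, hv', hw, hw', hm₁, hm₁', hs]

end LinearAlgebra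

namespace Matrix

variable {K ι : Type*} [Field K] [Fintype ι]

lemma isIdempotentElem_vecMulVec {v w : ι → K} (h : w ⬝ᵥ v = 1) :
    IsIdempotentElem (vecMulVec v w) := by
  rw [IsIdempotentElem, vecMulVec_mul_vecMulVec, h, one_smul]

lemma vecMulVec_mul_vecMulVec_eq_zero {v w v' w' : ι → K} (h : w ⬝ᵥ v' = 0) :
    vecMulVec v w * vecMulVec v' w' = 0 := by
  rw [vecMulVec_mul_vecMulVec, h, zero_smul, vecMulVec_zero]

lemma completeOrthogonalIdempotents_single [DecidableEq ι] :
    CompleteOrthogonalIdempotents fun i : ι => single i i (1 : K) :=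
  ⟨⟨fun i => by simp [IsIdempotentElem, single_mul_single_same],
    fun _ _ hij => single_mul_single_of_ne _ _ _ _ hij _⟩, sum_single_one⟩

end Matrix

namespace IsIdempotentValuation

variable {K ι : Type*} [Field K] [Fintype ι] [DecidableEq ι] {f : Matrix ι ι K → Prop}
  (hf : IsIdempotentValuation f)
include hf

lemma not_and_vecMulVec {v w v' w' : ι → K} (hv : w ⬝ᵥ v = 1) (hv' : w' ⬝ᵥ v' = 1)
    (h : w ⬝ᵥ v' = 0) (h' : w' ⬝ᵥ v = 0) : ¬(f (vecMulVec v w) ∧ f (vecMulVec v' w')) :=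
  hf.not_and (isIdempotentElem_vecMulVec hv) (isIdempotentElem_vecMulVec hv')
    (vecMulVec_mul_vecMulVec_eq_zero h) (vecMulVec_mul_vecMulVec_eq_zero h')

lemma vecMulVec_iff_not_vecMulVec {p : Matrix ι ι K} {x x' y y' : ι → K}
    (hp : IsIdempotentElem p) (hfp : f p) (hx : x' ⬝ᵥ x = 1) (hy : y' ⬝ᵥ y = 1)
    (hxy : x' ⬝ᵥ y = 0) (hyx : y' ⬝ᵥ x = 0)
    (hpxy : p * (vecMulVec x x' + vecMulVec y y') = p)
    (hxyp : (vecMulVec x x' + vecMulVec y y') * p = p) :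
    f (vecMulVec x x') ↔ ¬f (vecMulVec y y') :=
  hf.iff_not_of_le_add hp (isIdempotentElem_vecMulVec hx) (isIdempotentElem_vecMulVec hy)
    (vecMulVec_mul_vecMulVec_eq_zero hxy) (vecMulVec_mul_vecMulVec_eq_zero hyx) hpxy hxyp hfp

lemma vecMulVec_sub_of_not_vecMulVec {v w w' m : ι → K} (hv : w ⬝ᵥ v = 1) (hv' : w' ⬝ᵥ v = 1)
    (hfw : f (vecMulVec v w)) (hfw' : ¬f (vecMulVec v w')) (hm' : w' ⬝ᵥ m = 0)
    (hm : w ⬝ᵥ m = 1) : f (vecMulVec m (w - w')) := by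
  refine (hf.vecMulVec_iff_not_vecMulVec (isIdempotentElem_vecMulVec hv) hfw
    ?_ hv' ?_ hm' ?_ ?_).mpr hfw' <;>
    simp [mul_add, add_mul, vecMulVec_mul_vecMulVec, sub_dotProduct, hv, hv', hm, hm',
      ← vecMulVec_add]

lemma vecMulVec_of_separated {v w w' m₁ m₂ y : ι → K} (hv : w ⬝ᵥ v = 1) (hv' : w' ⬝ᵥ v = 1)
    (hfw : f (vecMulVec v w)) (hfw' : ¬f (vecMulVec v w')) (hm₁' : w' ⬝ᵥ m₁ = 0)
    (hm₁ : w ⬝ᵥ m₁ = 1) (hm₂' : w' ⬝ᵥ m₂ = 0) (hm₂ : w ⬝ᵥ m₂ = 1) (hyv : y ⬝ᵥ v = 0)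
    (hym₁ : y ⬝ᵥ m₁ = 1) (hym₂ : y ⬝ᵥ m₂ = 0) : f (vecMulVec m₁ y) := by
  by_contra hfy
  -- Otherwise `(m₁, w - w', y)` is a second triple like `(v, w, w')`, and it produces a true
  -- rank-one idempotent with image `m₂ - v`, orthogonal to `vecMulVec v w`.
  have hfz := hf.vecMulVec_sub_of_not_vecMulVec hv hv' hfw hfw' hm₁' hm₁
  have hfx := hf.vecMulVec_sub_of_not_vecMulVec (m := m₂ - v)
    (by simp [sub_dotProduct, hm₁, hm₁']) hym₁ hfz hfy (by simp [dotProduct_sub, hym₂, hyv])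
    (by simp [sub_dotProduct, dotProduct_sub, hm₂, hm₂', hv, hv'])
  exact hf.not_and_vecMulVec hv
    (by simp [sub_dotProduct, dotProduct_sub, hm₂, hm₂', hv, hv', hym₂, hyv])
    (by simp [dotProduct_sub, hm₂, hv]) (by simp [sub_dotProduct, hv, hv', hyv]) ⟨hfw, hfx⟩

lemma vecMulVec_congr_right (hn : 3 ≤ Fintype.card ι) {v w w' : ι → K} (hv : w ⬝ᵥ v = 1)
    (hv' : w' ⬝ᵥ v = 1) : f (vecMulVec v w) ↔ f (vecMulVec v w') := by
  suffices key : ∀ {w w' : ι → K}, w ⬝ᵥ v = 1 → w' ⬝ᵥ v = 1 → f (vecMulVec v w) →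
      f (vecMulVec v w') from ⟨key hv hv', key hv' hv⟩
  intro w w' hv hv' hfw
  by_contra hfw'
  obtain ⟨m₁, m₂, q, hm₁', hm₁, hm₂', hm₂, hqv, hqm₁, hqm₂⟩ :=
    exists_separated_pair_of_three_le_card hn hv hv' (by rintro rfl; exact hfw' hfw)
  have hyv : (w - w' - q) ⬝ᵥ v = 0 := by simp [sub_dotProduct, hv, hv', hqv]
  have hym₁ : (w - w' - q) ⬝ᵥ m₁ = 1 := by simp [sub_dotProduct, hm₁, hm₁', hqm₁]
  have hym₂ : (w - w' - q) ⬝ᵥ m₂ = 0 := by simp [sub_dotProduct, hm₂, hm₂', hqm₂]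
  exact hf.not_and_vecMulVec hym₁ hqm₂ hym₂ hqm₁
    ⟨hf.vecMulVec_of_separated hv hv' hfw hfw' hm₁' hm₁ hm₂' hm₂ hyv hym₁ hym₂,
      hf.vecMulVec_of_separated hv hv' hfw hfw' hm₂' hm₂ hm₁' hm₁ hqv hqm₂ hqm₁⟩

lemma not_vecMulVec_of_dual (hn : 3 ≤ Fintype.card ι) {v u a b : ι → K} (hav : a ⬝ᵥ v = 1)
    (hau : a ⬝ᵥ u = 0) (hbv : b ⬝ᵥ v = 0) (hbu : b ⬝ᵥ u = 1) : ¬f (vecMulVec v a) := by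
  intro hfa
  set P := vecMulVec v a + vecMulVec u b
  have hpick : ∀ {x x' y y' : ι → K}, x' ⬝ᵥ x = 1 → y' ⬝ᵥ y = 1 → x' ⬝ᵥ y = 0 → y' ⬝ᵥ x = 0 →
      vecMulVec x x' + vecMulVec y y' = P → (f (vecMulVec x x') ↔ ¬f (vecMulVec y y')) :=
    fun hx hy hxy hyx hP => hf.vecMulVec_iff_not_vecMulVec (isIdempotentElem_vecMulVec hav) hfa
      hx hy hxy hyx (by simp [hP, P, mul_add, vecMulVec_mul_vecMulVec, hav, hau])
      (by simp [hP, P, add_mul, vecMulVec_mul_vecMulVec, hav, hbv])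
  have h₁ := hpick hav hbu hau hbv rfl
  have h₂ := hpick (x := v) (x' := a - b) (y := v + u) (y' := b)
    (by simp [sub_dotProduct, hav, hbv]) (by simp [dotProduct_add, hbv, hbu])
    (by simp [sub_dotProduct, dotProduct_add, hav, hau, hbv, hbu]) hbv
    (by simp only [P, vecMulVec_sub, add_vecMulVec]; abel)
  have h₃ := hpick (x := v + u) (x' := a) (y := u) (y' := b - a)
    (by simp [dotProduct_add, hav, hau]) (by simp [sub_dotProduct, hau, hbu]) hau
    (by simp [sub_dotProduct, dotProduct_add, hav, hau, hbv, hbu])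
    (by simp only [P, vecMulVec_sub, add_vecMulVec]; abel)
  have c₁ := hf.vecMulVec_congr_right hn (w := a - b) (by simp [sub_dotProduct, hav, hbv]) hav
  have c₂ := hf.vecMulVec_congr_right hn (w := b - a) (by simp [sub_dotProduct, hau, hbu]) hbu
  have c₃ := hf.vecMulVec_congr_right hn (v := v + u) (w := a) (w' := b)
    (by simp [dotProduct_add, hav, hau]) (by simp [dotProduct_add, hbv, hbu])
  tauto

end IsIdempotentValuation

theorem Matrix.not_isIdempotentValuation {K : Type*} {ι : Type} [Field K] [Fintype ι]
    [DecidableEq ι] (hn : 3 ≤ Fintype.card ι) (f : Matrix ι ι K → Prop) :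
    ¬IsIdempotentValuation f := by
  intro hf
  obtain ⟨i, hi, -⟩ := hf.existsUnique _ completeOrthogonalIdempotents_single
  obtain ⟨j, hji⟩ := Fintype.exists_ne_of_one_lt_card (by omega) i
  rw [single_eq_single_vecMulVec_single] at hi
  exact hf.not_vecMulVec_of_dual hn (u := Pi.single j 1) (b := Pi.single j 1) (by simp)
    (by simp [hji]) (by simp [hji.symm]) (by simp) hi

lemma CompleteOrthogonalIdempotents.existsUnique_notMem {A ι : Type*} [CommRing A] [Fintype ι]
    {e : ι → A} (he : CompleteOrthogonalIdempotents e) (P : Ideal A) [hP : P.IsPrime] :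
    ∃! i, e i ∉ P := by
  obtain ⟨i, hi⟩ : ∃ i, e i ∉ P := by
    by_contra! h
    exact hP.ne_top (P.eq_top_of_isUnit_mem (he.complete ▸ P.sum_mem fun i _ => h i) isUnit_one)
  refine ⟨i, hi, fun j hj => by_contra fun hji => ?_⟩
  rcases hP.mem_or_mem (he.ortho hji ▸ P.zero_mem : e j * e i ∈ P) with h | h
  exacts [hj h, hi h]

namespace SpecExtension

variable {R : Type} [Ring R] (G : RingCatᵒᵖ ⥤ LocallyRingedSpace)
  (iso : (forget₂ CommRingCat RingCat).op ⋙ G ≅ Spec.toLocallyRingedSpace)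
  (x : G.obj (op (RingCat.of R)))

noncomputable def pointOf {A : Type} [CommRing A] (φ : A →+* R) : PrimeSpectrum A :=
  (iso.hom.app (op (CommRingCat.of A))).base ((G.map (RingCat.ofHom φ).op).base x)

lemma pointOf_comp {A B : Type} [CommRing A] [CommRing B] (φ : B →+* R) (ψ : A →+* B) :
    pointOf G iso x (φ.comp ψ) = PrimeSpectrum.comap ψ (pointOf G iso x φ) := by
  have := congr(($(iso.hom.naturality (CommRingCat.ofHom ψ).op)).base
    ((G.map (RingCat.ofHom φ).op).base x))
  simp only [Functor.comp_map, Functor.op_map, LocallyRingedSpace.comp_base, TopCat.comp_app]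
    at this
  rw [pointOf, pointOf, RingCat.ofHom_comp, op_comp, G.map_comp, LocallyRingedSpace.comp_base,
    TopCat.comp_app]
  exact this

def NonvanishingAt (a : R) : Prop :=
  Polynomial.X ∉ (pointOf G iso x (Polynomial.aeval (R := ℤ) a).toRingHom).asIdeal

lemma nonvanishingAt_map_iff {A : Type} [CommRing A] (φ : A →+* R) (α : A) :
    NonvanishingAt G iso x (φ α) ↔ α ∉ (pointOf G iso x φ).asIdeal := by
  have : (Polynomial.aeval (φ α)).toRingHom = φ.comp (Polynomial.aeval α).toRingHom :=
    RingHom.ext fun p => Polynomial.aeval_algHom_apply φ.toIntAlgHom α p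
  rw [NonvanishingAt, this, pointOf_comp, PrimeSpectrum.comap_asIdeal, Ideal.mem_comap]
  simp

open scoped IsMulCommutative in
lemma isIdempotentValuation_nonvanishingAt : IsIdempotentValuation (NonvanishingAt G iso x) := by
  refine ⟨fun {ι} _ e he => ?_⟩
  have hcomm : ∀ a ∈ Set.range e, ∀ b ∈ Set.range e, a * b = b * a := by
    rintro _ ⟨i, rfl⟩ _ ⟨j, rfl⟩
    obtain rfl | hij := eq_or_ne i j
    · rfl
    · rw [he.ortho hij, he.ortho hij.symm]
  have := Subring.isMulCommutative_closure hcomm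
  let S := Subring.closure (Set.range e)
  let ε : ι → S := fun i => ⟨e i, Subring.subset_closure ⟨i, rfl⟩⟩
  have hε : CompleteOrthogonalIdempotents ε :=
    (CompleteOrthogonalIdempotents.map_injective_iff S.subtype Subtype.val_injective).mp he
  have := hε.existsUnique_notMem (pointOf G iso x S.subtype).asIdeal
  simp only [← nonvanishingAt_map_iff G iso x S.subtype] at this
  exact this

end SpecExtension

/-- No-go theorem for locally-ringed-space-valued Zariski spectra: for `n ≥ 3`, any functor
`G : RingCatᵒᵖ ⥤ LocallyRingedSpace` that restricts (up to natural isomorphism) to the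
spectrum functor `Spec : CommRingCatᵒᵖ ⥤ LocallyRingedSpace` on commutative rings sends the
matrix ring `M_n(ℂ)` to a locally ringed space with empty underlying topological space. -/
theorem no_functorial_zariski_locallyRingedSpace (n : ℕ) (hn : 3 ≤ n)
    (G : RingCatᵒᵖ ⥤ LocallyRingedSpace)
    (iso : (forget₂ CommRingCat RingCat).op ⋙ G ≅ Spec.toLocallyRingedSpace) :
    IsEmpty (G.obj (Opposite.op (RingCat.of (Matrix (Fin n) (Fin n) ℂ)))).carrier :=
  ⟨fun x => Matrix.not_isIdempotentValuation (by simpa using hn) _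
    (SpecExtension.isIdempotentValuation_nonvanishingAt G iso x)⟩
end

section
/- Let J be a small category and F : J ⥤ Locale a diagram such that for every object j the frame underlying F(j) is compact and regular. If c is a limit cone over F in Locale, then the frame underlying the apex of c is compact and regular. -/
/-!
Compare a frame `L` with its frame of strongly regular ideals: down-closed, join-closed sets
containing `⊥` in which every member is well inside another member. They always form a compact
frame, and `I ↦ ⋁ I` is a frame homomorphism onto `L`, natural in `L`. When `L` is compact and
regular it is an isomorphism: compactness makes an ideal the set of elements well inside its
join, and regularity with interpolation makes that set an ideal for every element.

A limit of locales is a colimit of frames, and a natural transformation `T ⟶ 𝟭` that is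
invertible on a diagram is split epi at its colimit. A frame whose join map is split epi is
compact, because the section embeds it into a compact frame, and regular, because each element is
then the join of a strongly regular ideal.
-/

open CategoryTheory CategoryTheory.Limits

/-- `a` is *well inside* `b` in a frame: there is `c` with `c ⊓ a = ⊥` and `c ⊔ b = ⊤`. -/
def WellInside {L : Type*} [Order.Frame L] (a b : L) : Prop :=
  ∃ c, c ⊓ a = ⊥ ∧ c ⊔ b = ⊤

/-- A frame is *compact* when its top element is a compact element. -/
def IsCompactFrame (L : Type*) [Order.Frame L] : Prop :=
  IsCompactElement (⊤ : L)

/-- A frame is *regular* when every element is the join of the elements well inside it. -/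
def IsRegularFrame (L : Type*) [Order.Frame L] : Prop :=
  ∀ a : L, a = sSup {b | WellInside b a}

section WellInside

variable {L M : Type*} [Order.Frame L] [Order.Frame M] {a a' b b' : L}

theorem wellInside_iff : WellInside a b ↔ ∃ c, Disjoint a c ∧ Codisjoint c b := by
  simp only [WellInside, disjoint_iff, codisjoint_iff, inf_comm a]

theorem WellInside.le (h : WellInside a b) : a ≤ b := by
  obtain ⟨c, hac, hcb⟩ := wellInside_iff.1 h
  exact hac.le_of_codisjoint hcb

theorem WellInside.mono (h : WellInside a b) (ha : a' ≤ a) (hb : b ≤ b') : WellInside a' b' := by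
  obtain ⟨c, hac, hcb⟩ := wellInside_iff.1 h
  exact wellInside_iff.2 ⟨c, hac.mono_left ha, hcb.mono_right hb⟩

theorem wellInside_bot_left (b : L) : WellInside ⊥ b :=
  ⟨⊤, inf_bot_eq ⊤, top_sup_eq b⟩

theorem wellInside_top_right (a : L) : WellInside a ⊤ :=
  ⟨⊥, bot_inf_eq a, sup_top_eq ⊥⟩

theorem WellInside.sup (h : WellInside a b) (h' : WellInside a' b') :
    WellInside (a ⊔ a') (b ⊔ b') := by
  obtain ⟨c, hac, hcb⟩ := wellInside_iff.1 h
  obtain ⟨c', hac', hcb'⟩ := wellInside_iff.1 h'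
  refine wellInside_iff.2 ⟨c ⊓ c', ?_, ?_⟩
  · exact (hac.mono_right inf_le_left).sup_left (hac'.mono_right inf_le_right)
  · exact (hcb.mono_right le_sup_left).inf_left (hcb'.mono_right le_sup_right)

theorem WellInside.inf_right (h : WellInside a b) (h' : WellInside a b') :
    WellInside a (b ⊓ b') := by
  obtain ⟨c, hac, hcb⟩ := wellInside_iff.1 h
  obtain ⟨c', hac', hcb'⟩ := wellInside_iff.1 h'
  refine wellInside_iff.2 ⟨c ⊔ c', hac.sup_right hac', ?_⟩
  exact (hcb.mono_left le_sup_left).inf_right (hcb'.mono_left le_sup_right)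

theorem WellInside.map (f : FrameHom L M) (h : WellInside a b) : WellInside (f a) (f b) := by
  obtain ⟨c, hac, hcb⟩ := wellInside_iff.1 h
  exact wellInside_iff.2 ⟨f c, hac.map f, hcb.map f⟩

theorem wellInside_finset_sup_left {ι : Type*} {s : Finset ι} {f : ι → L}
    (h : ∀ i ∈ s, WellInside (f i) b) : WellInside (s.sup f) b :=
  Finset.sup_induction (p := (WellInside · b)) (wellInside_bot_left b)
    (fun _ hx _ hy => (hx.sup hy).mono le_rfl (sup_idem b).le) h

theorem exists_finset_wellInside_finset_sup {U : Set L} (s : Finset L)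
    (h : ∀ x ∈ s, ∃ y ∈ U, WellInside x y) :
    ∃ t : Finset L, ↑t ⊆ U ∧ WellInside (s.sup id) (t.sup id) := by
  classical
  induction s using Finset.induction_on with
  | empty => exact ⟨∅, by simp, wellInside_bot_left _⟩
  | insert x s _ ih =>
    obtain ⟨t, htU, ht⟩ := ih fun y hy => h y (Finset.mem_insert_of_mem hy)
    obtain ⟨y, hyU, hxy⟩ := h x (Finset.mem_insert_self x s)
    refine ⟨insert y t, Finset.coe_insert y t ▸ Set.insert_subset hyU htU, ?_⟩
    simpa only [Finset.sup_insert, id] using hxy.sup ht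

theorem WellInside.exists_finset_of_sSup (hc : IsCompactFrame L) {E : Set L}
    (h : WellInside a (sSup E)) : ∃ u : Finset L, ↑u ⊆ E ∧ WellInside a (u.sup id) := by
  classical
  obtain ⟨c, hca, hcE⟩ := h
  have hcover : (⊤ : L) ≤ sSup (insert c E) := by rw [sSup_insert, hcE]
  obtain ⟨t, htE, htop⟩ :=
    (CompleteLattice.isCompactElement_iff_exists_le_sSup_of_le_sSup (k := (⊤ : L))).1 hc _ hcover
  refine ⟨t.erase c, fun x hx => ?_, c, hca, top_le_iff.1 (htop.trans ?_)⟩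
  · obtain ⟨hxc, hxt⟩ := Finset.mem_erase.1 hx
    exact (htE hxt).resolve_left hxc
  · simpa only [Finset.sup_insert, id] using Finset.sup_mono (f := id) (t.insert_erase_subset c)

end WellInside

structure StronglyRegularIdeal (L : Type*) [Order.Frame L] where
  carrier : Set L
  bot_mem' : ⊥ ∈ carrier
  mem_of_le' {a b : L} : a ≤ b → b ∈ carrier → a ∈ carrier
  sup_mem' {a b : L} : a ∈ carrier → b ∈ carrier → a ⊔ b ∈ carrier
  exists_wellInside' {a : L} : a ∈ carrier → ∃ b ∈ carrier, WellInside a b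

namespace StronglyRegularIdeal

variable {L : Type*} [Order.Frame L] {I J : StronglyRegularIdeal L} {a : L}

instance : SetLike (StronglyRegularIdeal L) L where
  coe := carrier
  coe_injective I J h := by cases I; cases J; congr

instance : PartialOrder (StronglyRegularIdeal L) := .ofSetLike (StronglyRegularIdeal L) L

@[ext]
theorem ext (h : ∀ a, a ∈ I ↔ a ∈ J) : I = J :=
  SetLike.ext h

theorem mem_of_le (I : StronglyRegularIdeal L) {a b : L} (h : a ≤ b) (hb : b ∈ I) : a ∈ I :=
  I.mem_of_le' h hb

theorem exists_wellInside (I : StronglyRegularIdeal L) (ha : a ∈ I) : ∃ b ∈ I, WellInside a b :=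
  I.exists_wellInside' ha

theorem finset_sup_mem (I : StronglyRegularIdeal L) {ι : Type*} {s : Finset ι} {f : ι → L}
    (h : ∀ i ∈ s, f i ∈ I) : s.sup f ∈ I :=
  Finset.sup_induction (p := (· ∈ I)) I.bot_mem' (fun _ ha _ hb => I.sup_mem' ha hb) h

instance : SupSet (StronglyRegularIdeal L) where
  sSup S :=
    { carrier := {a | ∃ s : Finset L, (∀ x ∈ s, ∃ I ∈ S, x ∈ I) ∧ a ≤ s.sup id}
      bot_mem' := ⟨∅, by simp, bot_le⟩
      mem_of_le' := fun hab ⟨s, hs, hb⟩ => ⟨s, hs, hab.trans hb⟩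
      sup_mem' := by
        classical
        rintro a b ⟨s, hs, ha⟩ ⟨t, ht, hb⟩
        refine ⟨s ∪ t, fun x hx => (Finset.mem_union.1 hx).elim (hs x) (ht x), ?_⟩
        rw [Finset.sup_union]
        exact sup_le_sup ha hb
      exists_wellInside' := by
        rintro a ⟨s, hs, ha⟩
        have hwi : ∀ x ∈ s, ∃ y ∈ {y | ∃ I ∈ S, y ∈ I}, WellInside x y := fun x hx => by
          obtain ⟨I, hIS, hxI⟩ := hs x hx
          obtain ⟨y, hyI, hxy⟩ := I.exists_wellInside hxI
          exact ⟨y, ⟨I, hIS, hyI⟩, hxy⟩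
        obtain ⟨t, ht, hst⟩ := exists_finset_wellInside_finset_sup s hwi
        exact ⟨t.sup id, ⟨t, ht, le_rfl⟩, hst.mono ha le_rfl⟩ }

theorem isLUB_sSup (S : Set (StronglyRegularIdeal L)) : IsLUB S (sSup S) := by
  refine ⟨fun I hI a ha => ⟨{a}, by simpa using ⟨I, hI, ha⟩, by simp⟩, ?_⟩
  rintro J hJ a ⟨s, hs, ha⟩
  refine J.mem_of_le ha (J.finset_sup_mem fun x hx => ?_)
  obtain ⟨I, hIS, hxI⟩ := hs x hx
  exact hJ hIS hxI

instance : Min (StronglyRegularIdeal L) where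
  min I J :=
    { carrier := I ∩ J
      bot_mem' := ⟨I.bot_mem', J.bot_mem'⟩
      mem_of_le' := fun h hb => ⟨I.mem_of_le h hb.1, J.mem_of_le h hb.2⟩
      sup_mem' := fun ha hb => ⟨I.sup_mem' ha.1 hb.1, J.sup_mem' ha.2 hb.2⟩
      exists_wellInside' := by
        rintro a ⟨haI, haJ⟩
        obtain ⟨b, hbI, hab⟩ := I.exists_wellInside haI
        obtain ⟨b', hb'J, hab'⟩ := J.exists_wellInside haJ
        exact ⟨b ⊓ b', ⟨I.mem_of_le inf_le_left hbI, J.mem_of_le inf_le_right hb'J⟩,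
          hab.inf_right hab'⟩ }

instance : Top (StronglyRegularIdeal L) where
  top :=
    { carrier := Set.univ
      bot_mem' := trivial
      mem_of_le' := fun _ _ => trivial
      sup_mem' := fun _ _ => trivial
      exists_wellInside' := fun {a} _ => ⟨⊤, trivial, wellInside_top_right a⟩ }

theorem mem_top (a : L) : a ∈ (⊤ : StronglyRegularIdeal L) :=
  trivial

instance : CompleteLattice (StronglyRegularIdeal L) where
  __ := completeLatticeOfSup _ isLUB_sSup
  inf := (· ⊓ ·)
  inf_le_left _ _ _ h := h.1
  inf_le_right _ _ _ h := h.2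
  le_inf _ _ _ hI hJ _ h := ⟨hI h, hJ h⟩
  top := ⊤
  le_top _ a _ := mem_top a

instance : Order.Frame (StronglyRegularIdeal L) := by
  refine .ofMinimalAxioms ⟨fun I S a ha => ?_⟩
  obtain ⟨haI, s, hs, has⟩ := ha
  have hmem : ∀ x ∈ s, a ⊓ x ∈ ⨆ J ∈ S, I ⊓ J := fun x hx => by
    obtain ⟨J, hJS, hxJ⟩ := hs x hx
    exact le_iSup₂ (f := fun J _ => I ⊓ J) J hJS
      ⟨I.mem_of_le inf_le_left haI, J.mem_of_le inf_le_right hxJ⟩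
  refine mem_of_le _ ?_ (finset_sup_mem _ hmem)
  rw [← Finset.sup_inf_distrib_left]
  exact le_inf le_rfl has

variable {M N : Type*} [Order.Frame M] [Order.Frame N]

theorem isCompactFrame : IsCompactFrame (StronglyRegularIdeal L) := by
  classical
  refine (CompleteLattice.isCompactElement_iff_exists_le_sSup_of_le_sSup (k := ⊤)).2 fun S hS => ?_
  obtain ⟨s, hs, htop⟩ := hS (mem_top ⊤)
  choose I hIS hxI using hs
  let t := s.attach.image fun x => I x.1 x.2
  have htS : ↑t ⊆ S := by
    intro J hJ
    obtain ⟨x, -, rfl⟩ := Finset.mem_image.1 hJ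
    exact hIS x.1 x.2
  refine ⟨t, htS, fun a _ => mem_of_le _ le_top ?_⟩
  rw [Finset.sup_id_eq_sSup]
  exact ⟨s, fun x hx => ⟨I x hx, Finset.mem_image_of_mem _ (Finset.mem_attach s ⟨x, hx⟩),
    hxI x hx⟩, htop⟩

variable (L) in
def sSupHom : FrameHom (StronglyRegularIdeal L) L where
  toFun I := sSup I
  map_inf' I J := by
    refine le_antisymm (le_inf (sSup_le_sSup fun _ h => h.1) (sSup_le_sSup fun _ h => h.2)) ?_
    rw [sSup_inf_sSup]
    exact iSup₂_le fun p hp =>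
      le_sSup ⟨I.mem_of_le inf_le_left hp.1, J.mem_of_le inf_le_right hp.2⟩
  map_top' := top_le_iff.1 (le_sSup (mem_top ⊤))
  map_sSup' S := by
    refine le_antisymm (sSup_le ?_) (sSup_le ?_)
    · rintro a ⟨s, hs, ha⟩
      refine ha.trans (Finset.sup_le fun x hx => ?_)
      obtain ⟨I, hIS, hxI⟩ := hs x hx
      exact (le_sSup hxI).trans (le_sSup (Set.mem_image_of_mem _ hIS))
    · rintro _ ⟨I, hIS, rfl⟩
      exact sSup_le_sSup (le_sSup hIS : I ≤ sSup S)

theorem sSupHom_apply (I : StronglyRegularIdeal L) : sSupHom L I = sSup (I : Set L) :=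
  rfl

def map (f : FrameHom L M) : FrameHom (StronglyRegularIdeal L) (StronglyRegularIdeal M) where
  toFun I :=
    { carrier := {b | ∃ a ∈ I, b ≤ f a}
      bot_mem' := ⟨⊥, I.bot_mem', bot_le⟩
      mem_of_le' := fun hbb' ⟨a, haI, hb'a⟩ => ⟨a, haI, hbb'.trans hb'a⟩
      sup_mem' := fun ⟨a, haI, hba⟩ ⟨a', ha'I, hba'⟩ =>
        ⟨a ⊔ a', I.sup_mem' haI ha'I, (sup_le_sup hba hba').trans_eq (map_sup f a a').symm⟩
      exists_wellInside' := fun ⟨a, haI, hba⟩ => by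
        obtain ⟨a', ha'I, haa'⟩ := I.exists_wellInside haI
        exact ⟨f a', ⟨a', ha'I, le_rfl⟩, (haa'.map f).mono hba le_rfl⟩ }
  map_inf' I J := by
    ext b
    refine ⟨fun ⟨a, ⟨haI, haJ⟩, hba⟩ => ⟨⟨a, haI, hba⟩, ⟨a, haJ, hba⟩⟩, ?_⟩
    rintro ⟨⟨a, haI, hba⟩, ⟨a', ha'J, hba'⟩⟩
    exact ⟨a ⊓ a', ⟨I.mem_of_le inf_le_left haI, J.mem_of_le inf_le_right ha'J⟩,
      (le_inf hba hba').trans_eq (map_inf f a a').symm⟩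
  map_top' := by
    ext b
    exact ⟨fun _ => mem_top b, fun _ => ⟨⊤, mem_top ⊤, le_top.trans_eq (map_top f).symm⟩⟩
  map_sSup' S := by
    classical
    refine le_antisymm ?_ (sSup_le ?_)
    · rintro b ⟨a, ⟨s, hs, has⟩, hba⟩
      refine ⟨s.image f, fun y hy => ?_, ?_⟩
      · obtain ⟨x, hxs, rfl⟩ := Finset.mem_image.1 hy
        obtain ⟨I, hIS, hxI⟩ := hs x hxs
        exact ⟨_, Set.mem_image_of_mem _ hIS, ⟨x, hxI, le_rfl⟩⟩
      · rw [Finset.sup_image, Function.id_comp]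
        exact hba.trans ((OrderHomClass.mono f has).trans_eq (map_finset_sup f s id))
    · rintro _ ⟨I, hIS, rfl⟩ b ⟨a, haI, hba⟩
      exact ⟨a, (le_sSup hIS : I ≤ sSup S) haI, hba⟩

theorem map_id_apply (I : StronglyRegularIdeal L) : map (FrameHom.id L) I = I := by
  ext b
  exact ⟨fun ⟨_, ha, hba⟩ => I.mem_of_le hba ha, fun h => ⟨b, h, le_rfl⟩⟩

theorem map_comp_apply (g : FrameHom M N) (f : FrameHom L M) (I : StronglyRegularIdeal L) :
    map (g.comp f) I = map g (map f I) := by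
  ext c
  refine ⟨fun ⟨a, haI, hca⟩ => ⟨f a, ⟨a, haI, le_rfl⟩, hca⟩, ?_⟩
  rintro ⟨b, ⟨a, haI, hba⟩, hcb⟩
  exact ⟨a, haI, hcb.trans (OrderHomClass.mono g hba)⟩

theorem sSupHom_map (f : FrameHom L M) (I : StronglyRegularIdeal L) :
    sSupHom M (map f I) = f (sSupHom L I) := by
  rw [sSupHom_apply, sSupHom_apply, map_sSup]
  refine le_antisymm (sSup_le fun b ⟨a, haI, hba⟩ => hba.trans (le_sSup ⟨a, haI, rfl⟩)) ?_
  exact sSup_le fun _ ⟨a, haI, hb⟩ => le_sSup ⟨a, haI, hb.ge⟩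

end StronglyRegularIdeal

section CompactRegular

variable {L M : Type*} [Order.Frame L] [Order.Frame M]

theorem IsCompactFrame.of_injective {f : FrameHom L M} (hf : Function.Injective f)
    (hM : IsCompactFrame M) : IsCompactFrame L := by
  classical
  rw [IsCompactFrame, CompleteLattice.isCompactElement_iff_exists_le_sSup_of_le_sSup] at hM ⊢
  intro S hS
  have hfS : ⊤ ≤ sSup (f '' S) := by rw [← map_sSup, top_le_iff.1 hS, map_top]
  obtain ⟨t, htS, htop⟩ := hM _ hfS
  obtain ⟨u, huS, rfl⟩ := Finset.subset_set_image_iff.1 htS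
  refine ⟨u, huS, (hf ?_).ge⟩
  rw [map_finset_sup, map_top, ← top_le_iff]
  simpa [Finset.sup_image, Function.comp_def] using htop

theorem WellInside.exists_between (hc : IsCompactFrame L) (hr : IsRegularFrame L) {a b : L}
    (h : WellInside a b) : ∃ c, WellInside a c ∧ WellInside c b := by
  rw [hr b] at h
  obtain ⟨u, hu, hau⟩ := h.exists_finset_of_sSup hc
  exact ⟨u.sup id, hau, wellInside_finset_sup_left hu⟩

namespace StronglyRegularIdeal

theorem mem_iff_wellInside_sSup (hc : IsCompactFrame L) {I : StronglyRegularIdeal L} {a : L} :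
    a ∈ I ↔ WellInside a (sSup I) := by
  refine ⟨fun ha => ?_, fun ha => ?_⟩
  · obtain ⟨b, hbI, hab⟩ := I.exists_wellInside ha
    exact hab.mono le_rfl (le_sSup hbI)
  · obtain ⟨u, hu, hau⟩ := ha.exists_finset_of_sSup hc
    exact I.mem_of_le hau.le (I.finset_sup_mem hu)

theorem sSupHom_le_sSupHom_iff (hc : IsCompactFrame L) {I J : StronglyRegularIdeal L} :
    sSupHom L I ≤ sSupHom L J ↔ I ≤ J := by
  refine ⟨fun h a ha => ?_, fun h => sSup_le_sSup h⟩
  exact (mem_iff_wellInside_sSup hc).2 (((mem_iff_wellInside_sSup hc).1 ha).mono le_rfl h)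

theorem sSupHom_surjective (hc : IsCompactFrame L) (hr : IsRegularFrame L) :
    Function.Surjective (sSupHom L) := fun a =>
  ⟨{ carrier := {b | WellInside b a}
     bot_mem' := wellInside_bot_left a
     mem_of_le' := fun hbb' hb' => hb'.mono hbb' le_rfl
     sup_mem' := fun hb hb' => (hb.sup hb').mono le_rfl (sup_idem a).le
     exists_wellInside' := fun hb => (hb.exists_between hc hr).imp fun _ h => ⟨h.2, h.1⟩ },
    (hr a).symm⟩

noncomputable def sSupOrderIso (hc : IsCompactFrame L) (hr : IsRegularFrame L) :
    StronglyRegularIdeal L ≃o L :=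
  .ofSurjective (.ofMapLEIff (sSupHom L) fun _ _ => sSupHom_le_sSupHom_iff hc)
    (sSupHom_surjective hc hr)

theorem isRegularFrame_of_surjective (h : Function.Surjective (sSupHom L)) :
    IsRegularFrame L := by
  intro a
  obtain ⟨I, rfl⟩ := h a
  refine le_antisymm (sSup_le fun b hb => ?_) (sSup_le fun b hb => hb.le)
  obtain ⟨b', hb'I, hbb'⟩ := I.exists_wellInside hb
  exact le_sSup (hbb'.mono le_rfl (le_sSup hb'I))

end StronglyRegularIdeal

end CompactRegular

theorem isSplitEpi_app_of_isColimit {C J : Type*} [Category C] [Category J] {T : C ⥤ C}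
    (ε : T ⟶ 𝟭 C) {G : J ⥤ C} {c : Cocone G} (hc : IsColimit c)
    [∀ j, IsIso (ε.app (G.obj j))] : IsSplitEpi (ε.app c.pt) := by
  let d : Cocone G :=
    { pt := T.obj c.pt
      ι :=
        { app j := inv (ε.app (G.obj j)) ≫ T.map (c.ι.app j)
          naturality j k f := by
            have hinv : G.map f ≫ inv (ε.app (G.obj k)) =
                inv (ε.app (G.obj j)) ≫ T.map (G.map f) := by
              rw [IsIso.eq_inv_comp, ← Category.assoc, IsIso.comp_inv_eq]
              exact (ε.naturality (G.map f)).symm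
            simp only [Functor.const_obj_obj, Functor.const_obj_map, Category.comp_id]
            rw [← Category.assoc, hinv, Category.assoc, ← T.map_comp, c.w f] } }
  refine ⟨⟨hc.desc d, hc.hom_ext fun j => ?_⟩⟩
  simp [d]

namespace StronglyRegularIdeal

def functor : Frm ⥤ Frm where
  obj X := .of (StronglyRegularIdeal X)
  map f := Frm.ofHom (map f.hom)
  map_id _ := Frm.ext map_id_apply
  map_comp f g := Frm.ext (map_comp_apply g.hom f.hom)

def sSupNatTrans : functor ⟶ 𝟭 Frm where
  app X := Frm.ofHom (sSupHom X)
  naturality _ _ f := Frm.ext (sSupHom_map f.hom)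

theorem isIso_sSupNatTrans_app {X : Frm} (hc : IsCompactFrame X) (hr : IsRegularFrame X) :
    IsIso (sSupNatTrans.app X) :=
  (Frm.Iso.mk (α := functor.obj X) (β := X) (sSupOrderIso hc hr)).isIso_hom

theorem isCompactFrame_and_isRegularFrame_of_isSplitEpi {X : Frm}
    (h : IsSplitEpi (sSupNatTrans.app X)) : IsCompactFrame X ∧ IsRegularFrame X := by
  have hinv : Function.LeftInverse (sSupHom X) (section_ (sSupNatTrans.app X)) := fun x =>
    congr($(IsSplitEpi.id (sSupNatTrans.app X)) x)
  exact ⟨.of_injective hinv.injective isCompactFrame, isRegularFrame_of_surjective hinv.surjective⟩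

end StronglyRegularIdeal

/-- Compact regular locales are closed under limits in the category of locales: the apex of
any limit cone over a diagram of compact regular locales is again compact and regular. -/
theorem compactRegular_closed_under_limits {J : Type*} [SmallCategory J]
    (F : J ⥤ Locale)
    (hcomp : ∀ j : J, IsCompactFrame ↥(F.obj j).unop)
    (hreg : ∀ j : J, IsRegularFrame ↥(F.obj j).unop)
    (c : Cone F) (hc : IsLimit c) :
    IsCompactFrame ↥c.pt.unop ∧ IsRegularFrame ↥c.pt.unop := by
  have (j : Jᵒᵖ) : IsIso (StronglyRegularIdeal.sSupNatTrans.app (F.leftOp.obj j)) :=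
    StronglyRegularIdeal.isIso_sSupNatTrans_app (hcomp j.unop) (hreg j.unop)
  exact StronglyRegularIdeal.isCompactFrame_and_isRegularFrame_of_isSplitEpi
    (isSplitEpi_app_of_isColimit _ (isColimitCoconeLeftOpOfCone F hc))
end
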